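/- arXiv:2402.00686 — 12 statements merged into one kernel-verified Lean document; each statement's English description precedes it below -/
import Mathlib

section
/- For every y ∈ Y and every m₀ ∈ X, the posterior mean m := C₀^{1/2}(C₀^{1/2}T*TC₀^{1/2} + σ²Id)⁻¹C₀^{1/2}T*y + [Id − C₀^{1/2}(C₀^{1/2}T*TC₀^{1/2} + σ²Id)⁻¹C₀^{1/2}T*T]m₀ satisfies ⟨m, φ⟩_X = ⟨y, Φ_MAP⟩_Y − ⟨m₀, T*Φ_MAP − φ⟩_X. -/
/-! The operator `S B S` is self-adjoint, because `B` is the inverse of the self-adjoint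
operator `S T* T S + σ² Id`. Both terms of the posterior mean paired with `φ` are then computed
by moving `S B S` and `T` to the other side of the inner product. -/

open scoped RealInnerProductSpace

open ContinuousLinearMap

/-- `star b` is a left inverse of `a`, hence equal to the right inverse `b`. -/
theorem IsSelfAdjoint.isSelfAdjoint_of_mul_eq_one {R : Type*} [Monoid R] [StarMul R] {a b : R}
    (ha : IsSelfAdjoint a) (hab : a * b = 1) : IsSelfAdjoint b := by
  have hba : star b * a = 1 := by
    rw [← ha.star_eq, ← star_mul, hab, star_one]
  calc star b = star b * (a * b) := by rw [hab, mul_one]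
    _ = b := by rw [← mul_assoc, hba, one_mul]

section Adjoint

variable {𝕜 X Y : Type*} [RCLike 𝕜]
  [NormedAddCommGroup X] [InnerProductSpace 𝕜 X] [CompleteSpace X]
  [NormedAddCommGroup Y] [InnerProductSpace 𝕜 Y] [CompleteSpace Y]

theorem IsSelfAdjoint.conj_adjoint_comp_self_add_smul_one {S : X →L[𝕜] X} (hS : IsSelfAdjoint S)
    (T : X →L[𝕜] Y) {c : 𝕜} (hc : IsSelfAdjoint c) :
    IsSelfAdjoint (S ∘L adjoint T ∘L T ∘L S + c • 1) := by
  refine IsSelfAdjoint.add ?_ (hc.smul (IsSelfAdjoint.one _))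
  have h := (IsSelfAdjoint.one (Y →L[𝕜] Y)).adjoint_conj (T ∘L S)
  rwa [adjoint_comp, hS.adjoint_eq, one_def, id_comp, comp_assoc] at h

theorem IsSelfAdjoint.inner_apply_adjoint_apply_left {K : X →L[𝕜] X} (hK : IsSelfAdjoint K)
    (T : X →L[𝕜] Y) (y : Y) (x : X) :
    inner 𝕜 (K (adjoint T y)) x = inner 𝕜 y (T (K x)) :=
  (hK.isSymmetric _ _).trans (adjoint_inner_left T _ _)

end Adjoint

theorem posterior_mean_feature_eval_general
    {X Y : Type*}
    [NormedAddCommGroup X] [InnerProductSpace ℝ X] [CompleteSpace X]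
    [NormedAddCommGroup Y] [InnerProductSpace ℝ Y] [CompleteSpace Y]
    (T : X →L[ℝ] Y) (σ : ℝ)
    -- `S` is the positive square root `C₀^{1/2}` of `C₀`
    (S : X →L[ℝ] X) (hSsa : IsSelfAdjoint S)
    -- `B` is the inverse of `C₀^{1/2} T* T C₀^{1/2} + σ² Id`
    (B : X →L[ℝ] X)
    (hB' : (S ∘L (ContinuousLinearMap.adjoint T) ∘L T ∘L S + σ ^ 2 • 1) ∘L B = 1)
    (φ : X) (y : Y) (m₀ : X) :
    ⟪S (B (S ((ContinuousLinearMap.adjoint T) y)))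
        + (m₀ - S (B (S ((ContinuousLinearMap.adjoint T) (T m₀))))), φ⟫
      = ⟪y, T (S (B (S φ)))⟫
        - ⟪m₀, (ContinuousLinearMap.adjoint T) (T (S (B (S φ)))) - φ⟫ := by
  have hB : IsSelfAdjoint B :=
    (hSsa.conj_adjoint_comp_self_add_smul_one T (IsSelfAdjoint.all _)).isSelfAdjoint_of_mul_eq_one
      hB'
  have hK : IsSelfAdjoint (S ∘L B ∘L S) := by
    simpa only [hSsa.adjoint_eq] using hB.conj_adjoint S
  have hy : ⟪S (B (S (adjoint T y))), φ⟫ = ⟪y, T (S (B (S φ)))⟫ :=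
    hK.inner_apply_adjoint_apply_left T y φ
  have hm₀ : ⟪S (B (S (adjoint T (T m₀)))), φ⟫ = ⟪m₀, adjoint T (T (S (B (S φ))))⟫ :=
    (hK.inner_apply_adjoint_apply_left T (T m₀) φ).trans (adjoint_inner_right T m₀ _).symm
  rw [inner_add_left, inner_sub_left, inner_sub_right, hy, hm₀]
  ring

/-- For every `y ∈ Y` and `m₀ ∈ X`, the posterior mean
`m = C₀^{1/2}(C₀^{1/2}T*TC₀^{1/2} + σ²Id)⁻¹C₀^{1/2}T*y
    + [Id − C₀^{1/2}(C₀^{1/2}T*TC₀^{1/2} + σ²Id)⁻¹C₀^{1/2}T*T] m₀`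
satisfies `⟨m, φ⟩ = ⟨y, Φ_MAP⟩ − ⟨m₀, T*Φ_MAP − φ⟩`, where
`Φ_MAP = T C₀^{1/2} (C₀^{1/2}T*TC₀^{1/2} + σ²Id)⁻¹ C₀^{1/2} φ`.
Here `S` denotes the positive square root `C₀^{1/2}` of `C₀` and `B` denotes the inverse
`(C₀^{1/2}T*TC₀^{1/2} + σ²Id)⁻¹`, which exists since
`C₀^{1/2}T*TC₀^{1/2} + σ²Id ≥ σ²Id`. -/
theorem posterior_mean_feature_eval
    {X Y : Type*}
    [NormedAddCommGroup X] [InnerProductSpace ℝ X] [CompleteSpace X]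
    [TopologicalSpace.SeparableSpace X]
    [NormedAddCommGroup Y] [InnerProductSpace ℝ Y] [CompleteSpace Y]
    [TopologicalSpace.SeparableSpace Y]
    (T : X →L[ℝ] Y) (σ : ℝ) (hσ : 0 < σ)
    (C₀ : X →L[ℝ] X) (hC₀sa : IsSelfAdjoint C₀) (hC₀pos : ∀ x : X, 0 ≤ ⟪C₀ x, x⟫)
    -- `S` is the positive square root `C₀^{1/2}` of `C₀`
    (S : X →L[ℝ] X) (hSsa : IsSelfAdjoint S) (hSpos : ∀ x : X, 0 ≤ ⟪S x, x⟫)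
    (hS : S ∘L S = C₀)
    -- `B` is the inverse of `C₀^{1/2} T* T C₀^{1/2} + σ² Id`
    (B : X →L[ℝ] X)
    (hB : B ∘L (S ∘L (ContinuousLinearMap.adjoint T) ∘L T ∘L S + σ ^ 2 • 1) = 1)
    (hB' : (S ∘L (ContinuousLinearMap.adjoint T) ∘L T ∘L S + σ ^ 2 • 1) ∘L B = 1)
    (φ : X) (y : Y) (m₀ : X) :
    ⟪S (B (S ((ContinuousLinearMap.adjoint T) y)))
        + (m₀ - S (B (S ((ContinuousLinearMap.adjoint T) (T m₀))))), φ⟫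
      = ⟪y, T (S (B (S φ)))⟫
        - ⟪m₀, (ContinuousLinearMap.adjoint T) (T (S (B (S φ)))) - φ⟫ :=
  posterior_mean_feature_eval_general T σ S hSsa B hB' φ y m₀
end

section
/- Assume T is injective, C₀ commutes with T*T, and φ ≠ 0. If φ is not an eigenvector of the operator C₀^{1/2}T*TC₀^{1/2}, then the linear functional u ↦ ⟨u, T*Φ_MAP⟩_X is unbounded above on the half-space {u ∈ X : ⟨φ, u⟩_X ≤ 0}; that is, for every M ∈ ℝ there exists u ∈ X with ⟨φ, u⟩ ≤ 0 and ⟨u, T*Φ_MAP⟩ > M. -/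
/-!
The positive square root `S` of `C₀` commutes with `T*T`. After scaling to `‖S‖ ≤ 1`, the power
series `√(1 - a) = ∑ₖ (-1)ᵏ (1/2 choose k) aᵏ` at `a = 1 - S²` converges absolutely in operator
norm (the coefficients after the first are nonpositive, with partial sums at least `-1`), squares
to `S²` by Chu–Vandermonde, is positive, and commutes with everything commuting with `S²`; by
uniqueness of positive square roots it equals `S`.

Write `A = S T*T S` and `ψ = (A + σ²)⁻¹ S φ`. If `T*T S ψ = l φ`, then `A ψ = l S φ`, so
`σ² ψ = (1 - l) S φ`, and applying `T*T S` (which commutes past `S`) gives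
`σ² l φ = (1 - l) A φ`: either `φ` is an eigenvector of `A`, or `l = 1` and `φ = 0`. Hence
`w = T*Φ_MAP` has a nonzero component `v` orthogonal to `φ`, and `u = t v` keeps `⟪φ, u⟫ = 0`
while `⟪u, w⟫ = t ‖v‖²` is unbounded.
-/

open Finset
open scoped RealInnerProductSpace

/-- The Taylor coefficients of `√(1 - t)`. -/
noncomputable def sqrtOneSubCoeff (k : ℕ) : ℝ := (-1) ^ k * Ring.choose (1 / 2 : ℝ) k

@[simp] lemma sqrtOneSubCoeff_zero : sqrtOneSubCoeff 0 = 1 := by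
  simp [sqrtOneSubCoeff]

lemma sqrtOneSubCoeff_succ (k : ℕ) :
    sqrtOneSubCoeff (k + 1) = sqrtOneSubCoeff k * ((k - 1 / 2) / (k + 1)) := by
  have h := Ring.choose_smul_choose (1 / 2 : ℝ) (Nat.le_add_right k 1)
  rw [Nat.choose_succ_self_right, Nat.add_sub_cancel_left, Ring.choose_one_right,
    nsmul_eq_mul] at h
  push_cast at h
  have hk : (k : ℝ) + 1 ≠ 0 := by positivity
  rw [sqrtOneSubCoeff, sqrtOneSubCoeff, ← mul_div_assoc, eq_div_iff hk]
  linear_combination (-1) ^ (k + 1) * h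

lemma sqrtOneSubCoeff_nonpos {k : ℕ} (hk : k ≠ 0) : sqrtOneSubCoeff k ≤ 0 := by
  induction k with
  | zero => exact absurd rfl hk
  | succ k ih =>
    rw [sqrtOneSubCoeff_succ]
    rcases Nat.eq_zero_or_pos k with rfl | hk
    · norm_num
    · have : (1 : ℝ) ≤ k := by exact_mod_cast hk
      exact mul_nonpos_of_nonpos_of_nonneg (ih hk.ne') (div_nonneg (by linarith) (by positivity))

lemma sum_range_sqrtOneSubCoeff (n : ℕ) :
    ∑ k ∈ range (n + 1), sqrtOneSubCoeff k = -2 * (n + 1) * sqrtOneSubCoeff (n + 1) := by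
  induction n with
  | zero => norm_num [sqrtOneSubCoeff_succ]
  | succ n ih =>
    rw [sum_range_succ, ih, sqrtOneSubCoeff_succ (n + 1)]
    push_cast
    field_simp
    ring

lemma sum_range_sqrtOneSubCoeff_nonneg (n : ℕ) : 0 ≤ ∑ k ∈ range n, sqrtOneSubCoeff k := by
  rcases n with _ | n
  · simp
  · rw [sum_range_sqrtOneSubCoeff]
    have := sqrtOneSubCoeff_nonpos n.succ_ne_zero
    nlinarith

lemma summable_abs_sqrtOneSubCoeff : Summable fun k ↦ |sqrtOneSubCoeff k| := by
  refine summable_of_sum_range_le (c := 2) (fun _ ↦ abs_nonneg _) fun n ↦ ?_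
  rcases n with _ | n
  · simp
  · have habs : ∀ k ∈ range (n + 1),
        |sqrtOneSubCoeff k| = 2 * (if k = 0 then 1 else 0) - sqrtOneSubCoeff k := by
      intro k _
      rcases eq_or_ne k 0 with rfl | hk
      · norm_num
      · simp [hk, abs_of_nonpos (sqrtOneSubCoeff_nonpos hk)]
    rw [sum_congr rfl habs, sum_sub_distrib, ← mul_sum, sum_ite_eq' (range (n+1)) 0]
    simp only [mem_range, Nat.zero_lt_succ, if_true, mul_one]
    linarith [sum_range_sqrtOneSubCoeff_nonneg (n + 1)]

lemma sum_antidiagonal_sqrtOneSubCoeff (n : ℕ) :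
    ∑ ij ∈ antidiagonal n, sqrtOneSubCoeff ij.1 * sqrtOneSubCoeff ij.2
      = (-1) ^ n * Nat.choose 1 n := by
  have h := Ring.add_choose_eq n (Commute.all (1 / 2 : ℝ) (1 / 2))
  have h1 : Ring.choose (1 : ℝ) n = Nat.choose 1 n := by
    simpa using Ring.choose_natCast (R := ℝ) 1 n
  rw [add_halves, h1] at h
  rw [h, mul_sum]
  refine sum_congr rfl fun ij hij ↦ ?_
  rw [HasAntidiagonal.mem_antidiagonal] at hij
  rw [sqrtOneSubCoeff, sqrtOneSubCoeff, ← hij, pow_add]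
  ring

section BanachAlgebra

variable {A : Type*} [NormedRing A] [NormedAlgebra ℝ A]

noncomputable def sqrtOneSub (a : A) : A := ∑' k, sqrtOneSubCoeff k • a ^ k

lemma summable_norm_sqrtOneSubCoeff_smul_pow {a : A} (ha : ∀ k, ‖a ^ k‖ ≤ 1) :
    Summable fun k ↦ ‖sqrtOneSubCoeff k • a ^ k‖ := by
  refine summable_abs_sqrtOneSubCoeff.of_nonneg_of_le (fun _ ↦ norm_nonneg _) fun k ↦ ?_
  rw [norm_smul, Real.norm_eq_abs]
  exact mul_le_of_le_one_right (abs_nonneg _) (ha k)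

lemma sqrtOneSub_mul_self [CompleteSpace A] {a : A} (ha : ∀ k, ‖a ^ k‖ ≤ 1) :
    sqrtOneSub a * sqrtOneSub a = 1 - a := by
  have hs := summable_norm_sqrtOneSubCoeff_smul_pow ha
  have hconv : ∀ n, ∑ ij ∈ antidiagonal n,
      (sqrtOneSubCoeff ij.1 • a ^ ij.1) * (sqrtOneSubCoeff ij.2 • a ^ ij.2)
        = ((-1) ^ n * Nat.choose 1 n : ℝ) • a ^ n := by
    intro n
    rw [← sum_antidiagonal_sqrtOneSubCoeff, sum_smul]
    refine sum_congr rfl fun ij hij ↦ ?_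
    rw [smul_mul_smul_comm, ← pow_add, HasAntidiagonal.mem_antidiagonal.mp hij]
  rw [sqrtOneSub, tsum_mul_tsum_eq_tsum_sum_antidiagonal_of_summable_norm hs hs]
  simp_rw [hconv]
  rw [tsum_eq_sum (s := range 2) fun n hn ↦ by
    rw [Nat.choose_eq_zero_of_lt (by simpa using hn)]; simp]
  simp [sum_range_succ, sub_eq_add_neg]

lemma Commute.sqrtOneSub {a b : A} (h : Commute b a) : Commute b (sqrtOneSub a) :=
  Commute.tsum_right _ fun k ↦ (h.pow_right k).smul_right _

lemma IsSelfAdjoint.sqrtOneSub [StarRing A] [StarModule ℝ A] [ContinuousStar A] {a : A}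
    (ha : IsSelfAdjoint a) : IsSelfAdjoint (sqrtOneSub a) := by
  rw [IsSelfAdjoint, _root_.sqrtOneSub, tsum_star]
  exact congr_arg tsum (funext fun k ↦ by rw [star_smul, star_trivial, (ha.pow k).star_eq])

end BanachAlgebra

namespace ContinuousLinearMap

variable {E : Type*} [NormedAddCommGroup E] [InnerProductSpace ℝ E]

lemma inner_apply_self_le_of_norm_le_one {a : E →L[ℝ] E} (ha : ‖a‖ ≤ 1) (x : E) :
    ⟪a x, x⟫ ≤ ‖x‖ ^ 2 :=
  calc ⟪a x, x⟫ ≤ ‖a x‖ * ‖x‖ := real_inner_le_norm _ _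
    _ ≤ ‖x‖ * ‖x‖ := by gcongr; exact a.le_of_opNorm_le ha x |>.trans_eq (one_mul _)
    _ = ‖x‖ ^ 2 := (sq _).symm

lemma norm_pow_le_one_of_norm_le_one {a : E →L[ℝ] E} (ha : ‖a‖ ≤ 1) (k : ℕ) : ‖a ^ k‖ ≤ 1 := by
  rcases Nat.eq_zero_or_pos k with rfl | hk
  · exact norm_id_le
  · exact (norm_pow_le' a hk).trans (pow_le_one₀ (norm_nonneg a) ha)

lemma norm_one_sub_mul_self_le_one {S : E →L[ℝ] E} (hS : S.IsSymmetric) (h : ‖S‖ ≤ 1) :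
    ‖1 - S * S‖ ≤ 1 := by
  refine opNorm_le_bound _ zero_le_one fun x ↦ ?_
  have hSSx : ‖S (S x)‖ ≤ ‖S x‖ := S.le_of_opNorm_le h (S x) |>.trans_eq (one_mul _)
  have hsq : ‖x - S (S x)‖ ^ 2 ≤ ‖x‖ ^ 2 := by
    have hinner : ⟪x, S (S x)⟫ = ‖S x‖ ^ 2 := by
      rw [← real_inner_self_eq_norm_sq]; exact (hS x (S x)).symm
    rw [norm_sub_sq_real, hinner]
    nlinarith [norm_nonneg (S (S x))]
  simpa using (pow_le_pow_iff_left₀ (norm_nonneg _) (norm_nonneg _) two_ne_zero).mp hsq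

lemma inner_sqrtOneSub_apply_self_nonneg [CompleteSpace E] {a : E →L[ℝ] E} (ha : ‖a‖ ≤ 1)
    (x : E) : 0 ≤ ⟪sqrtOneSub a x, x⟫ := by
  have hsum : HasSum (fun k ↦ sqrtOneSubCoeff k * ⟪(a ^ k) x, x⟫) ⟪sqrtOneSub a x, x⟫ := by
    have := (summable_norm_sqrtOneSubCoeff_smul_pow
      (norm_pow_le_one_of_norm_le_one ha)).of_norm.hasSum.mapL ((innerSL ℝ x).comp (apply ℝ E x))
    simpa [sqrtOneSub, real_inner_comm x, real_inner_smul_left] using this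
  refine ge_of_tendsto' hsum.tendsto_sum_nat fun n ↦ ?_
  calc 0 ≤ (∑ k ∈ range n, sqrtOneSubCoeff k) * ‖x‖ ^ 2 :=
        mul_nonneg (sum_range_sqrtOneSubCoeff_nonneg n) (sq_nonneg _)
    _ ≤ ∑ k ∈ range n, sqrtOneSubCoeff k * ⟪(a ^ k) x, x⟫ := by
      rw [sum_mul]
      refine sum_le_sum fun k _ ↦ ?_
      rcases eq_or_ne k 0 with rfl | hk
      · simp
      · exact mul_le_mul_of_nonpos_left
          (inner_apply_self_le_of_norm_le_one (norm_pow_le_one_of_norm_le_one ha k) x)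
          (sqrtOneSubCoeff_nonpos hk)

lemma isPositive_sqrtOneSub [CompleteSpace E] {a : E →L[ℝ] E} (ha : IsSelfAdjoint a)
    (ha₁ : ‖a‖ ≤ 1) : (sqrtOneSub a).IsPositive :=
  (isPositive_iff' _).2 ⟨ha.sqrtOneSub, inner_sqrtOneSub_apply_self_nonneg ha₁⟩

lemma IsPositive.apply_eq_zero_of_inner_apply_self_eq_zero {T : E →L[ℝ] E} (hT : T.IsPositive)
    {x : E} (hx : ⟪T x, x⟫ = 0) : T x = 0 := by
  have hquad : ∀ t : ℝ, 0 ≤ ⟪T (T x), T x⟫ * (t * t) + 2 * ‖T x‖ ^ 2 * t + 0 := by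
    intro t
    have := hT.inner_nonneg_left (x + t • T x)
    rw [map_add, map_smul, inner_add_left, inner_add_right, inner_add_right, hx,
      real_inner_smul_left, real_inner_smul_right, real_inner_smul_left, real_inner_smul_right,
      hT.inner_left_eq_inner_right (T x) x, real_inner_self_eq_norm_sq] at this
    linarith
  have hdisc := discrim_le_zero hquad
  rw [discrim, mul_zero, sub_zero] at hdisc
  simpa using le_antisymm hdisc (sq_nonneg _)

lemma IsPositive.eq_of_mul_self_eq {S R : E →L[ℝ] E} (hS : S.IsPositive) (hR : R.IsPositive)
    (hSR : Commute S R) (h : S * S = R * R) : S = R := by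
  ext x
  set y := (S - R) x
  have hsum : ⟪S y, y⟫ + ⟪R y, y⟫ = 0 := by
    have hfactor : (S + R) * (S - R) = 0 := by
      rw [add_mul, mul_sub, mul_sub, h, hSR.eq]; abel
    have : (S + R) y = 0 := DFunLike.congr_fun hfactor x
    rw [← inner_add_left, ← add_apply, this, inner_zero_left]
  have hSy := hS.apply_eq_zero_of_inner_apply_self_eq_zero
    (le_antisymm (by linarith [hR.inner_nonneg_left y]) (hS.inner_nonneg_left y))
  have hRy := hR.apply_eq_zero_of_inner_apply_self_eq_zero
    (le_antisymm (by linarith [hS.inner_nonneg_left y]) (hR.inner_nonneg_left y))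
  have hy : ⟪y, y⟫ = 0 := by
    calc ⟪y, y⟫ = ⟪(S - R) x, y⟫ := rfl
      _ = ⟪x, S y⟫ - ⟪x, R y⟫ := by
          rw [sub_apply, inner_sub_left, hS.inner_left_eq_inner_right,
            hR.inner_left_eq_inner_right]
      _ = 0 := by rw [hSy, hRy, inner_zero_right, sub_zero]
  exact sub_eq_zero.mp (inner_self_eq_zero.mp hy)

lemma IsPositive.commute_of_commute_mul_self_of_norm_le_one [CompleteSpace E] {S W : E →L[ℝ] E}
    (hS : S.IsPositive) (hS₁ : ‖S‖ ≤ 1) (hW : Commute W (S * S)) : Commute W S := by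
  set a := 1 - S * S
  have ha : ‖a‖ ≤ 1 := norm_one_sub_mul_self_le_one hS.isSymmetric hS₁
  have ha_sa : IsSelfAdjoint a := .sub (.one _) <| by
    simpa [hS.isSelfAdjoint.star_eq] using IsSelfAdjoint.star_mul_self S
  have hSa : Commute S a := (Commute.one_right S).sub_right ((Commute.refl S).mul_right (.refl S))
  have hroot : S = sqrtOneSub a := by
    refine hS.eq_of_mul_self_eq (isPositive_sqrtOneSub ha_sa ha) hSa.sqrtOneSub ?_
    rw [sqrtOneSub_mul_self (norm_pow_le_one_of_norm_le_one ha), sub_sub_cancel]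
  rw [hroot]
  exact ((Commute.one_right W).sub_right hW).sqrtOneSub

lemma IsPositive.commute_of_commute_mul_self [CompleteSpace E] {S W : E →L[ℝ] E} (hS : S.IsPositive)
    (hW : Commute W (S * S)) : Commute W S := by
  set c := ‖S‖ + 1
  have hc : 0 < c := by positivity
  have hcS : ‖c⁻¹ • S‖ ≤ 1 := by
    rw [norm_smul, norm_inv, Real.norm_of_nonneg hc.le, inv_mul_le_one₀ hc]
    exact le_add_of_nonneg_right zero_le_one
  have hW' : Commute W (c⁻¹ • S * c⁻¹ • S) := by
    rw [smul_mul_smul_comm]; exact hW.smul_right _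
  have := (hS.smul_of_nonneg (inv_nonneg.2 hc.le)).commute_of_commute_mul_self_of_norm_le_one
    hcS hW'
  simpa [smul_smul, hc.ne'] using this.smul_right c

lemma apply_ne_smul_of_forall_apply_ne_smul {S K B : E →L[ℝ] E} (hKS : Commute K S) {c : ℝ}
    (hc : c ≠ 0) (hB : (S * K * S + c • 1) * B = 1) {φ : E} (hφ : φ ≠ 0)
    (heig : ∀ γ : ℝ, (S * K * S) φ ≠ γ • φ) (l : ℝ) : K (S (B (S φ))) ≠ l • φ := by
  intro hl
  set ψ := B (S φ)
  have hψ : S (K (S ψ)) + c • ψ = S φ := by simpa using DFunLike.congr_fun hB (S φ)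
  have hcψ : c • ψ = (1 - l) • S φ := by
    rw [hl, map_smul] at hψ
    rw [sub_smul, one_smul, eq_sub_iff_add_eq, add_comm]
    exact hψ
  have key : (c * l) • φ = (1 - l) • (S * K * S) φ :=
    calc (c * l) • φ = K (S (c • ψ)) := by rw [map_smul, map_smul, hl, smul_smul]
      _ = (1 - l) • K (S (S φ)) := by rw [hcψ, map_smul, map_smul]
      _ = (1 - l) • (S * K * S) φ := congr_arg _ (DFunLike.congr_fun hKS.eq (S φ))
  rcases eq_or_ne l 1 with rfl | hl1
  · simp [hc, hφ] at key
  · refine heig ((1 - l)⁻¹ * (c * l)) ?_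
    rw [mul_smul, key, inv_smul_smul₀ (sub_ne_zero.2 hl1.symm)]

end ContinuousLinearMap

lemma exists_inner_nonpos_and_lt_inner {F : Type*} [NormedAddCommGroup F] [InnerProductSpace ℝ F]
    {φ w : F} (hw : ∀ l : ℝ, w ≠ l • φ) (M : ℝ) :
    ∃ u, ⟪φ, u⟫ ≤ 0 ∧ M < ⟪u, w⟫ := by
  set K := ℝ ∙ φ
  set v := w - K.starProjection w
  have hvK : ∀ y ∈ K, ⟪v, y⟫ = 0 := K.starProjection_inner_eq_zero w
  have hφv : ⟪φ, v⟫ = 0 := by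
    rw [real_inner_comm]; exact hvK φ (Submodule.mem_span_singleton_self φ)
  have hvw : ⟪v, w⟫ = ‖v‖ ^ 2 := by
    conv_lhs => rw [← sub_add_cancel w (K.starProjection w)]
    rw [inner_add_right, hvK _ (K.starProjection_apply_mem w), add_zero]
    exact real_inner_self_eq_norm_sq v
  have hv : 0 < ‖v‖ ^ 2 := by
    refine pow_pos (norm_pos_iff.2 fun h ↦ ?_) 2
    obtain ⟨l, hl⟩ := Submodule.mem_span_singleton.1 (K.starProjection_apply_mem w)
    exact hw l (by rw [hl, ← sub_eq_zero.1 h])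
  refine ⟨((|M| + 1) / ‖v‖ ^ 2) • v, by rw [real_inner_smul_right, hφv, mul_zero], ?_⟩
  rw [real_inner_smul_left, hvw, div_mul_cancel₀ _ hv.ne']
  linarith [le_abs_self M]

theorem unbounded_on_halfspace_of_not_eigenvector_general
    {X Y : Type*}
    [NormedAddCommGroup X] [InnerProductSpace ℝ X] [CompleteSpace X]
    [NormedAddCommGroup Y] [InnerProductSpace ℝ Y] [CompleteSpace Y]
    (T : X →L[ℝ] Y) (σ : ℝ) (hσ : 0 < σ)
    (C₀ : X →L[ℝ] X)
    (hcomm : C₀ ∘L ((ContinuousLinearMap.adjoint T) ∘L T)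
      = ((ContinuousLinearMap.adjoint T) ∘L T) ∘L C₀)
    -- `S` is the positive square root `C₀^{1/2}` of `C₀`
    (S : X →L[ℝ] X) (hSsa : IsSelfAdjoint S) (hSpos : ∀ x : X, 0 ≤ ⟪S x, x⟫)
    (hS : S ∘L S = C₀)
    -- `B` is the inverse of `C₀^{1/2} T* T C₀^{1/2} + σ² Id`
    (B : X →L[ℝ] X)
    (hB' : (S ∘L (ContinuousLinearMap.adjoint T) ∘L T ∘L S + σ ^ 2 • 1) ∘L B = 1)
    (φ : X) (hφ : φ ≠ 0)
    -- `φ` is not an eigenvector of `C₀^{1/2} T* T C₀^{1/2}`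
    (heig : ¬ ∃ γ : ℝ, (S ∘L (ContinuousLinearMap.adjoint T) ∘L T ∘L S) φ = γ • φ) :
    ∀ M : ℝ, ∃ u : X, ⟪φ, u⟫ ≤ 0
      ∧ M < ⟪u, (ContinuousLinearMap.adjoint T) (T (S (B (S φ))))⟫ := by
  have hSpositive : S.IsPositive := (ContinuousLinearMap.isPositive_iff' S).2 ⟨hSsa, hSpos⟩
  have hKS : Commute (ContinuousLinearMap.adjoint T ∘L T) S :=
    hSpositive.commute_of_commute_mul_self (by rw [← hS] at hcomm; exact hcomm.symm)
  exact exists_inner_nonpos_and_lt_inner <|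
    ContinuousLinearMap.apply_ne_smul_of_forall_apply_ne_smul hKS (pow_ne_zero 2 hσ.ne') hB' hφ
      (not_exists.1 heig)

/-- If `T` is injective, `C₀` commutes with `T*T`, and `φ ≠ 0` is not an eigenvector of
`C₀^{1/2} T* T C₀^{1/2}`, then the linear functional `u ↦ ⟨u, T*Φ_MAP⟩` is unbounded above
on the half-space `{u : ⟨φ, u⟩ ≤ 0}`, where
`Φ_MAP = T C₀^{1/2} (C₀^{1/2}T*TC₀^{1/2} + σ²Id)⁻¹ C₀^{1/2} φ`.
Here `S` denotes the positive square root `C₀^{1/2}` of `C₀` and `B` denotes the inverse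
`(C₀^{1/2}T*TC₀^{1/2} + σ²Id)⁻¹`. -/
theorem unbounded_on_halfspace_of_not_eigenvector
    {X Y : Type*}
    [NormedAddCommGroup X] [InnerProductSpace ℝ X] [CompleteSpace X]
    [TopologicalSpace.SeparableSpace X]
    [NormedAddCommGroup Y] [InnerProductSpace ℝ Y] [CompleteSpace Y]
    [TopologicalSpace.SeparableSpace Y]
    (T : X →L[ℝ] Y) (hT : Function.Injective T) (σ : ℝ) (hσ : 0 < σ)
    (C₀ : X →L[ℝ] X) (hC₀sa : IsSelfAdjoint C₀) (hC₀pos : ∀ x : X, 0 ≤ ⟪C₀ x, x⟫)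
    (hcomm : C₀ ∘L ((ContinuousLinearMap.adjoint T) ∘L T)
      = ((ContinuousLinearMap.adjoint T) ∘L T) ∘L C₀)
    -- `S` is the positive square root `C₀^{1/2}` of `C₀`
    (S : X →L[ℝ] X) (hSsa : IsSelfAdjoint S) (hSpos : ∀ x : X, 0 ≤ ⟪S x, x⟫)
    (hS : S ∘L S = C₀)
    -- `B` is the inverse of `C₀^{1/2} T* T C₀^{1/2} + σ² Id`
    (B : X →L[ℝ] X)
    (hB : B ∘L (S ∘L (ContinuousLinearMap.adjoint T) ∘L T ∘L S + σ ^ 2 • 1) = 1)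
    (hB' : (S ∘L (ContinuousLinearMap.adjoint T) ∘L T ∘L S + σ ^ 2 • 1) ∘L B = 1)
    (φ : X) (hφ : φ ≠ 0)
    -- `φ` is not an eigenvector of `C₀^{1/2} T* T C₀^{1/2}`
    (heig : ¬ ∃ γ : ℝ, (S ∘L (ContinuousLinearMap.adjoint T) ∘L T ∘L S) φ = γ • φ) :
    ∀ M : ℝ, ∃ u : X, ⟪φ, u⟫ ≤ 0
      ∧ M < ⟪u, (ContinuousLinearMap.adjoint T) (T (S (B (S φ))))⟫ :=
  unbounded_on_halfspace_of_not_eigenvector_general T σ hσ C₀ hcomm S hSsa hSpos hS B hB' φ hφ heig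
end

section
/- If C₀ commutes with T*T, then T*Φ_MAP − φ = −σ²(C₀^{1/2}T*TC₀^{1/2} + σ²Id)⁻¹φ; equivalently, T*Φ_MAP = [Id − (Id + σ⁻²C₀^{1/2}T*TC₀^{1/2})⁻¹]φ. -/
/-!
Since `C₀ = S²` commutes with `A = T*T`, so does its positive square root `S`. Hence `S` commutes
with `M = SAS + σ²` and with its inverse `B`, and `A S B S = S A S B = (M - σ²) B = 1 - σ² B`.

The commutation is the real content. `K = SA - AS` is skew-adjoint and anticommutes with `S`, so
`⟪S K x, K x⟫ = -⟪S K*K x, x⟫ ≤ 0` because a product of commuting positive operators is positive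
(proved with Riesz's iteration `Tₙ₊₁ = Tₙ - Tₙ²`, which writes `T = ∑ Tₖ² + Tₙ` with `Tₙ → 0`).
Thus `SK = 0`; then `K` vanishes on `ker S ⊇ range K`, so `K² = 0` and `K = 0`.
-/

open scoped RealInnerProductSpace
open Filter Topology Finset

def subMulSelfSeq {R : Type*} [Ring R] (T : R) : ℕ → R
  | 0 => T
  | n + 1 => subMulSelfSeq T n - subMulSelfSeq T n * subMulSelfSeq T n

lemma sum_range_subMulSelfSeq_mul_self {R : Type*} [Ring R] (T : R) (n : ℕ) :
    ∑ k ∈ range n, subMulSelfSeq T k * subMulSelfSeq T k = T - subMulSelfSeq T n :=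
  (sum_congr rfl fun k _ ↦ by rw [subMulSelfSeq, sub_sub_cancel]).trans
    (sum_range_sub' (subMulSelfSeq T) n)

lemma Commute.subMulSelfSeq_left {R : Type*} [Ring R] {T P : R} (h : Commute T P) (n : ℕ) :
    Commute (subMulSelfSeq T n) P := by
  induction n with
  | zero => exact h
  | succ n ih => exact ih.sub_left (ih.mul_left ih)

namespace ContinuousLinearMap

variable {E : Type*} [NormedAddCommGroup E] [InnerProductSpace ℝ E]

lemma IsPositive.apply_eq_zero_of_inner_eq_zero {S : E →L[ℝ] E} (hS : S.IsPositive) {y : E}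
    (hy : ⟪S y, y⟫ = 0) : S y = 0 := by
  -- positivity of `⟪S (y + t • S y), y + t • S y⟫` in `t` forces the linear coefficient to vanish
  have hquad : ∀ t : ℝ, 0 ≤ ⟪S (S y), S y⟫ * (t * t) + 2 * ‖S y‖ ^ 2 * t + 0 := by
    intro t
    have h := hS.inner_nonneg_left (y + t • S y)
    have hcross : ⟪S (S y), y⟫ = ⟪S y, S y⟫ := hS.inner_left_eq_inner_right _ _
    simp only [map_add, map_smul, inner_add_left, inner_add_right, real_inner_smul_left,
      real_inner_smul_right, hy, hcross, real_inner_self_eq_norm_sq] at h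
    linarith
  have h := discrim_le_zero hquad
  rw [discrim] at h
  have hnorm : ‖S y‖ ^ 2 = 0 := by nlinarith [sq_nonneg (‖S y‖ ^ 2)]
  simpa using hnorm

variable [CompleteSpace E]

lemma sub_mul_self_mem_Icc {T : E →L[ℝ] E} (hT : T ∈ Set.Icc 0 1) :
    T - T * T ∈ Set.Icc 0 1 := by
  obtain ⟨hT0, hT1⟩ := hT
  rw [nonneg_iff_isPositive] at hT0
  rw [le_def] at hT1
  have hTsa : adjoint T = T := hT0.isSelfAdjoint.adjoint_eq
  constructor
  · -- `T - T² = (1 - T) T (1 - T) + T (1 - T) T`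
    have h := (hT0.conj_adjoint (1 - T)).add (hT1.conj_adjoint T)
    rw [hT1.isSelfAdjoint.adjoint_eq, hTsa] at h
    rw [nonneg_iff_isPositive]
    convert h using 1
    simp only [← mul_def]
    noncomm_ring
  · have h := hT1.add (isPositive_adjoint_comp_self T)
    rw [hTsa] at h
    rw [le_def]
    convert h using 1
    simp only [← mul_def]
    abel

lemma subMulSelfSeq_mem_Icc {T : E →L[ℝ] E} (hT : T ∈ Set.Icc 0 1) (n : ℕ) :
    subMulSelfSeq T n ∈ Set.Icc 0 1 := by
  induction n with
  | zero => exact hT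
  | succ n ih => exact sub_mul_self_mem_Icc ih

lemma tendsto_subMulSelfSeq_apply {T : E →L[ℝ] E} (hT : T ∈ Set.Icc 0 1) (x : E) :
    Tendsto (fun n ↦ subMulSelfSeq T n x) atTop (𝓝 0) := by
  have hpos (n : ℕ) : (subMulSelfSeq T n).IsPositive :=
    (nonneg_iff_isPositive _).1 (subMulSelfSeq_mem_Icc hT n).1
  have hsum (n : ℕ) : ∑ k ∈ range n, ‖subMulSelfSeq T k x‖ ^ 2 ≤ ⟪T x, x⟫ := by
    have h := congrArg (fun U : E →L[ℝ] E ↦ ⟪U x, x⟫) (sum_range_subMulSelfSeq_mul_self T n)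
    simp only [_root_.sum_apply, sum_inner, sub_apply, inner_sub_left,
      mul_apply_eq_comp, (hpos _).inner_left_eq_inner_right _ x,
      real_inner_self_eq_norm_sq] at h
    linarith [(hpos n).inner_nonneg_right x]
  have hsummable : Summable fun k ↦ ‖subMulSelfSeq T k x‖ ^ 2 :=
    summable_of_sum_range_le (fun k ↦ sq_nonneg _) hsum
  have h := hsummable.tendsto_atTop_zero.sqrt
  simp only [Real.sqrt_sq (norm_nonneg _), Real.sqrt_zero] at h
  exact tendsto_zero_iff_norm_tendsto_zero.2 h

lemma inner_mul_apply_nonneg_of_mem_Icc {T P : E →L[ℝ] E} (hT : T ∈ Set.Icc 0 1)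
    (hP : P.IsPositive) (h : Commute T P) (x : E) : 0 ≤ ⟪(T * P) x, x⟫ := by
  have hpos (n : ℕ) : (subMulSelfSeq T n).IsPositive :=
    (nonneg_iff_isPositive _).1 (subMulSelfSeq_mem_Icc hT n).1
  have hterm (k : ℕ) : 0 ≤ ⟪(P * (subMulSelfSeq T k * subMulSelfSeq T k)) x, x⟫ := by
    rw [← mul_assoc, ← (h.subMulSelfSeq_left k).eq, mul_assoc, mul_apply_eq_comp,
      (hpos k).inner_left_eq_inner_right]
    exact hP.inner_nonneg_left _
  have hle (n : ℕ) : ⟪P (subMulSelfSeq T n x), x⟫ ≤ ⟪(T * P) x, x⟫ := by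
    have hsplit : T = ∑ k ∈ range n, subMulSelfSeq T k * subMulSelfSeq T k + subMulSelfSeq T n :=
      sub_eq_iff_eq_add.1 (sum_range_subMulSelfSeq_mul_self T n).symm
    calc ⟪P (subMulSelfSeq T n x), x⟫
        ≤ ∑ k ∈ range n, ⟪(P * (subMulSelfSeq T k * subMulSelfSeq T k)) x, x⟫
          + ⟪P (subMulSelfSeq T n x), x⟫ := le_add_of_nonneg_left (sum_nonneg fun k _ ↦ hterm k)
      _ = ⟪(P * (∑ k ∈ range n, subMulSelfSeq T k * subMulSelfSeq T k + subMulSelfSeq T n)) x,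
          x⟫ := by
        rw [mul_add, add_apply, inner_add_left, Finset.mul_sum, _root_.sum_apply, sum_inner,
          mul_apply_eq_comp]
      _ = ⟪(T * P) x, x⟫ := by rw [← hsplit, h.eq]
  have hlim : Tendsto (fun n ↦ ⟪P (subMulSelfSeq T n x), x⟫) atTop (𝓝 0) := by
    simpa using ((P.continuous.tendsto 0).comp (tendsto_subMulSelfSeq_apply hT x)).inner
      tendsto_const_nhds
  exact le_of_tendsto' hlim hle

lemma IsPositive.smul_mem_Icc {T : E →L[ℝ] E} (hT : T.IsPositive) {c : ℝ} (hc : 0 ≤ c)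
    (hcT : c * ‖T‖ ≤ 1) : c • T ∈ Set.Icc 0 1 := by
  refine ⟨(nonneg_iff_isPositive _).2 (hT.smul_of_nonneg hc), ?_⟩
  rw [le_def, isPositive_iff']
  have hsa : IsSelfAdjoint (c • T) := (hT.smul_of_nonneg hc).isSelfAdjoint
  refine ⟨(IsSelfAdjoint.one _).sub hsa, fun x ↦ ?_⟩
  have hTx : ⟪T x, x⟫ ≤ ‖T‖ * ‖x‖ ^ 2 :=
    (real_inner_le_norm _ _).trans (by nlinarith [T.le_opNorm x, norm_nonneg x])
  rw [sub_apply, one_apply_eq_self, smul_apply, inner_sub_left, real_inner_smul_left,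
    real_inner_self_eq_norm_sq]
  nlinarith [sq_nonneg ‖x‖]

theorem IsPositive.mul_of_commute {T P : E →L[ℝ] E} (hT : T.IsPositive) (hP : P.IsPositive)
    (h : Commute T P) : (T * P).IsPositive := by
  rw [isPositive_iff']
  refine ⟨(IsSelfAdjoint.commute_iff hT.isSelfAdjoint hP.isSelfAdjoint).1 h, fun x ↦ ?_⟩
  have hc : 0 < ‖T‖ + 1 := by positivity
  have hmem := hT.smul_mem_Icc (inv_nonneg.2 hc.le)
    (by rw [inv_mul_le_iff₀ hc]; linarith)
  have h := inner_mul_apply_nonneg_of_mem_Icc hmem hP (h.smul_left _) x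
  rw [smul_mul_assoc, smul_apply, real_inner_smul_left] at h
  exact nonneg_of_mul_nonneg_right h (inv_pos.2 hc)

lemma IsPositive.mul_eq_zero_of_anticommute {S K : E →L[ℝ] E} (hS : S.IsPositive)
    (hK : adjoint K = -K) (hSK : S * K = -(K * S)) : S * K = 0 := by
  have hKK : Commute S (K * K) :=
    calc S * (K * K) = -(K * S * K) := by rw [← mul_assoc, hSK, neg_mul]
      _ = K * K * S := by rw [mul_assoc, hSK, mul_neg, neg_neg, mul_assoc]
  have hpos : (S * (adjoint K * K)).IsPositive :=
    hS.mul_of_commute (isPositive_adjoint_comp_self K) (by rw [hK, neg_mul]; exact hKK.neg_right)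
  have hconj : adjoint K * S * K = -(S * (adjoint K * K)) := by
    rw [hK]
    simp only [neg_mul, mul_neg, neg_neg, ← mul_assoc, hSK]
  refine ContinuousLinearMap.ext fun x ↦ ?_
  rw [mul_apply_eq_comp, zero_apply]
  refine hS.apply_eq_zero_of_inner_eq_zero (le_antisymm ?_ (hS.inner_nonneg_left _))
  rw [← adjoint_inner_left, ← mul_apply_eq_comp, ← mul_apply_eq_comp, hconj, neg_apply,
    inner_neg_left, neg_nonpos]
  exact hpos.inner_nonneg_left x

theorem IsPositive.commute_of_commute_mul_self_s3 {S A : E →L[ℝ] E} (hS : S.IsPositive)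
    (hA : IsSelfAdjoint A) (h : Commute (S * S) A) : Commute S A := by
  set K := S * A - A * S with hK_def
  have hK : adjoint K = -K := by
    rw [← star_eq_adjoint, hK_def, star_sub, star_mul, star_mul, hS.isSelfAdjoint.star_eq,
      hA.star_eq, neg_sub]
  have hSK : S * K = -(K * S) := by
    rw [hK_def, mul_sub, sub_mul, ← mul_assoc, h.eq]
    noncomm_ring
  have hSK0 := hS.mul_eq_zero_of_anticommute hK hSK
  have hker (u : E) (hu : S u = 0) : K u = 0 := by
    have hKu : K u = S (A u) := by
      rw [hK_def, sub_apply, mul_apply_eq_comp, mul_apply_eq_comp, hu, map_zero, sub_zero]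
    have hSSAu : S (S (A u)) = 0 := by
      rw [← hKu, ← mul_apply_eq_comp, hSK0, zero_apply]
    rw [hKu, ← inner_self_eq_zero (𝕜 := ℝ), ← hS.inner_left_eq_inner_right, hSSAu,
      inner_zero_left]
  have hK0 : K = 0 := ContinuousLinearMap.ext fun x ↦ by
    have hKKx : K (K x) = 0 := hker _ (by rw [← mul_apply_eq_comp, hSK0, zero_apply])
    rw [zero_apply, ← inner_self_eq_zero (𝕜 := ℝ), ← adjoint_inner_left, hK, neg_apply, hKKx,
      neg_zero, inner_zero_left]
  exact sub_eq_zero.1 hK0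

end ContinuousLinearMap

open ContinuousLinearMap

theorem adjoint_probe_residual_eq_general
    {X Y : Type*}
    [NormedAddCommGroup X] [InnerProductSpace ℝ X] [CompleteSpace X]
    [NormedAddCommGroup Y] [InnerProductSpace ℝ Y] [CompleteSpace Y]
    (T : X →L[ℝ] Y) (σ : ℝ)
    (C₀ : X →L[ℝ] X)
    (hcomm : C₀ ∘L ((ContinuousLinearMap.adjoint T) ∘L T)
      = ((ContinuousLinearMap.adjoint T) ∘L T) ∘L C₀)
    -- `S` is the positive square root `C₀^{1/2}` of `C₀`
    (S : X →L[ℝ] X) (hSsa : IsSelfAdjoint S) (hSpos : ∀ x : X, 0 ≤ ⟪S x, x⟫)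
    (hS : S ∘L S = C₀)
    -- `B` is the inverse of `C₀^{1/2} T* T C₀^{1/2} + σ² Id`
    (B : X →L[ℝ] X)
    (hB : B ∘L (S ∘L (ContinuousLinearMap.adjoint T) ∘L T ∘L S + σ ^ 2 • 1) = 1)
    (hB' : (S ∘L (ContinuousLinearMap.adjoint T) ∘L T ∘L S + σ ^ 2 • 1) ∘L B = 1)
    (φ : X) :
    (ContinuousLinearMap.adjoint T) (T (S (B (S φ)))) - φ = -(σ ^ 2 • B φ) := by
  set A := adjoint T ∘L T
  have hSA : Commute S A := ((isPositive_iff' S).2 ⟨hSsa, hSpos⟩).commute_of_commute_mul_self_s3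
    (isPositive_adjoint_comp_self T).isSelfAdjoint
    (by rw [ContinuousLinearMap.mul_def, hS]; exact hcomm)
  set M := S * A * S + σ ^ 2 • 1
  have hSB : Commute S B :=
    (((Commute.refl S).mul_right hSA).mul_right (.refl S) |>.add_right
      ((Commute.one_right S).smul_right _)).units_inv_right (u := ⟨M, B, hB', hB⟩)
  have key : A * (S * (B * S)) = 1 - σ ^ 2 • B :=
    calc A * (S * (B * S)) = S * A * S * B := by
          rw [← hSB.eq, ← mul_assoc, ← mul_assoc, ← hSA.eq]
      _ = (M - σ ^ 2 • 1) * B := by rw [add_sub_cancel_right]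
      _ = 1 - σ ^ 2 • B := by rw [sub_mul, show M * B = 1 from hB', smul_mul_assoc, one_mul]
  change (A * (S * (B * S))) φ - φ = _
  rw [key, sub_apply, one_apply_eq_self, smul_apply, sub_sub_cancel_left]

/-- If `C₀` commutes with `T*T`, then
`T*Φ_MAP − φ = −σ²(C₀^{1/2}T*TC₀^{1/2} + σ²Id)⁻¹ φ`, where
`Φ_MAP = T C₀^{1/2} (C₀^{1/2}T*TC₀^{1/2} + σ²Id)⁻¹ C₀^{1/2} φ`.
Here `S` denotes the positive square root `C₀^{1/2}` of `C₀` and `B` denotes the inverse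
`(C₀^{1/2}T*TC₀^{1/2} + σ²Id)⁻¹`. -/
theorem adjoint_probe_residual_eq
    {X Y : Type*}
    [NormedAddCommGroup X] [InnerProductSpace ℝ X] [CompleteSpace X]
    [TopologicalSpace.SeparableSpace X]
    [NormedAddCommGroup Y] [InnerProductSpace ℝ Y] [CompleteSpace Y]
    [TopologicalSpace.SeparableSpace Y]
    (T : X →L[ℝ] Y) (σ : ℝ) (hσ : 0 < σ)
    (C₀ : X →L[ℝ] X) (hC₀sa : IsSelfAdjoint C₀) (hC₀pos : ∀ x : X, 0 ≤ ⟪C₀ x, x⟫)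
    (hcomm : C₀ ∘L ((ContinuousLinearMap.adjoint T) ∘L T)
      = ((ContinuousLinearMap.adjoint T) ∘L T) ∘L C₀)
    -- `S` is the positive square root `C₀^{1/2}` of `C₀`
    (S : X →L[ℝ] X) (hSsa : IsSelfAdjoint S) (hSpos : ∀ x : X, 0 ≤ ⟪S x, x⟫)
    (hS : S ∘L S = C₀)
    -- `B` is the inverse of `C₀^{1/2} T* T C₀^{1/2} + σ² Id`
    (B : X →L[ℝ] X)
    (hB : B ∘L (S ∘L (ContinuousLinearMap.adjoint T) ∘L T ∘L S + σ ^ 2 • 1) = 1)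
    (hB' : (S ∘L (ContinuousLinearMap.adjoint T) ∘L T ∘L S + σ ^ 2 • 1) ∘L B = 1)
    (φ : X) :
    (ContinuousLinearMap.adjoint T) (T (S (B (S φ)))) - φ = -(σ ^ 2 • B φ) :=
  adjoint_probe_residual_eq_general T σ C₀ hcomm S hSsa hSpos hS B hB hB' φ
end

section
/- Suppose φ ≠ 0 satisfies C₀^{1/2}T*TC₀^{1/2}φ = γφ with γ > 0, and suppose Φ₀ ∈ Y lies in the closed linear span of (f_k)_{k∈ℕ} and satisfies T*Φ₀ = φ. Then: (i) TC₀T*Φ₀ = γΦ₀, i.e. Φ₀ is an eigenvector of TC₀T* with eigenvalue γ; (ii) ⟨φ, C₀φ⟩_X = γ‖Φ₀‖_Y²; and (iii) ‖Φ_MAP‖_Y = (γ/(γ + σ²))‖Φ₀‖_Y. -/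
open scoped RealInnerProductSpace

/-!
Positivity forces the square root `S` of `C₀` to act on the eigenbasis by `S e_k = √ρ_k e_k`, so
`S` commutes with `T*T`, and the eigen-equation for `φ` becomes `T*T C₀ φ = γ φ = γ T*Φ₀`. As `T*`
is injective on the closure of the range of `T`, which contains `Φ₀`, this gives `T C₀ φ = γ Φ₀`.
Part (ii) is the inner product of this identity with `Φ₀`; for (iii), `S φ` is an eigenvector of
`S T*T S + σ² Id` with eigenvalue `γ + σ²`, so `B` divides it by `γ + σ²`.
-/

namespace HilbertBasis

theorem commute_of_apply_eq_smul {𝕜 E ι : Type*} [RCLike 𝕜] [NormedAddCommGroup E]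
    [InnerProductSpace 𝕜 E] (e : HilbertBasis ι 𝕜 E) {A B : E →L[𝕜] E} {a b : ι → 𝕜}
    (hA : ∀ i, A (e i) = a i • e i) (hB : ∀ i, B (e i) = b i • e i) : Commute A B := by
  refine ContinuousLinearMap.ext_on
    (Submodule.dense_iff_topologicalClosure_eq_top.mpr e.dense_span) ?_
  rintro _ ⟨i, rfl⟩
  show A (B (e i)) = B (A (e i))
  simp only [hA, hB, map_smul, smul_smul, mul_comm]

end HilbertBasis

namespace ContinuousLinearMap

theorem apply_eq_smul_of_apply_apply_eq_sq_smul {E : Type*} [NormedAddCommGroup E]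
    [InnerProductSpace ℝ E] (S : E →L[ℝ] E) (hS : ∀ x, 0 ≤ ⟪S x, x⟫) {v : E} {r : ℝ}
    (hr : 0 < r) (hv : S (S v) = r ^ 2 • v) : S v = r • v := by
  set w := S v - r • v
  -- `w` is an eigenvector of `S` for the negative eigenvalue `-r`, which positivity forbids.
  have hSw : S w = -r • w := by
    simp only [w, map_sub, map_smul, hv]
    module
  have hw : r * ⟪w, w⟫ ≤ 0 := by
    have := hS w
    rwa [hSw, real_inner_smul_left, neg_mul, neg_nonneg] at this
  have : ⟪w, w⟫ = 0 :=
    le_antisymm (nonpos_of_mul_nonpos_right hw hr) real_inner_self_nonneg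
  exact sub_eq_zero.mp (inner_self_eq_zero.mp this)

theorem apply_eq_inv_smul_of_comp_eq_one {𝕜 E : Type*} [Field 𝕜] [AddCommGroup E]
    [Module 𝕜 E] [TopologicalSpace E] (B : E →L[𝕜] E) {M : E →L[𝕜] E} (hBM : B ∘L M = 1)
    {v : E} {c : 𝕜} (hc : c ≠ 0) (hv : M v = c • v) : B v = c⁻¹ • v := by
  calc B v = c⁻¹ • B (M v) := by rw [hv, map_smul, inv_smul_smul₀ hc]
    _ = c⁻¹ • v := by rw [← comp_apply, hBM, one_apply_eq_self]

theorem eq_zero_of_mem_closure_range_of_adjoint_apply_eq_zero {𝕜 E F : Type*} [RCLike 𝕜]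
    [NormedAddCommGroup E] [InnerProductSpace 𝕜 E] [CompleteSpace E]
    [NormedAddCommGroup F] [InnerProductSpace 𝕜 F] [CompleteSpace F]
    (T : E →L[𝕜] F) {y : F} (hy : y ∈ T.range.topologicalClosure)
    (hTy : adjoint T y = 0) : y = 0 := by
  have hy' : y ∈ T.range.topologicalClosureᗮ := by
    rw [Submodule.orthogonal_closure, orthogonal_range]
    exact hTy
  exact (Submodule.mem_bot 𝕜).mp ((Submodule.orthogonal_disjoint _).le_bot ⟨hy, hy'⟩)

end ContinuousLinearMap

section SingularSystem

variable {X Y : Type*} [NormedAddCommGroup X] [InnerProductSpace ℝ X]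
  [NormedAddCommGroup Y] [InnerProductSpace ℝ Y] {ι : Type*}
  {T : X →L[ℝ] Y} {e : HilbertBasis ι ℝ X} {f : ι → Y} {τ : ι → ℝ}

theorem apply_hilbertBasis_eq_smul_of_singularSystem
    (hT : ∀ x : X, T x = ∑' k, (τ k * ⟪e k, x⟫) • f k) (k : ι) :
    T (e k) = τ k • f k := by
  classical
  rw [hT, tsum_eq_single k fun j hj => ?_]
  · simp [e.orthonormal.1 k]
  · simp [orthonormal_iff_ite.mp e.orthonormal j k, hj]

theorem adjoint_comp_self_apply_hilbertBasis [CompleteSpace X] [CompleteSpace Y]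
    (hf : Orthonormal ℝ f) (hTe : ∀ k, T (e k) = τ k • f k) (k : ι) :
    (ContinuousLinearMap.adjoint T ∘L T) (e k) = τ k ^ 2 • e k := by
  classical
  refine e.repr.injective (lp.ext (funext fun i => ?_))
  simp only [e.repr_apply_apply, ContinuousLinearMap.comp_apply,
    ContinuousLinearMap.adjoint_inner_right, hTe, map_smul, lp.coeFn_smul, Pi.smul_apply,
    real_inner_smul_left, orthonormal_iff_ite.mp hf,
    orthonormal_iff_ite.mp e.orthonormal, smul_eq_mul]
  split_ifs with h <;> simp [h, sq]

end SingularSystem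

theorem unregularized_probe_eigenvector_and_norms_general
    {X Y : Type*}
    [NormedAddCommGroup X] [InnerProductSpace ℝ X] [CompleteSpace X]
    [NormedAddCommGroup Y] [InnerProductSpace ℝ Y] [CompleteSpace Y]
    (T : X →L[ℝ] Y)
    -- singular system of `T`
    (e : HilbertBasis ℕ ℝ X) (f : ℕ → Y) (hf : Orthonormal ℝ f)
    (τ : ℕ → ℝ) (hτpos : ∀ k, 0 < τ k)
    (hT : ∀ x : X, T x = ∑' k : ℕ, (τ k * ⟪e k, x⟫) • f k)
    -- `C₀` is jointly diagonalizable with `T*T`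
    (C₀ : X →L[ℝ] X)
    (ρ : ℕ → ℝ) (hρpos : ∀ k, 0 < ρ k) (hC₀e : ∀ k, C₀ (e k) = ρ k • e k)
    (σ : ℝ)
    -- `S` is the positive square root `C₀^{1/2}` of `C₀`
    (S : X →L[ℝ] X) (hSpos : ∀ x : X, 0 ≤ ⟪S x, x⟫)
    (hS : S ∘L S = C₀)
    -- `B` is the inverse of `C₀^{1/2} T* T C₀^{1/2} + σ² Id`
    (B : X →L[ℝ] X)
    (hB : B ∘L (S ∘L (ContinuousLinearMap.adjoint T) ∘L T ∘L S + σ ^ 2 • 1) = 1)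
    (φ : X) (γ : ℝ) (hγ : 0 < γ)
    (heig : (S ∘L (ContinuousLinearMap.adjoint T) ∘L T ∘L S) φ = γ • φ)
    (Φ₀ : Y) (hΦ₀mem : Φ₀ ∈ (Submodule.span ℝ (Set.range f)).topologicalClosure)
    (hΦ₀ : (ContinuousLinearMap.adjoint T) Φ₀ = φ) :
    T (C₀ ((ContinuousLinearMap.adjoint T) Φ₀)) = γ • Φ₀
    ∧ ⟪φ, C₀ φ⟫ = γ * ‖Φ₀‖ ^ 2
    ∧ ‖T (S (B (S φ)))‖ = (γ / (γ + σ ^ 2)) * ‖Φ₀‖ := by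
  have hTe := apply_hilbertBasis_eq_smul_of_singularSystem hT
  have hSS x : S (S x) = C₀ x := DFunLike.congr_fun hS x
  have hSe k : S (e k) = √(ρ k) • e k :=
    S.apply_eq_smul_of_apply_apply_eq_sq_smul hSpos (Real.sqrt_pos.mpr (hρpos k)) <| by
      rw [hSS, hC₀e, Real.sq_sqrt (hρpos k).le]
  have hkey : ContinuousLinearMap.adjoint T (T (C₀ φ)) = γ • φ := by
    have hcomm := e.commute_of_apply_eq_smul hSe (adjoint_comp_self_apply_hilbertBasis hf hTe)
    rw [← hSS, ← heig]
    exact (congr($hcomm.eq (S φ))).symm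
  have hΦ₀range : Φ₀ ∈ T.range.topologicalClosure := by
    refine Submodule.topologicalClosure_mono (Submodule.span_le.mpr ?_) hΦ₀mem
    rintro _ ⟨k, rfl⟩
    exact ⟨(τ k)⁻¹ • e k, by simp [hTe, inv_smul_smul₀ (hτpos k).ne']⟩
  have hi : T (C₀ φ) = γ • Φ₀ := by
    refine sub_eq_zero.mp (T.eq_zero_of_mem_closure_range_of_adjoint_apply_eq_zero ?_ ?_)
    · exact Submodule.sub_mem _ (Submodule.le_topologicalClosure _ ⟨_, rfl⟩)
        (Submodule.smul_mem _ _ hΦ₀range)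
    · rw [map_sub, map_smul, hkey, hΦ₀, sub_self]
  have hBS : B (S φ) = (γ + σ ^ 2)⁻¹ • S φ :=
    B.apply_eq_inv_smul_of_comp_eq_one hB (by positivity) (by simp [hSS, hkey, add_smul])
  refine ⟨by rw [hΦ₀, hi], ?_, ?_⟩
  · calc ⟪φ, C₀ φ⟫ = ⟪ContinuousLinearMap.adjoint T Φ₀, C₀ φ⟫ := by rw [hΦ₀]
      _ = ⟪Φ₀, T (C₀ φ)⟫ := T.adjoint_inner_left _ _
      _ = γ * ‖Φ₀‖ ^ 2 := by rw [hi, real_inner_smul_right, real_inner_self_eq_norm_sq]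
  · rw [hBS, map_smul, map_smul, hSS, hi, smul_smul, ← div_eq_inv_mul, norm_smul,
      Real.norm_of_nonneg (by positivity)]

/-- Let `T` be an injective compact operator with singular system `(τ_k, e_k, f_k)`,
let `C₀ e_k = ρ_k e_k` with `ρ_k > 0`, and suppose `φ ≠ 0` satisfies
`C₀^{1/2}T*TC₀^{1/2} φ = γ φ` with `γ > 0`.  If `Φ₀` lies in the closed linear span of
`(f_k)` and `T*Φ₀ = φ`, then (i) `TC₀T*Φ₀ = γΦ₀`, (ii) `⟨φ, C₀φ⟩ = γ‖Φ₀‖²`, and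
(iii) `‖Φ_MAP‖ = (γ/(γ+σ²))‖Φ₀‖`, where
`Φ_MAP = T C₀^{1/2} (C₀^{1/2}T*TC₀^{1/2} + σ²Id)⁻¹ C₀^{1/2} φ`, `S` denotes the positive
square root `C₀^{1/2}` of `C₀`, and `B` the inverse `(C₀^{1/2}T*TC₀^{1/2} + σ²Id)⁻¹`. -/
theorem unregularized_probe_eigenvector_and_norms
    {X Y : Type*}
    [NormedAddCommGroup X] [InnerProductSpace ℝ X] [CompleteSpace X]
    [TopologicalSpace.SeparableSpace X]
    [NormedAddCommGroup Y] [InnerProductSpace ℝ Y] [CompleteSpace Y]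
    [TopologicalSpace.SeparableSpace Y]
    (T : X →L[ℝ] Y) (hTinj : Function.Injective T) (hTcomp : IsCompactOperator T)
    -- singular system of `T`
    (e : HilbertBasis ℕ ℝ X) (f : ℕ → Y) (hf : Orthonormal ℝ f)
    (τ : ℕ → ℝ) (hτpos : ∀ k, 0 < τ k)
    (hT : ∀ x : X, T x = ∑' k : ℕ, (τ k * ⟪e k, x⟫) • f k)
    -- `C₀` is jointly diagonalizable with `T*T`
    (C₀ : X →L[ℝ] X) (hC₀sa : IsSelfAdjoint C₀)
    (hC₀pos : ∀ x : X, x ≠ 0 → 0 < ⟪C₀ x, x⟫)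
    (ρ : ℕ → ℝ) (hρpos : ∀ k, 0 < ρ k) (hC₀e : ∀ k, C₀ (e k) = ρ k • e k)
    (σ : ℝ) (hσ : 0 < σ)
    -- `S` is the positive square root `C₀^{1/2}` of `C₀`
    (S : X →L[ℝ] X) (hSsa : IsSelfAdjoint S) (hSpos : ∀ x : X, 0 ≤ ⟪S x, x⟫)
    (hS : S ∘L S = C₀)
    -- `B` is the inverse of `C₀^{1/2} T* T C₀^{1/2} + σ² Id`
    (B : X →L[ℝ] X)
    (hB : B ∘L (S ∘L (ContinuousLinearMap.adjoint T) ∘L T ∘L S + σ ^ 2 • 1) = 1)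
    (hB' : (S ∘L (ContinuousLinearMap.adjoint T) ∘L T ∘L S + σ ^ 2 • 1) ∘L B = 1)
    (φ : X) (hφ : φ ≠ 0) (γ : ℝ) (hγ : 0 < γ)
    (heig : (S ∘L (ContinuousLinearMap.adjoint T) ∘L T ∘L S) φ = γ • φ)
    (Φ₀ : Y) (hΦ₀mem : Φ₀ ∈ (Submodule.span ℝ (Set.range f)).topologicalClosure)
    (hΦ₀ : (ContinuousLinearMap.adjoint T) Φ₀ = φ) :
    T (C₀ ((ContinuousLinearMap.adjoint T) Φ₀)) = γ • Φ₀
    ∧ ⟪φ, C₀ φ⟫ = γ * ‖Φ₀‖ ^ 2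
    ∧ ‖T (S (B (S φ)))‖ = (γ / (γ + σ ^ 2)) * ‖Φ₀‖ :=
  unregularized_probe_eigenvector_and_norms_general T e f hf τ hτpos hT C₀ ρ hρpos hC₀e σ S hSpos hS
    B hB φ γ hγ heig Φ₀ hΦ₀mem hΦ₀
end

section
/- Define J(Φ) := (ρ‖(T*T)^{ν/2}(T*Φ − φ)‖_X − ⟨Φ, Tu⟩_Y)/‖Φ‖_Y for Φ ∈ Y \ {0}. If Φ† ∈ Y \ {0} satisfies J(Φ†) ≤ J(Φ) for all Φ ∈ Y \ {0} and J(Φ†) < 0, then Φ† belongs to the closure of the range of T. -/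
open scoped RealInnerProductSpace InnerProduct

/-!
Let `P` be the orthogonal projection onto `K = closure (range T)`. Since `Kᗮ = ker T*`, the
numerator `N(Φ) = ρ‖(T*T)^{ν/2}(T*Φ − φ)‖ − ⟪Φ, Tu⟫` of `J` satisfies `N(PΦ) = N(Φ)`, while
`‖PΦ‖ < ‖Φ‖` unless `Φ ∈ K`. As `N(Φ†) < 0`, projecting a minimizer `Φ† ∉ K` would strictly
decrease `J`; and `PΦ† ≠ 0` because `N(0) ≥ 0`.
-/

namespace Submodule

variable {𝕜 E : Type*} [RCLike 𝕜] [NormedAddCommGroup E] [InnerProductSpace 𝕜 E]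

theorem norm_starProjection_lt_of_notMem (K : Submodule 𝕜 E) [K.HasOrthogonalProjection]
    {v : E} (hv : v ∉ K) : ‖K.starProjection v‖ < ‖v‖ :=
  (K.norm_starProjection_apply_le v).lt_of_ne fun h => hv ((K.mem_iff_norm_starProjection v).2 h)

end Submodule

section

variable {E : Type*} [NormedAddCommGroup E] [InnerProductSpace ℝ E]

theorem Submodule.mem_of_forall_div_norm_le {K : Submodule ℝ E} [K.HasOrthogonalProjection]
    {N : E → ℝ} (hN : ∀ v, N (K.starProjection v) = N v) (hN0 : 0 ≤ N 0) {x : E}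
    (hmin : ∀ y, y ≠ 0 → N x / ‖x‖ ≤ N y / ‖y‖) (hneg : N x / ‖x‖ < 0) : x ∈ K := by
  by_contra hx
  have hNx : N x < 0 := lt_of_not_ge fun h => hneg.not_ge (div_nonneg h (norm_nonneg x))
  have hp : K.starProjection x ≠ 0 := fun h => hN0.not_gt (by rw [← h, hN]; exact hNx)
  have hlt : N x / ‖K.starProjection x‖ < N x / ‖x‖ := by
    rw [← neg_lt_neg_iff, ← neg_div, ← neg_div]
    exact div_lt_div_of_pos_left (neg_pos.2 hNx) (norm_pos_iff.2 hp)
      (K.norm_starProjection_lt_of_notMem hx)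
  have hle := hmin _ hp
  rw [hN] at hle
  exact hlt.not_ge hle

end

namespace ContinuousLinearMap

variable {𝕜 X Y : Type*} [RCLike 𝕜] [NormedAddCommGroup X] [InnerProductSpace 𝕜 X]
  [CompleteSpace X] [NormedAddCommGroup Y] [InnerProductSpace 𝕜 Y] [CompleteSpace Y]

theorem adjoint_starProjection_closure_range (T : X →L[𝕜] Y) (v : Y) :
    (T†) (T.range.topologicalClosure.starProjection v) = (T†) v := by
  have hker : v - T.range.topologicalClosure.starProjection v ∈ T†.ker := by
    rw [← orthogonal_range, ← Submodule.orthogonal_closure]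
    exact Submodule.sub_starProjection_mem_orthogonal v
  rw [LinearMap.mem_ker, coe_coe, map_sub, sub_eq_zero] at hker
  exact hker.symm

theorem inner_starProjection_closure_range_apply (T : X →L[𝕜] Y) (v : Y) (x : X) :
    inner 𝕜 (T.range.topologicalClosure.starProjection v) (T x) = inner 𝕜 v (T x) := by
  rw [← adjoint_inner_left, adjoint_starProjection_closure_range, adjoint_inner_left]

end ContinuousLinearMap

theorem minimizer_of_J_mem_closure_range_general
    {X Y : Type*}
    [NormedAddCommGroup X] [InnerProductSpace ℝ X] [CompleteSpace X]
    [NormedAddCommGroup Y] [InnerProductSpace ℝ Y] [CompleteSpace Y]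
    (T : X →L[ℝ] Y) (φ u : X) (ρ ν : ℝ) (hρ : 0 < ρ)
    -- `pow s` is the operator power `(T*T)^s`, characterized by:
    (pow : ℝ → (X →L[ℝ] X))
    -- the objective functional `J`
    (J : Y → ℝ)
    (hJ : ∀ Φ : Y, J Φ =
      (ρ * ‖(pow (ν / 2)) ((ContinuousLinearMap.adjoint T) Φ - φ)‖ - ⟪Φ, T u⟫) / ‖Φ‖)
    (Φdag : Y)
    (hmin : ∀ Φ : Y, Φ ≠ 0 → J Φdag ≤ J Φ)
    (hneg : J Φdag < 0) :
    Φdag ∈ closure (Set.range T) := by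
  simp only [hJ] at hmin hneg
  have hmem : Φdag ∈ T.range.topologicalClosure := by
    refine Submodule.mem_of_forall_div_norm_le
      (N := fun Φ => ρ * ‖pow (ν / 2) ((T†) Φ - φ)‖ - ⟪Φ, T u⟫) (fun v => ?_) ?_ hmin hneg
    · rw [T.adjoint_starProjection_closure_range, T.inner_starProjection_closure_range_apply]
    · simp only [map_zero, zero_sub, inner_zero_left, sub_zero]
      positivity
  rwa [← SetLike.mem_coe, Submodule.topologicalClosure_coe, LinearMap.coe_range] at hmem

/-- Define `J(Φ) = (ρ‖(T*T)^{ν/2}(T*Φ − φ)‖ − ⟨Φ, Tu⟩)/‖Φ‖` for `Φ ≠ 0`.  If `Φ†ₜ ≠ 0`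
minimizes `J` over `Y \ {0}` and `J(Φ†) < 0`, then `Φ†` lies in the closure of the range
of `T`.  The operator power `(T*T)^s` of the positive self-adjoint operator `T*T` is
encoded by the family `pow`, uniquely determined by the hypotheses: `pow 0 = Id`,
`pow 1 = T*T`, each `pow s` (`s > 0`) is self-adjoint and positive, `pow` is additive in
the exponent, and `pow` is norm-continuous on `(0,∞)`. -/
theorem minimizer_of_J_mem_closure_range
    {X Y : Type*}
    [NormedAddCommGroup X] [InnerProductSpace ℝ X] [CompleteSpace X]
    [TopologicalSpace.SeparableSpace X]
    [NormedAddCommGroup Y] [InnerProductSpace ℝ Y] [CompleteSpace Y]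
    [TopologicalSpace.SeparableSpace Y]
    (T : X →L[ℝ] Y) (φ u : X) (ρ ν : ℝ) (hρ : 0 < ρ) (hν : 0 ≤ ν)
    -- `pow s` is the operator power `(T*T)^s`, characterized by:
    (pow : ℝ → (X →L[ℝ] X))
    (hpow0 : pow 0 = 1)
    (hpow1 : pow 1 = (ContinuousLinearMap.adjoint T) ∘L T)
    (hpowsa : ∀ s : ℝ, 0 < s → IsSelfAdjoint (pow s))
    (hpowpos : ∀ s : ℝ, 0 < s → ∀ x : X, 0 ≤ ⟪(pow s) x, x⟫)
    (hpowadd : ∀ s t : ℝ, 0 < s → 0 < t → pow (s + t) = pow s ∘L pow t)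
    (hpowcont : ContinuousOn pow (Set.Ioi (0 : ℝ)))
    -- the objective functional `J`
    (J : Y → ℝ)
    (hJ : ∀ Φ : Y, J Φ =
      (ρ * ‖(pow (ν / 2)) ((ContinuousLinearMap.adjoint T) Φ - φ)‖ - ⟪Φ, T u⟫) / ‖Φ‖)
    (Φdag : Y) (hΦdag : Φdag ≠ 0)
    (hmin : ∀ Φ : Y, Φ ≠ 0 → J Φdag ≤ J Φ)
    (hneg : J Φdag < 0) :
    Φdag ∈ closure (Set.range T) :=
  minimizer_of_J_mem_closure_range_general T φ u ρ ν hρ pow J hJ Φdag hmin hneg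
end

section
/- Fix σ > 0 and φ ∈ X, and let Φ† ∈ Y lie in the closed linear span of (f_k)_{k∈ℕ}. Assume that for every k ∈ ℕ: (a) ⟨T*Φ†, e_k⟩ = 0 implies ⟨φ, e_k⟩ = 0, and (b) if both ⟨T*Φ†, e_k⟩ ≠ 0 and ⟨φ − T*Φ†, e_k⟩ ≠ 0 then ⟨T*Φ†, e_k⟩/⟨φ − T*Φ†, e_k⟩ > 0. Then there exists a sequence (C_n)_{n∈ℕ} of self-adjoint, positive definite, trace-class operators on X, each commuting with T*T, such that ‖Φ_MAP(C_n) − Φ†‖_Y → 0 as n → ∞, where Φ_MAP(C) := TC^{1/2}(C^{1/2}T*TC^{1/2} + σ²Id)⁻¹C^{1/2}φ. -/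
/-!
Everything is diagonal in the singular basis. For `C = diag (c_k)` the coefficient of
`Φ_MAP(C)` along `f_k` is `τ_k c_k φ_k / (c_k τ_k² + σ²)` with `φ_k = ⟪e_k, φ⟫`, and since
`Φ_MAP(C) − Φ†` lies in the closed span of the `f_k`, its squared norm is the sum of the squared
distances of these coefficients to `d_k = ⟪f_k, Φ†⟫`. Each single distance can be made as small
as we like: if `d_k = 0` then `φ_k = 0` by (a); if `φ_k ≠ τ_k d_k` the variance
`c_k = σ² d_k / (τ_k (φ_k − τ_k d_k))`, positive by (b), makes it vanish; and if `φ_k = τ_k d_k`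
the coefficient tends to `d_k` as `c_k → ∞`. Choosing such variances for `k ≤ n` and `c_k = 2⁻ᵏ`
for `k > n` keeps `C_n` trace class, and dominated convergence sends the error to `0`.
-/

open Filter Topology
open scoped RealInnerProductSpace

namespace HilbertBasis

variable {ι X : Type*} [NormedAddCommGroup X] [InnerProductSpace ℝ X] (e : HilbertBasis ι ℝ X)

theorem ext_inner {x y : X} (h : ∀ i, ⟪e i, x⟫ = ⟪e i, y⟫) : x = y :=
  (e.hasSum_repr x).unique (by simpa only [e.repr_apply_apply, h] using e.hasSum_repr y)

def IsDiagonal (α : ι → ℝ) (A : X →L[ℝ] X) : Prop :=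
  ∀ x i, ⟪e i, A x⟫ = α i * ⟪e i, x⟫

theorem exists_isDiagonal {α : ι → ℝ} {M : ℝ} (hα : ∀ i, |α i| ≤ M) :
    ∃ A : X →L[ℝ] X, e.IsDiagonal α A := by
  have hle (x : lp (fun _ : ι => ℝ) 2) (i : ι) : ‖α i * x i‖ ≤ ‖(M • x) i‖ := by
    rw [lp.coeFn_smul, Pi.smul_apply, norm_mul, norm_smul, Real.norm_eq_abs]
    exact mul_le_mul_of_nonneg_right ((hα i).trans (le_abs_self M)) (norm_nonneg _)
  let L : lp (fun _ : ι => ℝ) 2 →ₗ[ℝ] lp (fun _ : ι => ℝ) 2 :=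
    { toFun x := ⟨fun i => α i * x i, (lp.memℓp (M • x)).mono' (hle x)⟩
      map_add' x y := lp.ext <| funext fun i => mul_add (α i) (x i) (y i)
      map_smul' c x := lp.ext <| funext fun i => mul_left_comm (α i) c (x i) }
  let D := L.mkContinuous ‖M‖ fun x => (lp.norm_mono two_ne_zero (hle x)).trans_eq
    (lp.norm_const_smul two_ne_zero x)
  refine ⟨e.repr.symm.toContinuousLinearEquiv.toContinuousLinearMap ∘L D ∘L
    e.repr.toContinuousLinearEquiv.toContinuousLinearMap, fun x i => ?_⟩
  simp [← e.repr_apply_apply, D, L]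

theorem exists_isDiagonal_variance_sqrt_inv {c : ι → ℝ} (hc : ∀ i, 0 < c i) {M : ℝ}
    (hM : ∀ i, c i ≤ M) (τ : ι → ℝ) {σ : ℝ} (hσ : σ ≠ 0) :
    ∃ C S B : X →L[ℝ] X, e.IsDiagonal c C ∧ e.IsDiagonal (fun i => √(c i)) S ∧
      e.IsDiagonal (fun i => (c i * τ i ^ 2 + σ ^ 2)⁻¹) B := by
  obtain ⟨C, hC⟩ := e.exists_isDiagonal fun i => (abs_of_pos (hc i)).trans_le (hM i)
  obtain ⟨S, hS⟩ := e.exists_isDiagonal fun i =>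
    (abs_of_nonneg (Real.sqrt_nonneg (c i))).trans_le (Real.sqrt_le_sqrt (hM i))
  have hσ2 := pow_two_pos_of_ne_zero hσ
  have hcτ i : 0 ≤ c i * τ i ^ 2 := mul_nonneg (hc i).le (sq_nonneg _)
  obtain ⟨B, hB⟩ := e.exists_isDiagonal (α := fun i => (c i * τ i ^ 2 + σ ^ 2)⁻¹) fun i =>
    (abs_of_pos (inv_pos.mpr (by linarith [hcτ i]))).trans_le
      (inv_anti₀ hσ2 (le_add_of_nonneg_left (hcτ i)))
  exact ⟨C, S, B, hC, hS, hB⟩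

namespace IsDiagonal

variable {e} {α β : ι → ℝ} {A B : X →L[ℝ] X}

theorem eq_of_forall (hA : e.IsDiagonal α A) (hB : e.IsDiagonal β B) (h : ∀ i, α i = β i) :
    A = B :=
  ContinuousLinearMap.ext fun x => e.ext_inner fun i => by rw [hA, hB, h]

theorem comp (hA : e.IsDiagonal α A) (hB : e.IsDiagonal β B) :
    e.IsDiagonal (fun i => α i * β i) (A ∘L B) := fun x i => by
  rw [ContinuousLinearMap.comp_apply, hA, hB, mul_assoc]

theorem add (hA : e.IsDiagonal α A) (hB : e.IsDiagonal β B) :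
    e.IsDiagonal (fun i => α i + β i) (A + B) := fun x i => by
  rw [add_apply, inner_add_right, hA, hB, add_mul]

theorem smul (hA : e.IsDiagonal α A) (c : ℝ) : e.IsDiagonal (fun i => c * α i) (c • A) :=
  fun x i => by rw [smul_apply, real_inner_smul_right, hA, mul_assoc]

theorem one : e.IsDiagonal (fun _ => 1) (1 : X →L[ℝ] X) := fun _ _ => (one_mul _).symm

theorem congr (hA : e.IsDiagonal α A) (h : ∀ i, α i = β i) : e.IsDiagonal β A :=
  fun x i => by rw [hA, h]

theorem comp_eq_one (hA : e.IsDiagonal α A) (hB : e.IsDiagonal β B) (h : ∀ i, α i * β i = 1) :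
    A ∘L B = 1 :=
  (hA.comp hB).eq_of_forall one h

theorem commute (hA : e.IsDiagonal α A) (hB : e.IsDiagonal β B) : A ∘L B = B ∘L A :=
  (hA.comp hB).eq_of_forall (hB.comp hA) fun _ => mul_comm _ _

theorem apply_basis (hA : e.IsDiagonal α A) (i : ι) : A (e i) = α i • e i := by
  classical
  refine e.ext_inner fun j => ?_
  rw [hA, real_inner_smul_right, orthonormal_iff_ite.mp e.orthonormal]
  split_ifs with h <;> simp [h]

theorem inner_apply_basis (hA : e.IsDiagonal α A) (i : ι) : ⟪A (e i), e i⟫ = α i := by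
  rw [real_inner_comm, hA, real_inner_self_eq_norm_sq, e.orthonormal.norm_eq_one, one_pow, mul_one]

theorem hasSum_inner_apply_self (hA : e.IsDiagonal α A) (x : X) :
    HasSum (fun i => α i * ⟪e i, x⟫ ^ 2) ⟪A x, x⟫ := by
  refine (e.hasSum_inner_mul_inner (A x) x).congr_fun fun i => ?_
  rw [real_inner_comm (e i), hA, sq, mul_assoc]

theorem inner_apply_self_nonneg (hA : e.IsDiagonal α A) (hα : ∀ i, 0 ≤ α i) (x : X) :
    0 ≤ ⟪A x, x⟫ :=
  (hA.hasSum_inner_apply_self x).nonneg fun i => mul_nonneg (hα i) (sq_nonneg _)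

theorem inner_apply_self_pos (hA : e.IsDiagonal α A) (hα : ∀ i, 0 < α i) {x : X} (hx : x ≠ 0) :
    0 < ⟪A x, x⟫ := by
  obtain ⟨i, hi⟩ : ∃ i, ⟪e i, x⟫ ≠ 0 := by
    by_contra! h
    exact hx (e.ext_inner fun i => by rw [h i, inner_zero_right])
  have hs := hA.hasSum_inner_apply_self x
  rw [← hs.tsum_eq]
  exact hs.summable.tsum_pos (fun i => mul_nonneg (hα i).le (sq_nonneg _)) i
    (mul_pos (hα i) (pow_pos (abs_pos.mpr hi) 2 |>.trans_eq (sq_abs _)))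

theorem isSelfAdjoint [CompleteSpace X] (hA : e.IsDiagonal α A) : IsSelfAdjoint A := by
  refine ContinuousLinearMap.isSelfAdjoint_iff'.mpr <| ContinuousLinearMap.ext fun x =>
    e.ext_inner fun i => ?_
  rw [ContinuousLinearMap.adjoint_inner_right, hA.apply_basis, real_inner_smul_left, hA]

end IsDiagonal

end HilbertBasis

theorem Orthonormal.summable_inner_sq {ι E : Type*} [NormedAddCommGroup E] [InnerProductSpace ℝ E]
    {f : ι → E} (hf : Orthonormal ℝ f) (x : E) : Summable fun i => ⟪f i, x⟫ ^ 2 := by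
  simpa only [Real.norm_eq_abs, sq_abs] using hf.inner_products_summable x

theorem Orthonormal.hasSum_inner_sq_of_mem_closure_span {ι E : Type*} [NormedAddCommGroup E]
    [InnerProductSpace ℝ E] [CompleteSpace E] {f : ι → E} (hf : Orthonormal ℝ f) {v : E}
    (hv : v ∈ (Submodule.span ℝ (Set.range f)).topologicalClosure) :
    HasSum (fun i => ⟪f i, v⟫ ^ 2) (‖v‖ ^ 2) := by
  classical
  have hV := hf.orthogonalFamily
  obtain ⟨c, rfl⟩ : ∃ c, hV.linearIsometry c = v := by
    rw [Submodule.span_range_eq_iSup] at hv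
    simp_rw [LinearMap.span_singleton_eq_range] at hv
    exact LinearMap.mem_range.mp (hV.range_linearIsometry ▸ hv)
  have hc (i) : ⟪f i, hV.linearIsometry c⟫ = c i := by
    have hfi : f i = hV.linearIsometry (lp.single 2 i 1) := by simp
    rw [hfi, LinearIsometry.inner_map_map, lp.inner_single_left, RCLike.inner_apply', conj_trivial,
      one_mul]
  have hcc := lp.hasSum_inner (𝕜 := ℝ) c c
  rw [real_inner_self_eq_norm_sq, ← hV.linearIsometry.norm_map] at hcc
  refine hcc.congr_fun fun i => ?_
  rw [hc, real_inner_self_eq_norm_sq, Real.norm_eq_abs, sq_abs]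

namespace ContinuousLinearMap

variable {ι X Y : Type*} [NormedAddCommGroup X] [InnerProductSpace ℝ X]
  [NormedAddCommGroup Y] [InnerProductSpace ℝ Y]
  {T : X →L[ℝ] Y} {e : HilbertBasis ι ℝ X} {f : ι → Y} {τ : ι → ℝ}

theorem map_basis_of_eq_tsum (hT : ∀ x, T x = ∑' i, (τ i * ⟪e i, x⟫) • f i) (i : ι) :
    T (e i) = τ i • f i := by
  rw [hT, tsum_eq_single i fun j hj => by rw [e.orthonormal.inner_eq_zero hj, mul_zero, zero_smul],
    real_inner_self_eq_norm_sq, e.orthonormal.norm_eq_one, one_pow, mul_one]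

theorem apply_mem_closure_span_of_eq_tsum (hT : ∀ x, T x = ∑' i, (τ i * ⟪e i, x⟫) • f i) (x : X) :
    T x ∈ (Submodule.span ℝ (Set.range f)).topologicalClosure := by
  rw [hT]
  exact tsum_mem (Submodule.isClosed_topologicalClosure _) fun i =>
    Submodule.le_topologicalClosure _ (Submodule.smul_mem _ _ (Submodule.subset_span ⟨i, rfl⟩))

variable [CompleteSpace X] [CompleteSpace Y]

theorem inner_adjoint_apply_basis (hTe : ∀ i, T (e i) = τ i • f i) (y : Y) (i : ι) :
    ⟪adjoint T y, e i⟫ = τ i * ⟪f i, y⟫ := by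
  rw [adjoint_inner_left, hTe, real_inner_smul_right, real_inner_comm]

theorem adjoint_apply_of_map_basis (hf : Orthonormal ℝ f) (hTe : ∀ i, T (e i) = τ i • f i)
    (i : ι) : adjoint T (f i) = τ i • e i := by
  classical
  refine e.ext_inner fun j => ?_
  rw [real_inner_comm, inner_adjoint_apply_basis hTe, real_inner_smul_right,
    orthonormal_iff_ite.mp hf, orthonormal_iff_ite.mp e.orthonormal]
  split_ifs with h <;> simp [h]

theorem inner_apply_of_map_basis (hf : Orthonormal ℝ f) (hTe : ∀ i, T (e i) = τ i • f i)
    (x : X) (i : ι) : ⟪f i, T x⟫ = τ i * ⟪e i, x⟫ := by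
  rw [← adjoint_inner_left, adjoint_apply_of_map_basis hf hTe, real_inner_smul_left]

theorem isDiagonal_adjoint_comp_self (hf : Orthonormal ℝ f) (hTe : ∀ i, T (e i) = τ i • f i) :
    e.IsDiagonal (fun i => τ i ^ 2) (adjoint T ∘L T) := fun x i => by
  rw [comp_apply, adjoint_inner_right, hTe, real_inner_smul_left,
    inner_apply_of_map_basis hf hTe, ← mul_assoc, ← sq]

theorem isDiagonal_sqrt_adjoint_comp_self_sqrt_add_smul_one (hf : Orthonormal ℝ f)
    (hTe : ∀ i, T (e i) = τ i • f i) {c : ι → ℝ} (hc : ∀ i, 0 ≤ c i) {S : X →L[ℝ] X}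
    (hS : e.IsDiagonal (fun i => √(c i)) S) (σ : ℝ) :
    e.IsDiagonal (fun i => c i * τ i ^ 2 + σ ^ 2) (S ∘L adjoint T ∘L T ∘L S + σ ^ 2 • 1) :=
  ((hS.comp ((isDiagonal_adjoint_comp_self hf hTe).comp hS)).add
    (HilbertBasis.IsDiagonal.one.smul _)).congr fun i => by
      linear_combination τ i ^ 2 * Real.mul_self_sqrt (hc i)

theorem hasSum_sq_sub_of_eq_tsum (hf : Orthonormal ℝ f)
    (hT : ∀ x, T x = ∑' i, (τ i * ⟪e i, x⟫) • f i) {Φ : Y}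
    (hΦ : Φ ∈ (Submodule.span ℝ (Set.range f)).topologicalClosure) (x : X) :
    HasSum (fun i => (τ i * ⟪e i, x⟫ - ⟪f i, Φ⟫) ^ 2) (‖T x - Φ‖ ^ 2) := by
  refine (hf.hasSum_inner_sq_of_mem_closure_span
    (Submodule.sub_mem _ (apply_mem_closure_span_of_eq_tsum hT x) hΦ)).congr_fun fun i => ?_
  rw [inner_sub_right, inner_apply_of_map_basis hf (map_basis_of_eq_tsum hT)]

end ContinuousLinearMap

/-- The `f_k`-coefficient of `Φ_MAP(diag c)`, with `τ = τ_k`, `c = c_k` and `φ = ⟪e_k, φ⟫`. -/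
noncomputable def mapCoeff (τ σ φ c : ℝ) : ℝ := τ * c * φ / (c * τ ^ 2 + σ ^ 2)

theorem tendsto_mapCoeff_atTop {τ : ℝ} (hτ : τ ≠ 0) (σ φ : ℝ) :
    Tendsto (mapCoeff τ σ φ) atTop (𝓝 (φ / τ)) := by
  have hlim : Tendsto (fun c : ℝ => τ * φ / (τ ^ 2 + σ ^ 2 / c)) atTop (𝓝 (τ * φ / (τ ^ 2 + 0))) :=
    tendsto_const_nhds.div (tendsto_const_nhds.add (tendsto_const_nhds.div_atTop tendsto_id))
      (by positivity)
  rw [add_zero, show τ * φ / τ ^ 2 = φ / τ by field_simp] at hlim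
  refine hlim.congr' ?_
  filter_upwards [eventually_gt_atTop 0] with c hc
  rw [mapCoeff]
  field_simp

theorem mapCoeff_sq_le {σ : ℝ} (hσ : 0 < σ) (τ φ : ℝ) {c : ℝ} (hc : 0 ≤ c) :
    mapCoeff τ σ φ c ^ 2 ≤ c * φ ^ 2 / (4 * σ ^ 2) := by
  rw [mapCoeff, div_pow, div_le_div_iff₀ (by positivity) (by positivity)]
  nlinarith [mul_nonneg (mul_nonneg hc (sq_nonneg φ)) (sq_nonneg (c * τ ^ 2 - σ ^ 2))]

theorem exists_pos_sq_mapCoeff_sub_lt {τ σ φ d : ℝ} (hτ : 0 < τ) (hσ : 0 < σ)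
    (ha : τ * d = 0 → φ = 0) (hb : τ * d ≠ 0 → φ - τ * d ≠ 0 → 0 < τ * d / (φ - τ * d))
    {ε : ℝ} (hε : 0 < ε) : ∃ c, 0 < c ∧ (mapCoeff τ σ φ c - d) ^ 2 < ε := by
  by_cases hd : τ * d = 0
  · refine ⟨1, one_pos, ?_⟩
    rw [mapCoeff, ha hd, mul_zero, zero_div, (mul_eq_zero.mp hd).resolve_left hτ.ne']
    simpa using hε
  by_cases hφ : φ - τ * d = 0
  · -- no finite variance is exact, but the limit `c → ∞` is `φ / τ = d`
    have hlim := ((tendsto_mapCoeff_atTop hτ.ne' σ φ).sub_const d).pow 2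
    have hφd : φ / τ = d := by rw [div_eq_iff hτ.ne']; linarith
    rw [hφd, sub_self, zero_pow two_ne_zero] at hlim
    exact ((hlim.eventually (gt_mem_nhds hε)).and (eventually_gt_atTop 0)).exists.imp
      fun c hc => ⟨hc.2, hc.1⟩
  · have hφ0 : φ ≠ 0 := by
      rintro rfl
      have := hb hd hφ
      rw [zero_sub, div_neg, div_self hd] at this
      norm_num at this
    -- the exact variance `σ² d / (τ (φ - τ d))`, written so that (b) gives its sign
    refine ⟨σ ^ 2 / τ ^ 2 * (τ * d / (φ - τ * d)), mul_pos (by positivity) (hb hd hφ), ?_⟩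
    have hexact : mapCoeff τ σ φ (σ ^ 2 / τ ^ 2 * (τ * d / (φ - τ * d))) = d := by
      rw [mapCoeff]
      field_simp
      rw [add_sub_cancel, mul_div_cancel_right₀ d hφ0]
    rwa [hexact, sub_self, sq, zero_mul]

theorem sq_mapCoeff_sub_le {σ : ℝ} (hσ : 0 < σ) (τ φ d : ℝ) {c : ℝ} (hc₀ : 0 ≤ c) (hc₁ : c ≤ 1) :
    (mapCoeff τ σ φ c - d) ^ 2 ≤ φ ^ 2 / (2 * σ ^ 2) + 2 * d ^ 2 := by
  have h := mapCoeff_sq_le hσ τ φ hc₀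
  have hφ : c * φ ^ 2 / (4 * σ ^ 2) ≤ φ ^ 2 / (4 * σ ^ 2) := by
    gcongr
    exact mul_le_of_le_one_left (sq_nonneg φ) hc₁
  have h2 : φ ^ 2 / (2 * σ ^ 2) = 2 * (φ ^ 2 / (4 * σ ^ 2)) := by field_simp; ring
  nlinarith [sq_nonneg (mapCoeff τ σ φ c + d)]

theorem exists_pos_summable_tendsto_tsum_sq_mapCoeff_sub {τ φ d : ℕ → ℝ} {σ : ℝ}
    (hτ : ∀ k, 0 < τ k) (hσ : 0 < σ)
    (hφ : Summable fun k => φ k ^ 2) (hd : Summable fun k => d k ^ 2)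
    (ha : ∀ k, τ k * d k = 0 → φ k = 0)
    (hb : ∀ k, τ k * d k ≠ 0 → φ k - τ k * d k ≠ 0 → 0 < τ k * d k / (φ k - τ k * d k)) :
    ∃ c : ℕ → ℕ → ℝ, (∀ n k, 0 < c n k) ∧ (∀ n, Summable (c n)) ∧
      Tendsto (fun n => ∑' k, (mapCoeff (τ k) σ (φ k) (c n k) - d k) ^ 2) atTop (𝓝 0) := by
  choose c₀ hc₀_pos hc₀ using fun n k : ℕ =>
    exists_pos_sq_mapCoeff_sub_lt (hτ k) hσ (ha k) (hb k) (pow_pos one_half_pos (n + k))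
  let c n k : ℝ := if k ≤ n then c₀ n k else (1 / 2) ^ k
  have head n k (hk : k ≤ n) : (mapCoeff (τ k) σ (φ k) (c n k) - d k) ^ 2 < (1 / 2) ^ (n + k) := by
    simpa only [c, if_pos hk] using hc₀ n k
  have tail n k (hk : n < k) : c n k = (1 / 2) ^ k := if_neg hk.not_ge
  have hc_pos n k : 0 < c n k := by
    rcases le_or_gt k n with hk | hk
    · simpa only [c, if_pos hk] using hc₀_pos n k
    · exact tail n k hk ▸ by positivity
  refine ⟨c, hc_pos, fun n => ?_, ?_⟩
  · refine summable_geometric_two.congr_atTop ?_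
    filter_upwards [eventually_gt_atTop n] with k hk
    rw [tail n k hk, one_div, inv_pow]
  have hbound n k : (mapCoeff (τ k) σ (φ k) (c n k) - d k) ^ 2
      ≤ (1 / 2) ^ k + (φ k ^ 2 / (2 * σ ^ 2) + 2 * d k ^ 2) := by
    rcases le_or_gt k n with hk | hk
    · have hhead := (head n k hk).le.trans
        (pow_le_pow_of_le_one (by norm_num) (by norm_num) (Nat.le_add_left k n))
      have : 0 ≤ φ k ^ 2 / (2 * σ ^ 2) + 2 * d k ^ 2 := by positivity
      linarith
    · have htail := sq_mapCoeff_sub_le hσ (τ k) (φ k) (d k) (hc_pos n k).le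
        (tail n k hk ▸ pow_le_one₀ (by norm_num) (by norm_num))
      have : (0 : ℝ) ≤ (1 / 2) ^ k := by positivity
      linarith
  have hlim k : Tendsto (fun n => (mapCoeff (τ k) σ (φ k) (c n k) - d k) ^ 2) atTop (𝓝 0) := by
    refine squeeze_zero' (.of_forall fun n => sq_nonneg _) ?_
      ((tendsto_pow_atTop_nhds_zero_of_lt_one (r := (1 / 2 : ℝ)) (by norm_num) (by norm_num)).comp
        (tendsto_add_atTop_nat k))
    filter_upwards [eventually_ge_atTop k] with n hn
    exact (head n k hn).le
  simpa using tendsto_tsum_of_dominated_convergence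
    (summable_geometric_two.add ((hφ.div_const _).add (hd.mul_left 2)))
    hlim (.of_forall fun n k => by rw [Real.norm_of_nonneg (sq_nonneg _)]; exact hbound n k)

theorem HilbertBasis.IsDiagonal.mul_inner_sqrt_inv_sqrt_eq_mapCoeff {ι X : Type*}
    [NormedAddCommGroup X] [InnerProductSpace ℝ X] {e : HilbertBasis ι ℝ X} {c τ : ι → ℝ} {σ : ℝ}
    {S B : X →L[ℝ] X}
    (hc : ∀ i, 0 ≤ c i) (hS : e.IsDiagonal (fun i => √(c i)) S)
    (hB : e.IsDiagonal (fun i => (c i * τ i ^ 2 + σ ^ 2)⁻¹) B) (x : X) (i : ι) :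
    τ i * ⟪e i, S (B (S x))⟫ = mapCoeff (τ i) σ ⟪e i, x⟫ (c i) := by
  rw [hS, hB, hS, mapCoeff, div_eq_mul_inv]
  linear_combination (τ i * ⟪e i, x⟫ * (c i * τ i ^ 2 + σ ^ 2)⁻¹) * Real.mul_self_sqrt (hc i)

theorem exists_prior_covariances_probe_tendsto_optimal_general
    {X Y : Type*}
    [NormedAddCommGroup X] [InnerProductSpace ℝ X] [CompleteSpace X]
    [NormedAddCommGroup Y] [InnerProductSpace ℝ Y] [CompleteSpace Y]
    (T : X →L[ℝ] Y)
    -- singular system of `T`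
    (e : HilbertBasis ℕ ℝ X) (f : ℕ → Y) (hf : Orthonormal ℝ f)
    (τ : ℕ → ℝ) (hτpos : ∀ k, 0 < τ k)
    (hT : ∀ x : X, T x = ∑' k : ℕ, (τ k * ⟪e k, x⟫) • f k)
    (σ : ℝ) (hσ : 0 < σ) (φ : X)
    (Φdag : Y) (hΦdagmem : Φdag ∈ (Submodule.span ℝ (Set.range f)).topologicalClosure)
    -- condition (a)
    (ha : ∀ k : ℕ, ⟪(ContinuousLinearMap.adjoint T) Φdag, e k⟫ = 0 → ⟪φ, e k⟫ = 0)
    -- condition (b)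
    (hb : ∀ k : ℕ, ⟪(ContinuousLinearMap.adjoint T) Φdag, e k⟫ ≠ 0 →
      ⟪φ - (ContinuousLinearMap.adjoint T) Φdag, e k⟫ ≠ 0 →
      0 < ⟪(ContinuousLinearMap.adjoint T) Φdag, e k⟫
        / ⟪φ - (ContinuousLinearMap.adjoint T) Φdag, e k⟫) :
    ∃ C S B : ℕ → (X →L[ℝ] X),
      (∀ n, IsSelfAdjoint (C n))
      ∧ (∀ n, ∀ x : X, x ≠ 0 → 0 < ⟪(C n) x, x⟫)
      -- trace class (as `C n` is positive, this is summability of the diagonal):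
      ∧ (∀ n, Summable fun k : ℕ => ⟪(C n) (e k), e k⟫)
      ∧ (∀ n, C n ∘L ((ContinuousLinearMap.adjoint T) ∘L T)
          = ((ContinuousLinearMap.adjoint T) ∘L T) ∘L C n)
      -- `S n` is the positive square root of `C n`:
      ∧ (∀ n, IsSelfAdjoint (S n) ∧ (∀ x : X, 0 ≤ ⟪(S n) x, x⟫) ∧ S n ∘L S n = C n)
      -- `B n` is the inverse of `C_n^{1/2} T* T C_n^{1/2} + σ² Id`:
      ∧ (∀ n, B n ∘L (S n ∘L (ContinuousLinearMap.adjoint T) ∘L T ∘L S n + σ ^ 2 • 1) = 1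
          ∧ (S n ∘L (ContinuousLinearMap.adjoint T) ∘L T ∘L S n + σ ^ 2 • 1) ∘L B n = 1)
      ∧ Filter.Tendsto (fun n => ‖T ((S n) ((B n) ((S n) φ))) - Φdag‖)
          Filter.atTop (nhds 0) := by
  have hTe := T.map_basis_of_eq_tsum hT
  have hTΦ k := T.inner_adjoint_apply_basis hTe Φdag k
  have hφTΦ k : ⟪φ - T.adjoint Φdag, e k⟫ = ⟪e k, φ⟫ - τ k * ⟪f k, Φdag⟫ := by
    rw [inner_sub_left, hTΦ, real_inner_comm]
  obtain ⟨c, hc_pos, hc_sum, hc_lim⟩ := exists_pos_summable_tendsto_tsum_sq_mapCoeff_sub hτpos hσ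
    (e.orthonormal.summable_inner_sq φ) (hf.summable_inner_sq Φdag)
    (fun k => by simpa only [hTΦ, real_inner_comm φ] using ha k)
    (fun k => by simpa only [hTΦ, hφTΦ] using hb k)
  choose C S B hC hS hB using fun n => e.exists_isDiagonal_variance_sqrt_inv (hc_pos n)
    (fun k => (hc_sum n).le_tsum k fun j _ => (hc_pos n j).le) τ hσ.ne'
  have hden n k : c n k * τ k ^ 2 + σ ^ 2 ≠ 0 := by have := hc_pos n k; positivity
  have hM n := T.isDiagonal_sqrt_adjoint_comp_self_sqrt_add_smul_one hf hTe
    (fun k => (hc_pos n k).le) (hS n) σ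
  refine ⟨C, S, B, fun n => (hC n).isSelfAdjoint,
    fun n _ hx => (hC n).inner_apply_self_pos (hc_pos n) hx,
    fun n => by simpa only [(hC n).inner_apply_basis] using hc_sum n,
    fun n => (hC n).commute (T.isDiagonal_adjoint_comp_self hf hTe),
    fun n => ⟨(hS n).isSelfAdjoint, (hS n).inner_apply_self_nonneg fun k => Real.sqrt_nonneg _,
      ((hS n).comp (hS n)).eq_of_forall (hC n) fun k => Real.mul_self_sqrt (hc_pos n k).le⟩,
    fun n => ⟨(hB n).comp_eq_one (hM n) fun k => inv_mul_cancel₀ (hden n k),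
      (hM n).comp_eq_one (hB n) fun k => mul_inv_cancel₀ (hden n k)⟩, ?_⟩
  have hnorm n : ‖T (S n (B n (S n φ))) - Φdag‖ ^ 2
      = ∑' k, (mapCoeff (τ k) σ ⟪e k, φ⟫ (c n k) - ⟪f k, Φdag⟫) ^ 2 := by
    simp only [← (T.hasSum_sq_sub_of_eq_tsum hf hT hΦdagmem _).tsum_eq,
      (hS n).mul_inner_sqrt_inv_sqrt_eq_mapCoeff (fun k => (hc_pos n k).le) (hB n)]
  simpa only [← hnorm, Real.sqrt_sq (norm_nonneg _), Real.sqrt_zero] using hc_lim.sqrt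

/-- Given a compact injective operator `T` with singular system `(τ_k, e_k, f_k)`,
`σ > 0`, `φ ∈ X`, and `Φ† ∈ Y` in the closed linear span of the `f_k` satisfying the
compatibility conditions (a) and (b) below, there exists a sequence `(C_n)` of
self-adjoint, positive definite, trace-class operators on `X`, each commuting with
`T*T`, such that `‖Φ_MAP(C_n) − Φ†‖ → 0`, where
`Φ_MAP(C) = T C^{1/2}(C^{1/2}T*TC^{1/2} + σ²Id)⁻¹ C^{1/2}φ`.  In the conclusion,
`S n` denotes the positive square root of `C n`, and `B n` the inverse
`(C_n^{1/2}T*TC_n^{1/2} + σ²Id)⁻¹`; since each `C n` is a positive operator, the trace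
condition is expressed as summability of `k ↦ ⟨C_n e_k, e_k⟩` over the orthonormal
basis `(e_k)`. -/
theorem exists_prior_covariances_probe_tendsto_optimal
    {X Y : Type*}
    [NormedAddCommGroup X] [InnerProductSpace ℝ X] [CompleteSpace X]
    [TopologicalSpace.SeparableSpace X]
    [NormedAddCommGroup Y] [InnerProductSpace ℝ Y] [CompleteSpace Y]
    [TopologicalSpace.SeparableSpace Y]
    (T : X →L[ℝ] Y) (hTinj : Function.Injective T) (hTcomp : IsCompactOperator T)
    -- singular system of `T`
    (e : HilbertBasis ℕ ℝ X) (f : ℕ → Y) (hf : Orthonormal ℝ f)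
    (τ : ℕ → ℝ) (hτpos : ∀ k, 0 < τ k)
    (hT : ∀ x : X, T x = ∑' k : ℕ, (τ k * ⟪e k, x⟫) • f k)
    (σ : ℝ) (hσ : 0 < σ) (φ : X)
    (Φdag : Y) (hΦdagmem : Φdag ∈ (Submodule.span ℝ (Set.range f)).topologicalClosure)
    -- condition (a)
    (ha : ∀ k : ℕ, ⟪(ContinuousLinearMap.adjoint T) Φdag, e k⟫ = 0 → ⟪φ, e k⟫ = 0)
    -- condition (b)
    (hb : ∀ k : ℕ, ⟪(ContinuousLinearMap.adjoint T) Φdag, e k⟫ ≠ 0 →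
      ⟪φ - (ContinuousLinearMap.adjoint T) Φdag, e k⟫ ≠ 0 →
      0 < ⟪(ContinuousLinearMap.adjoint T) Φdag, e k⟫
        / ⟪φ - (ContinuousLinearMap.adjoint T) Φdag, e k⟫) :
    ∃ C S B : ℕ → (X →L[ℝ] X),
      (∀ n, IsSelfAdjoint (C n))
      ∧ (∀ n, ∀ x : X, x ≠ 0 → 0 < ⟪(C n) x, x⟫)
      -- trace class (as `C n` is positive, this is summability of the diagonal):
      ∧ (∀ n, Summable fun k : ℕ => ⟪(C n) (e k), e k⟫)
      ∧ (∀ n, C n ∘L ((ContinuousLinearMap.adjoint T) ∘L T)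
          = ((ContinuousLinearMap.adjoint T) ∘L T) ∘L C n)
      -- `S n` is the positive square root of `C n`:
      ∧ (∀ n, IsSelfAdjoint (S n) ∧ (∀ x : X, 0 ≤ ⟪(S n) x, x⟫) ∧ S n ∘L S n = C n)
      -- `B n` is the inverse of `C_n^{1/2} T* T C_n^{1/2} + σ² Id`:
      ∧ (∀ n, B n ∘L (S n ∘L (ContinuousLinearMap.adjoint T) ∘L T ∘L S n + σ ^ 2 • 1) = 1
          ∧ (S n ∘L (ContinuousLinearMap.adjoint T) ∘L T ∘L S n + σ ^ 2 • 1) ∘L B n = 1)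
      ∧ Filter.Tendsto (fun n => ‖T ((S n) ((B n) ((S n) φ))) - Φdag‖)
          Filter.atTop (nhds 0) :=
  exists_prior_covariances_probe_tendsto_optimal_general T e f hf τ hτpos hT σ hσ φ Φdag hΦdagmem ha
    hb
end

section
/- For every k ∈ ℕ, the probe element satisfies ⟨Φ_MAP, f_k⟩_Y = (τ_k ρ_k/(τ_k² ρ_k + σ²))·⟨φ, e_k⟩_X, and Φ_MAP is orthogonal to the orthogonal complement of the closed linear span of (f_k)_{k∈ℕ}; that is, Φ_MAP = Σ_k (τ_k ρ_k/(τ_k² ρ_k + σ²))⟨φ, e_k⟩ f_k. -/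
/-!
In the singular system everything is diagonal: `T e_k = τ_k f_k`, `T* f_k = τ_k e_k`, and since
`S ≥ 0` squares to `C₀`, `S e_k = √ρ_k e_k`. Hence `e_k` is an eigenvector, with eigenvalue
`τ_k² ρ_k + σ²`, of the symmetric operator `A = S T* T S + σ² Id`, and symmetry turns `A B = Id`
into `⟪e_k, B y⟫ = ⟪e_k, y⟫ / (τ_k² ρ_k + σ²)`. Together with `⟪T x, f_k⟫ = τ_k ⟪e_k, x⟫` this
gives the coefficients, and the expansion of `T` gives the series.
-/

open scoped RealInnerProductSpace

section SingularExpansion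

variable {ι X Y : Type*} [NormedAddCommGroup X] [InnerProductSpace ℝ X]
  [NormedAddCommGroup Y] [InnerProductSpace ℝ Y]
  {T : X →L[ℝ] Y} {e : ι → X} {f : ι → Y} {τ : ι → ℝ}

theorem apply_eq_smul_of_forall_eq_tsum (he : Orthonormal ℝ e)
    (hT : ∀ x, T x = ∑' k, (τ k * ⟪e k, x⟫) • f k) (k : ι) : T (e k) = τ k • f k := by
  rw [hT, tsum_eq_single k fun j hj => by rw [he.inner_eq_zero hj, mul_zero, zero_smul],
    real_inner_self_eq_norm_sq, he.1 k, one_pow, mul_one]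

theorem abs_le_opNorm_of_forall_eq_tsum (he : Orthonormal ℝ e) (hf : Orthonormal ℝ f)
    (hT : ∀ x, T x = ∑' k, (τ k * ⟪e k, x⟫) • f k) (k : ι) : |τ k| ≤ ‖T‖ := by
  simpa [apply_eq_smul_of_forall_eq_tsum he hT, norm_smul, hf.1 k, he.1 k] using T.le_opNorm (e k)

theorem summable_of_forall_eq_tsum [CompleteSpace Y] (he : Orthonormal ℝ e)
    (hf : Orthonormal ℝ f) (hT : ∀ x, T x = ∑' k, (τ k * ⟪e k, x⟫) • f k) (x : X) :
    Summable fun k => (τ k * ⟪e k, x⟫) • f k := by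
  refine (hf.orthogonalFamily.summable_iff_norm_sq_summable fun k => τ k * ⟪e k, x⟫).mpr <|
    .of_nonneg_of_le (fun _ => by positivity) (fun k => ?_)
      ((he.inner_products_summable x).mul_left (‖T‖ ^ 2))
  rw [norm_mul, mul_pow, Real.norm_eq_abs]
  gcongr
  exact abs_le_opNorm_of_forall_eq_tsum he hf hT k

theorem inner_apply_of_forall_eq_tsum [CompleteSpace Y] (he : Orthonormal ℝ e)
    (hf : Orthonormal ℝ f) (hT : ∀ x, T x = ∑' k, (τ k * ⟪e k, x⟫) • f k) (x : X) (k : ι) :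
    ⟪T x, f k⟫ = τ k * ⟪e k, x⟫ := by
  have h := (innerSL ℝ (f k)).map_tsum (summable_of_forall_eq_tsum he hf hT x)
  simp only [innerSL_apply_apply] at h
  rw [real_inner_comm, hT, h,
    tsum_eq_single k fun j hj => by simp [real_inner_smul_right, hf.inner_eq_zero hj.symm]]
  simp [real_inner_smul_right, hf.1 k]

theorem adjoint_apply_of_forall_eq_tsum [CompleteSpace X] [CompleteSpace Y]
    (he : Orthonormal ℝ e) (hf : Orthonormal ℝ f)
    (hT : ∀ x, T x = ∑' k, (τ k * ⟪e k, x⟫) • f k) (k : ι) :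
    ContinuousLinearMap.adjoint T (f k) = τ k • e k :=
  ext_inner_right ℝ fun y => by
    rw [ContinuousLinearMap.adjoint_inner_left, real_inner_comm,
      inner_apply_of_forall_eq_tsum he hf hT, real_inner_smul_left]

end SingularExpansion

section RegularizedNormalOperator

variable {X Y : Type*} [NormedAddCommGroup X] [InnerProductSpace ℝ X]
  [NormedAddCommGroup Y] [InnerProductSpace ℝ Y]

theorem apply_eq_sqrt_smul_of_apply_apply_eq_smul {S : X →L[ℝ] X} (hS : ∀ x, 0 ≤ ⟪S x, x⟫)
    {ρ : ℝ} (hρ : 0 < ρ) {v : X} (hv : S (S v) = ρ • v) : S v = √ρ • v := by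
  set w := S v - √ρ • v
  have hSw : S w = -(√ρ • w) := by
    rw [map_sub, map_smul, hv, smul_sub, smul_smul, Real.mul_self_sqrt hρ.le, neg_sub]
  have hw : ⟪w, w⟫ ≤ 0 := by
    have := hS w
    rw [hSw, inner_neg_left, real_inner_smul_left] at this
    nlinarith [Real.sqrt_pos.mpr hρ, real_inner_self_nonneg (x := w)]
  exact sub_eq_zero.mp (real_inner_self_nonpos.mp hw)

theorem isPositive_conj_adjoint_comp_self_add_smul_one [CompleteSpace X] [CompleteSpace Y]
    {S : X →L[ℝ] X} (hS : IsSelfAdjoint S) (T : X →L[ℝ] Y) {c : ℝ} (hc : 0 ≤ c) :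
    (S ∘L ContinuousLinearMap.adjoint T ∘L T ∘L S + c • 1).IsPositive := by
  have := (T.isPositive_adjoint_comp_self.adjoint_conj S).add
    (ContinuousLinearMap.isPositive_one.smul_of_nonneg hc)
  rwa [hS.adjoint_eq] at this

theorem conj_adjoint_comp_self_add_smul_one_apply [CompleteSpace X] [CompleteSpace Y]
    {S : X →L[ℝ] X} {T : X →L[ℝ] Y} {v : X} {w : Y} {s t : ℝ} (c : ℝ)
    (hS : S v = s • v) (hT : T v = t • w) (hT' : ContinuousLinearMap.adjoint T w = t • v) :
    (S ∘L ContinuousLinearMap.adjoint T ∘L T ∘L S + c • 1) v = (t ^ 2 * s ^ 2 + c) • v := by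
  simp only [add_apply, ContinuousLinearMap.comp_apply, smul_apply, one_apply_eq_self, hS,
    map_smul, hT, hT', smul_smul, add_smul]
  ring_nf

theorem LinearMap.IsSymmetric.inner_apply_rightInverse {A B : X →L[ℝ] X}
    (hA : (A : X →ₗ[ℝ] X).IsSymmetric) (hAB : Function.RightInverse B A) {μ : ℝ} {v : X}
    (hv : A v = μ • v) (hμ : μ ≠ 0) (y : X) : ⟪v, B y⟫ = μ⁻¹ * ⟪v, y⟫ := by
  calc ⟪v, B y⟫ = μ⁻¹ * ⟪μ • v, B y⟫ := by rw [real_inner_smul_left, inv_mul_cancel_left₀ hμ]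
    _ = μ⁻¹ * ⟪v, y⟫ := by rw [← hv, hA.apply_clm, hAB y]

end RegularizedNormalOperator

theorem probe_element_spectral_representation_general
    {X Y : Type*}
    [NormedAddCommGroup X] [InnerProductSpace ℝ X] [CompleteSpace X]
    [NormedAddCommGroup Y] [InnerProductSpace ℝ Y] [CompleteSpace Y]
    (T : X →L[ℝ] Y)
    -- singular system of `T`
    (e : ℕ → X) (he : Orthonormal ℝ e)
    (f : ℕ → Y) (hf : Orthonormal ℝ f)
    (τ : ℕ → ℝ)
    (hT : ∀ x : X, T x = ∑' k : ℕ, (τ k * ⟪e k, x⟫) • f k)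
    -- `C₀` is diagonal on the `e_k`
    (C₀ : X →L[ℝ] X)
    (ρ : ℕ → ℝ) (hρpos : ∀ k, 0 < ρ k) (hC₀e : ∀ k, C₀ (e k) = ρ k • e k)
    (σ : ℝ) (hσ : 0 < σ) (φ : X)
    -- `S` is the positive square root `C₀^{1/2}` of `C₀`
    (S : X →L[ℝ] X) (hSsa : IsSelfAdjoint S) (hSpos : ∀ x : X, 0 ≤ ⟪S x, x⟫)
    (hS : S ∘L S = C₀)
    -- `B` is the inverse of `C₀^{1/2} T* T C₀^{1/2} + σ² Id`
    (B : X →L[ℝ] X)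
    (hB' : (S ∘L (ContinuousLinearMap.adjoint T) ∘L T ∘L S + σ ^ 2 • 1) ∘L B = 1) :
    (∀ k : ℕ, ⟪T (S (B (S φ))), f k⟫
        = τ k * ρ k / ((τ k) ^ 2 * ρ k + σ ^ 2) * ⟪φ, e k⟫)
    ∧ T (S (B (S φ)))
        = ∑' k : ℕ, (τ k * ρ k / ((τ k) ^ 2 * ρ k + σ ^ 2) * ⟪φ, e k⟫) • f k := by
  set A := S ∘L ContinuousLinearMap.adjoint T ∘L T ∘L S + σ ^ 2 • 1
  have hSe (k : ℕ) : S (e k) = √(ρ k) • e k :=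
    apply_eq_sqrt_smul_of_apply_apply_eq_smul hSpos (hρpos k) (by
      rw [← ContinuousLinearMap.comp_apply, hS, hC₀e])
  have hAe (k : ℕ) : A (e k) = (τ k ^ 2 * ρ k + σ ^ 2) • e k := by
    rw [conj_adjoint_comp_self_add_smul_one_apply _ (hSe k)
      (apply_eq_smul_of_forall_eq_tsum he hT k) (adjoint_apply_of_forall_eq_tsum he hf hT k),
      Real.sq_sqrt (hρpos k).le]
  have hA := (isPositive_conj_adjoint_comp_self_add_smul_one hSsa T (sq_nonneg σ)).isSymmetric
  have hBA : Function.RightInverse B A := fun y => congr($hB' y)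
  have coeff (k : ℕ) : ⟪T (S (B (S φ))), f k⟫
      = τ k * ρ k / ((τ k) ^ 2 * ρ k + σ ^ 2) * ⟪φ, e k⟫ := by
    have hSinner (x : X) : ⟪e k, S x⟫ = √(ρ k) * ⟪e k, x⟫ := by
      rw [← hSsa.isSymmetric.apply_clm, hSe k, real_inner_smul_left]
    rw [inner_apply_of_forall_eq_tsum he hf hT, hSinner,
      hA.inner_apply_rightInverse hBA (hAe k)
        (add_pos_of_nonneg_of_pos (by nlinarith [hρpos k]) (pow_pos hσ 2)).ne', hSinner,
      real_inner_comm, div_eq_mul_inv]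
    linear_combination (τ k * (τ k ^ 2 * ρ k + σ ^ 2)⁻¹ * ⟪φ, e k⟫) *
      Real.mul_self_sqrt (hρpos k).le
  refine ⟨coeff, ?_⟩
  rw [hT]
  exact tsum_congr fun k => by rw [← inner_apply_of_forall_eq_tsum he hf hT, coeff]

/-- Spectral representation of the probe element: for every `k`,
`⟨Φ_MAP, f_k⟩ = (τ_k ρ_k/(τ_k² ρ_k + σ²))⟨φ, e_k⟩`, and
`Φ_MAP = Σ_k (τ_k ρ_k/(τ_k² ρ_k + σ²))⟨φ, e_k⟩ f_k` (in particular `Φ_MAP` is orthogonal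
to the orthogonal complement of the closed linear span of the `f_k`).  Here `T` is a
compact operator with singular system `(τ_k, e_k, f_k)`, where `(e_k)` is an orthonormal
basis of `(ker T)^⊥`, `C₀ e_k = ρ_k e_k`, `C₀` maps `ker T` into `ker T`,
`Φ_MAP = T C₀^{1/2}(C₀^{1/2}T*TC₀^{1/2} + σ²Id)⁻¹ C₀^{1/2}φ`, `S` denotes the positive
square root `C₀^{1/2}` of `C₀`, and `B` the inverse `(C₀^{1/2}T*TC₀^{1/2} + σ²Id)⁻¹`. -/
theorem probe_element_spectral_representation
    {X Y : Type*}
    [NormedAddCommGroup X] [InnerProductSpace ℝ X] [CompleteSpace X]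
    [TopologicalSpace.SeparableSpace X]
    [NormedAddCommGroup Y] [InnerProductSpace ℝ Y] [CompleteSpace Y]
    [TopologicalSpace.SeparableSpace Y]
    (T : X →L[ℝ] Y) (hTcomp : IsCompactOperator T)
    -- singular system of `T`
    (e : ℕ → X) (he : Orthonormal ℝ e)
    (hespan : (Submodule.span ℝ (Set.range e)).topologicalClosure
      = (LinearMap.ker (T : X →ₗ[ℝ] Y))ᗮ)
    (f : ℕ → Y) (hf : Orthonormal ℝ f)
    (τ : ℕ → ℝ) (hτpos : ∀ k, 0 < τ k)
    (hT : ∀ x : X, T x = ∑' k : ℕ, (τ k * ⟪e k, x⟫) • f k)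
    -- `C₀` is diagonal on the `e_k` and maps `ker T` into `ker T`
    (C₀ : X →L[ℝ] X) (hC₀sa : IsSelfAdjoint C₀) (hC₀pos : ∀ x : X, 0 ≤ ⟪C₀ x, x⟫)
    (ρ : ℕ → ℝ) (hρpos : ∀ k, 0 < ρ k) (hC₀e : ∀ k, C₀ (e k) = ρ k • e k)
    (hC₀ker : ∀ x : X, x ∈ LinearMap.ker (T : X →ₗ[ℝ] Y) → C₀ x ∈ LinearMap.ker (T : X →ₗ[ℝ] Y))
    (σ : ℝ) (hσ : 0 < σ) (φ : X)
    -- `S` is the positive square root `C₀^{1/2}` of `C₀`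
    (S : X →L[ℝ] X) (hSsa : IsSelfAdjoint S) (hSpos : ∀ x : X, 0 ≤ ⟪S x, x⟫)
    (hS : S ∘L S = C₀)
    -- `B` is the inverse of `C₀^{1/2} T* T C₀^{1/2} + σ² Id`
    (B : X →L[ℝ] X)
    (hB : B ∘L (S ∘L (ContinuousLinearMap.adjoint T) ∘L T ∘L S + σ ^ 2 • 1) = 1)
    (hB' : (S ∘L (ContinuousLinearMap.adjoint T) ∘L T ∘L S + σ ^ 2 • 1) ∘L B = 1) :
    (∀ k : ℕ, ⟪T (S (B (S φ))), f k⟫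
        = τ k * ρ k / ((τ k) ^ 2 * ρ k + σ ^ 2) * ⟪φ, e k⟫)
    ∧ T (S (B (S φ)))
        = ∑' k : ℕ, (τ k * ρ k / ((τ k) ^ 2 * ρ k + σ ^ 2) * ⟪φ, e k⟫) • f k :=
  probe_element_spectral_representation_general T e he f hf τ hT C₀ ρ hρpos hC₀e σ hσ φ S hSsa hSpos
    hS B hB'
end

section
/- Let (τ_k)_{k∈ℕ} be a sequence of positive real numbers with Σ_k τ_k² < ∞, let μ ≥ 1, ν > 0, and γ > 0, and let (U_k)_{k∈ℕ} be a sequence of independent real random variables on a probability space with U_k distributed as the Gaussian measure N(0, γ²τ_k^{2μ}). If Σ_k τ_k^{2(μ−ν)} = ∞, then almost surely the series Σ_k τ_k^{−2ν} U_k² diverges, i.e. the event that Σ_k τ_k^{−2ν} U_k² < ∞ has probability zero. -/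
open MeasureTheory ProbabilityTheory Filter Finset Topology
open scoped NNReal

/-!
Put `X k = τ k ^ (-2ν) * U k ^ 2`. These are independent and nonnegative, and by Gaussian scaling
`E[min (X k) 1] ≥ c * min (a k) 1` with `a k = γ² τ k ^ (2(μ - ν))` and
`c = E[min (Z²) 1] > 0` for a standard Gaussian `Z`; hence `∑ E[min (X k) 1] = ∞`.
For independent nonnegative variables this forces divergence almost surely: by independence
`E[exp (-∑_{k<n} min (X k) 1)] = ∏_{k<n} E[exp (-min (X k) 1)]`, and convexity of `exp` bounds
this by `exp (-(1 - e⁻¹) ∑_{k<n} E[min (X k) 1])`, which tends to `0`; yet on the event that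
all partial sums stay below `M` the integrand is at least `e^{-M}`.
-/

lemma Real.exp_neg_le_one_sub_mul {y : ℝ} (h0 : 0 ≤ y) (h1 : y ≤ 1) :
    Real.exp (-y) ≤ 1 - (1 - Real.exp (-1)) * y := by
  have h := convexOn_exp.2 (Set.mem_univ (-1 : ℝ)) (Set.mem_univ 0) h0 (sub_nonneg.2 h1)
    (add_sub_cancel y 1)
  simp only [smul_eq_mul, mul_zero, add_zero, Real.exp_zero, mul_one, mul_neg_one] at h
  linarith

lemma min_mul_min_one_le {a t : ℝ} (ha : 0 ≤ a) (ht : 0 ≤ t) :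
    min a 1 * min t 1 ≤ min (a * t) 1 := by
  rcases le_total a 1 with h | h <;> rcases le_total t 1 with h' | h' <;>
    simp only [min_eq_left, min_eq_right, h, h'] <;> apply le_min <;> nlinarith

lemma summable_min_one_iff {a : ℕ → ℝ} (ha : ∀ k, 0 ≤ a k) :
    Summable (fun k => min (a k) 1) ↔ Summable a := by
  refine ⟨fun h => ?_, fun h => h.of_nonneg_of_le (fun k => le_min (ha k) zero_le_one)
    fun k => min_le_left _ _⟩
  have hev : ∀ᶠ k in atTop, min (a k) 1 = a k := by
    filter_upwards [h.tendsto_atTop_zero.eventually_lt_const one_pos] with k hk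
    exact min_eq_left (le_of_lt (by simpa [min_lt_iff] using hk))
  exact h.congr_atTop hev

section

variable {Ω ι : Type*} [MeasurableSpace Ω] {P : Measure Ω}

lemma ProbabilityTheory.iIndepFun.integral_finset_prod {g : ι → Ω → ℝ} (h : iIndepFun g P)
    (hg : ∀ i, AEStronglyMeasurable (g i) P) (s : Finset ι) :
    ∫ ω, ∏ i ∈ s, g i ω ∂P = ∏ i ∈ s, ∫ ω, g i ω ∂P := by
  simp_rw [← Finset.prod_coe_sort s]
  exact (h.precomp (g := ((↑) : s → ι)) Subtype.val_injective).integral_fun_prod_eq_prod_integral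
    fun i => hg i

lemma integrable_min_one [IsFiniteMeasure P] {f : Ω → ℝ} (hf : AEMeasurable f P)
    (h0 : ∀ ω, 0 ≤ f ω) : Integrable (fun ω => min (f ω) 1) P :=
  .of_bound (hf.min aemeasurable_const).aestronglyMeasurable 1 <| ae_of_all _ fun ω => by
    rw [Real.norm_of_nonneg (le_min (h0 ω) zero_le_one)]
    exact min_le_right _ _

section Independent

variable [IsProbabilityMeasure P] {X : ℕ → Ω → ℝ}

lemma integral_exp_neg_min_one_le {Y : Ω → ℝ} (hY : AEMeasurable Y P) (hY0 : ∀ ω, 0 ≤ Y ω) :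
    ∫ ω, Real.exp (-min (Y ω) 1) ∂P
      ≤ Real.exp (-((1 - Real.exp (-1)) * ∫ ω, min (Y ω) 1 ∂P)) := by
  set c := 1 - Real.exp (-1)
  have hint := integrable_min_one hY hY0
  calc ∫ ω, Real.exp (-min (Y ω) 1) ∂P ≤ ∫ ω, (1 - c * min (Y ω) 1) ∂P :=
        integral_mono_of_nonneg (ae_of_all _ fun ω => (Real.exp_pos _).le)
          ((integrable_const 1).sub (hint.const_mul c)) <| ae_of_all _ fun ω =>
            Real.exp_neg_le_one_sub_mul (le_min (hY0 ω) zero_le_one) (min_le_right _ _)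
    _ = 1 - c * ∫ ω, min (Y ω) 1 ∂P := by
        rw [integral_sub (integrable_const 1) (hint.const_mul c), integral_const_mul]
        simp
    _ ≤ Real.exp (-(c * ∫ ω, min (Y ω) 1 ∂P)) := by
        linarith [Real.add_one_le_exp (-(c * ∫ ω, min (Y ω) 1 ∂P))]

lemma tendsto_integral_exp_neg_sum_min_one (hindep : iIndepFun X P)
    (hX : ∀ k, AEMeasurable (X k) P) (hX0 : ∀ k ω, 0 ≤ X k ω)
    (hdiv : ¬ Summable fun k => ∫ ω, min (X k ω) 1 ∂P) :
    Tendsto (fun n => ∫ ω, Real.exp (-∑ k ∈ range n, min (X k ω) 1) ∂P) atTop (𝓝 0) := by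
  set c := 1 - Real.exp (-1)
  have hc : 0 < c := by simp [c]
  have hprod : ∀ n, ∫ ω, Real.exp (-∑ k ∈ range n, min (X k ω) 1) ∂P
      = ∏ k ∈ range n, ∫ ω, Real.exp (-min (X k ω) 1) ∂P := fun n => by
    simp_rw [← Finset.sum_neg_distrib, Real.exp_sum]
    exact (hindep.comp (fun _ x => Real.exp (-min x 1)) fun _ => by fun_prop).integral_finset_prod
      (fun k => by fun_prop) _
  have hbound : ∀ n, ∫ ω, Real.exp (-∑ k ∈ range n, min (X k ω) 1) ∂P
      ≤ Real.exp (-(c * ∑ k ∈ range n, ∫ ω, min (X k ω) 1 ∂P)) := fun n => by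
    rw [hprod, Finset.mul_sum, ← Finset.sum_neg_distrib, Real.exp_sum]
    exact Finset.prod_le_prod (fun k _ => integral_nonneg fun ω => (Real.exp_pos _).le)
      fun k _ => integral_exp_neg_min_one_le (hX k) (hX0 k)
  have hsum : Tendsto (fun n => ∑ k ∈ range n, ∫ ω, min (X k ω) 1 ∂P) atTop atTop :=
    (not_summable_iff_tendsto_nat_atTop_of_nonneg fun k =>
      integral_nonneg fun ω => le_min (hX0 k ω) zero_le_one).1 hdiv
  refine squeeze_zero (fun n => integral_nonneg fun ω => (Real.exp_pos _).le) hbound ?_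
  exact Real.tendsto_exp_atBot.comp (tendsto_neg_atTop_atBot.comp (hsum.const_mul_atTop hc))

lemma measure_summable_eq_zero_of_tendsto (hX : ∀ k, AEMeasurable (X k) P)
    (hX0 : ∀ k ω, 0 ≤ X k ω)
    (hlim : Tendsto (fun n => ∫ ω, Real.exp (-∑ k ∈ range n, min (X k ω) 1) ∂P) atTop (𝓝 0)) :
    P {ω | Summable fun k => X k ω} = 0 := by
  set F : ℕ → Ω → ℝ := fun n ω => Real.exp (-∑ k ∈ range n, min (X k ω) 1)
  have hF : ∀ n, Integrable (F n) P := fun n =>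
    .of_bound (by fun_prop) 1 <| ae_of_all _ fun ω => by
      rw [Real.norm_of_nonneg (Real.exp_pos _).le, Real.exp_le_one_iff, neg_nonpos]
      exact sum_nonneg fun k _ => le_min (hX0 k ω) zero_le_one
  have hbounded : ∀ M : ℕ, P {ω | ∀ n, ∑ k ∈ range n, X k ω ≤ M} = 0 := by
    intro M
    set B := {ω | ∀ n, ∑ k ∈ range n, X k ω ≤ M}
    have hmarkov : ∀ n, Real.exp (-M) * P.real B ≤ ∫ ω, F n ω ∂P := fun n =>
      calc Real.exp (-M) * P.real B ≤ Real.exp (-M) * P.real {ω | Real.exp (-M) ≤ F n ω} := by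
            refine mul_le_mul_of_nonneg_left (measureReal_mono fun ω hω => ?_) (Real.exp_pos _).le
            exact Real.exp_le_exp.2 <| neg_le_neg <|
              (sum_le_sum fun k _ => min_le_left _ _).trans (hω n)
        _ ≤ ∫ ω, F n ω ∂P :=
            mul_meas_ge_le_integral_of_nonneg (ae_of_all _ fun ω => (Real.exp_pos _).le) (hF n) _
    have hB : Real.exp (-M) * P.real B ≤ 0 := ge_of_tendsto' hlim hmarkov
    rw [← measureReal_eq_zero_iff]
    exact le_antisymm (nonpos_of_mul_nonpos_right hB (Real.exp_pos _)) measureReal_nonneg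
  refine measure_mono_null (fun ω hω => ?_) (measure_iUnion_null hbounded)
  exact Set.mem_iUnion.2 ⟨⌈∑' k, X k ω⌉₊, fun n =>
    (Summable.sum_le_tsum _ (fun k _ => hX0 k ω) hω).trans (Nat.le_ceil _)⟩

theorem measure_summable_eq_zero_of_iIndepFun (hindep : iIndepFun X P)
    (hX : ∀ k, AEMeasurable (X k) P) (hX0 : ∀ k ω, 0 ≤ X k ω)
    (hdiv : ¬ Summable fun k => ∫ ω, min (X k ω) 1 ∂P) :
    P {ω | Summable fun k => X k ω} = 0 :=
  measure_summable_eq_zero_of_tendsto hX hX0 <|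
    tendsto_integral_exp_neg_sum_min_one hindep hX hX0 hdiv

end Independent

lemma integral_min_sq_one_gaussianReal_pos :
    0 < ∫ z, min (z ^ 2) 1 ∂gaussianReal 0 1 := by
  have := nullSingletonClass_gaussianReal (μ := 0) one_ne_zero
  rw [integral_pos_iff_support_of_nonneg (fun z => le_min (sq_nonneg z) zero_le_one)
    (integrable_min_one (by fun_prop) sq_nonneg)]
  have hsupp : Function.support (fun z : ℝ => min (z ^ 2) 1) = {0}ᶜ := by
    ext z
    rw [Function.mem_support, Set.mem_compl_singleton_iff]
    exact ⟨by rintro h rfl; simp at h, fun hz => (lt_min (by positivity) one_pos).ne'⟩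
  simp [hsupp, measure_compl]

lemma min_mul_le_integral_min_mul_sq_one {Y : Ω → ℝ} {v : ℝ≥0}
    (hY : P.map Y = gaussianReal 0 v) {s : ℝ} (hs : 0 ≤ s) :
    min (s * v) 1 * ∫ z, min (z ^ 2) 1 ∂gaussianReal 0 1 ≤ ∫ ω, min (s * Y ω ^ 2) 1 ∂P := by
  have hYm : AEMeasurable Y P := aemeasurable_of_map_neZero (by rw [hY]; infer_instance)
  have hv : (gaussianReal 0 1).map (√(v : ℝ) * ·) = gaussianReal 0 v := by
    rw [gaussianReal_map_const_mul]
    congr 1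
    · simp
    · ext; simp
  rw [← integral_map (f := fun y => min (s * y ^ 2) 1) hYm (by fun_prop), hY, ← hv,
    integral_map (by fun_prop) (by fun_prop), ← integral_const_mul]
  refine integral_mono ((integrable_min_one (by fun_prop) sq_nonneg).const_mul _)
    (integrable_min_one (by fun_prop) fun z => by positivity) fun z => ?_
  rw [mul_pow, Real.sq_sqrt v.coe_nonneg, ← mul_assoc]
  exact min_mul_min_one_le (by positivity) (sq_nonneg z)

end

theorem gaussian_series_diverges_of_not_trace_class_general
    {Ω : Type*} [MeasurableSpace Ω] (P : Measure Ω) [IsProbabilityMeasure P]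
    (τ : ℕ → ℝ) (hτpos : ∀ k, 0 < τ k)
    (μ ν γ : ℝ) (hγ : 0 < γ)
    (U : ℕ → Ω → ℝ)
    (hindep : iIndepFun U P)
    (hdist : ∀ k, Measure.map (U k) P
      = gaussianReal 0 (Real.toNNReal (γ ^ 2 * (τ k) ^ (2 * μ))))
    (htrace : ¬ Summable fun k => (τ k) ^ (2 * (μ - ν))) :
    P {ω : Ω | Summable fun k => (τ k) ^ (-(2 * ν)) * (U k ω) ^ 2} = 0 := by
  have hU : ∀ k, AEMeasurable (U k) P := fun k =>
    aemeasurable_of_map_neZero (by rw [hdist k]; infer_instance)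
  have hrpos : ∀ k (r : ℝ), 0 < τ k ^ r := fun k r => Real.rpow_pos_of_pos (hτpos k) r
  refine measure_summable_eq_zero_of_iIndepFun
    (hindep.comp (fun k u => τ k ^ (-(2 * ν)) * u ^ 2) fun k => by fun_prop)
    (fun k => by fun_prop) (fun k ω => mul_nonneg (hrpos k _).le (sq_nonneg _))
    fun hsum => htrace ?_
  set c := ∫ z, min (z ^ 2) 1 ∂gaussianReal 0 1
  have hc : 0 < c := integral_min_sq_one_gaussianReal_pos
  have hscale : ∀ k, τ k ^ (-(2 * ν)) * (γ ^ 2 * τ k ^ (2 * μ)) = γ ^ 2 * τ k ^ (2 * (μ - ν)) :=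
    fun k => by
      rw [mul_left_comm, ← Real.rpow_add (hτpos k)]
      ring_nf
  have hmin : Summable fun k => min (γ ^ 2 * τ k ^ (2 * (μ - ν))) 1 := by
    refine (hsum.div_const c).of_nonneg_of_le
      (fun k => le_min (mul_nonneg (sq_nonneg γ) (hrpos k _).le) zero_le_one) fun k => ?_
    rw [le_div_iff₀ hc, ← hscale k]
    have := min_mul_le_integral_min_mul_sq_one (hdist k) (hrpos k (-(2 * ν))).le
    rwa [Real.coe_toNNReal _ (mul_nonneg (sq_nonneg γ) (hrpos k _).le)] at this
  exact (summable_mul_left_iff (pow_ne_zero 2 hγ.ne')).1 <|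
    (summable_min_one_iff fun k => mul_nonneg (sq_nonneg γ) (hrpos k _).le).1 hmin

/-- Let `(τ_k)` be positive reals with `Σ τ_k² < ∞`, `μ ≥ 1`, `ν > 0`, `γ > 0`, and let
`(U_k)` be independent random variables with `U_k ~ N(0, γ²τ_k^{2μ})`.  If
`Σ_k τ_k^{2(μ−ν)} = ∞`, then the event that `Σ_k τ_k^{−2ν} U_k²` converges (to a finite
value) has probability zero. -/
theorem gaussian_series_diverges_of_not_trace_class
    {Ω : Type*} [MeasurableSpace Ω] (P : Measure Ω) [IsProbabilityMeasure P]
    (τ : ℕ → ℝ) (hτpos : ∀ k, 0 < τ k) (hτ2 : Summable fun k => (τ k) ^ 2)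
    (μ ν γ : ℝ) (hμ : 1 ≤ μ) (hν : 0 < ν) (hγ : 0 < γ)
    (U : ℕ → Ω → ℝ)
    (hindep : iIndepFun U P)
    (hdist : ∀ k, Measure.map (U k) P
      = gaussianReal 0 (Real.toNNReal (γ ^ 2 * (τ k) ^ (2 * μ))))
    (htrace : ¬ Summable fun k => (τ k) ^ (2 * (μ - ν))) :
    P {ω : Ω | Summable fun k => (τ k) ^ (-(2 * ν)) * (U k ω) ^ 2} = 0 :=
  gaussian_series_diverges_of_not_trace_class_general P τ hτpos μ ν γ hγ U hindep hdist htrace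
end

section
/- Let ν > 0, μ ≥ 1 with μ > ν/2 − 1, σ > 0, γ₀ > 0, and set γ := γ₀σ and C₀ := γ²(T*T)^μ. Then ‖(T*T)^{ν/2}(T*Φ_MAP − φ)‖_X ≤ γ₀^{−ν/(μ+1)}‖φ‖_X. -/
/-!
Write `P s` for `(T*T)^s`. Since `C₀^{1/2} T*T C₀^{1/2} + σ² = γ² P(μ+1) + σ²` commutes with
`C₀^{1/2}`, so does its inverse `B`; hence, with `v = σ² B φ`, the residual `T*Φ_MAP − φ` is `−v`
and `φ = γ₀² P(μ+1) v + v`, a sum of two vectors with nonnegative inner product, each therefore of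
norm at most `‖φ‖`. By Cauchy–Schwarz and the semigroup law, `s ↦ ‖P s v‖` is midpoint
log-convex, hence (dyadic induction and continuity) log-convex, which gives the moment inequality
`‖P(ν/2) v‖ ≤ ‖P(μ+1) v‖^θ ‖v‖^{1−θ}` with `θ = ν/(2(μ+1))`; weighted AM–GM then bounds the
right-hand side by `γ₀^{−2θ} ‖φ‖`.
-/

open scoped RealInnerProductSpace
open Set Filter Topology

theorem forall_dyadic_of_midpoint {P : ℝ → Prop} (h0 : P 0) (h1 : P 1)
    (hmid : ∀ s ∈ Icc (0 : ℝ) 1, ∀ t ∈ Icc (0 : ℝ) 1, P s → P t → P ((s + t) / 2)) :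
    ∀ n k : ℕ, k ≤ 2 ^ n → P (k / 2 ^ n) := by
  have mem : ∀ n k : ℕ, k ≤ 2 ^ n → (k / 2 ^ n : ℝ) ∈ Icc 0 1 := fun n k hk =>
    ⟨by positivity, div_le_one_of_le₀ (by exact_mod_cast hk) (by positivity)⟩
  intro n
  induction n with
  | zero =>
    intro k hk
    interval_cases k <;> simpa
  | succ n ih =>
    intro k hk
    obtain ⟨j, rfl | rfl⟩ := Nat.even_or_odd' k
    · convert ih j (by omega) using 1
      push_cast; ring
    · convert hmid _ (mem n j (by omega)) _ (mem n (j + 1) (by omega))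
        (ih j (by omega)) (ih (j + 1) (by omega)) using 1
      push_cast; ring

theorem le_rpow_mul_rpow_of_sq_midpoint_le {g : ℝ → ℝ} (hg : ∀ s ∈ Icc (0 : ℝ) 1, 0 ≤ g s)
    (hmid : ∀ s ∈ Icc (0 : ℝ) 1, ∀ t ∈ Icc (0 : ℝ) 1, g ((s + t) / 2) ^ 2 ≤ g s * g t)
    {θ : ℝ} (hθ : θ ∈ Ioo (0 : ℝ) 1) (hcont : ContinuousAt g θ) :
    g θ ≤ g 1 ^ θ * g 0 ^ (1 - θ) := by
  set F : ℝ → ℝ := fun x => g 1 ^ x * g 0 ^ (1 - x) with hF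
  have hg0 := hg 0 (by simp)
  have hg1 := hg 1 (by simp)
  have hF_mid : ∀ s ∈ Icc (0 : ℝ) 1, ∀ t ∈ Icc (0 : ℝ) 1,
      F s * F t = F ((s + t) / 2) ^ 2 := by
    intro s hs t ht
    simp only [hF, mul_pow, ← Real.rpow_mul_natCast hg0, ← Real.rpow_mul_natCast hg1]
    rw [mul_mul_mul_comm, ← Real.rpow_add_of_nonneg hg1 hs.1 ht.1,
      ← Real.rpow_add_of_nonneg hg0 (by linarith [hs.2]) (by linarith [ht.2])]
    ring_nf
  have hdyadic : ∀ n k : ℕ, k ≤ 2 ^ n → g (k / 2 ^ n) ≤ F (k / 2 ^ n) := by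
    refine forall_dyadic_of_midpoint (P := fun x => g x ≤ F x) (by simp [hF]) (by simp [hF]) ?_
    intro s hs t ht hgs hgt
    have hm : (s + t) / 2 ∈ Icc (0 : ℝ) 1 := ⟨by linarith [hs.1, ht.1], by linarith [hs.2, ht.2]⟩
    refine (pow_le_pow_iff_left₀ (hg _ hm) (by positivity) two_ne_zero).1 ?_
    calc g ((s + t) / 2) ^ 2 ≤ g s * g t := hmid s hs t ht
      _ ≤ F s * F t := mul_le_mul hgs hgt (hg t ht) (by positivity)
      _ = F ((s + t) / 2) ^ 2 := hF_mid s hs t ht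
  set x : ℕ → ℝ := fun n => (⌊θ * 2 ^ n⌋₊ : ℝ) / 2 ^ n
  have hx : Tendsto x atTop (𝓝 θ) :=
    (tendsto_nat_floor_mul_div_atTop hθ.1.le).comp
      (tendsto_pow_atTop_atTop_of_one_lt one_lt_two)
  have hk : ∀ n : ℕ, ⌊θ * 2 ^ n⌋₊ ≤ 2 ^ n := fun n =>
    Nat.floor_le_of_le (by push_cast; nlinarith [hθ.2, pow_pos (two_pos (α := ℝ)) n])
  have hFθ : ContinuousAt F θ :=
    (Real.continuousAt_const_rpow' hθ.1.ne').mul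
      ((Real.continuousAt_const_rpow' (sub_pos.2 hθ.2).ne').comp
        (continuousAt_const.sub continuousAt_id))
  exact le_of_tendsto_of_tendsto' (hcont.tendsto.comp hx) (hFθ.tendsto.comp hx)
    fun n => hdyadic n _ (hk n)

theorem rpow_mul_rpow_le_of_le {x y z θ : ℝ} (hx : 0 ≤ x) (hy : 0 ≤ y) (hxz : x ≤ z)
    (hyz : y ≤ z) (hθ₀ : 0 ≤ θ) (hθ₁ : θ ≤ 1) : x ^ θ * y ^ (1 - θ) ≤ z := by
  have := Real.geom_mean_le_arith_mean2_weighted hθ₀ (sub_nonneg.2 hθ₁) hx hy (by ring)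
  nlinarith

theorem norm_le_norm_add_of_inner_nonneg {E : Type*} [NormedAddCommGroup E]
    [InnerProductSpace ℝ E] {u v : E} (h : 0 ≤ ⟪u, v⟫) : ‖u‖ ≤ ‖u + v‖ := by
  refine (pow_le_pow_iff_left₀ (norm_nonneg _) (norm_nonneg _) two_ne_zero).1 ?_
  rw [norm_add_sq_real]
  nlinarith [sq_nonneg ‖v‖]

section Monoid

variable {M : Type*} [Monoid M] {P : ℝ → M}

theorem commute_of_map_add (hadd : ∀ s t : ℝ, 0 < s → 0 < t → P (s + t) = P s * P t) {s t : ℝ}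
    (hs : 0 < s) (ht : 0 < t) : Commute (P s) (P t) := by
  rw [commute_iff_eq, ← hadd s t hs ht, ← hadd t s ht hs, add_comm]

theorem map_add_of_nonneg (h0 : P 0 = 1)
    (hadd : ∀ s t : ℝ, 0 < s → 0 < t → P (s + t) = P s * P t) {s t : ℝ} (hs : 0 ≤ s)
    (ht : 0 ≤ t) : P (s + t) = P s * P t := by
  rcases hs.eq_or_lt with rfl | hs
  · rw [h0, zero_add, one_mul]
  rcases ht.eq_or_lt with rfl | ht
  · rw [h0, add_zero, mul_one]
  exact hadd s t hs ht

end Monoid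

section OperatorPowers

variable {X : Type*} [NormedAddCommGroup X] [InnerProductSpace ℝ X] [CompleteSpace X]
  {P : ℝ → X →L[ℝ] X}

theorem isSelfAdjoint_of_nonneg (h0 : P 0 = 1) (hsa : ∀ s : ℝ, 0 < s → IsSelfAdjoint (P s))
    {s : ℝ} (hs : 0 ≤ s) : IsSelfAdjoint (P s) := by
  rcases hs.eq_or_lt with rfl | hs
  · exact h0 ▸ IsSelfAdjoint.one _
  exact hsa s hs

theorem sq_norm_apply_midpoint_le (h0 : P 0 = 1)
    (hsa : ∀ s : ℝ, 0 < s → IsSelfAdjoint (P s))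
    (hadd : ∀ s t : ℝ, 0 < s → 0 < t → P (s + t) = P s ∘L P t) (x : X) {s t : ℝ}
    (hs : 0 ≤ s) (ht : 0 ≤ t) : ‖P ((s + t) / 2) x‖ ^ 2 ≤ ‖P s x‖ * ‖P t x‖ := by
  have hm : 0 ≤ (s + t) / 2 := by positivity
  have symm : ∀ r, 0 ≤ r → ∀ y z : X, ⟪P r y, z⟫ = ⟪y, P r z⟫ := fun r hr =>
    ContinuousLinearMap.isSelfAdjoint_iff_isSymmetric.1 (isSelfAdjoint_of_nonneg h0 hsa hr)
  calc ‖P ((s + t) / 2) x‖ ^ 2 = ⟪x, P ((s + t) / 2 + (s + t) / 2) x⟫ := by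
        rw [← real_inner_self_eq_norm_sq, symm _ hm, map_add_of_nonneg h0 hadd hm hm]; rfl
    _ = ⟪P s x, P t x⟫ := by
        rw [add_halves, map_add_of_nonneg h0 hadd hs ht, symm _ hs]; rfl
    _ ≤ ‖P s x‖ * ‖P t x‖ := real_inner_le_norm _ _

theorem norm_apply_le_rpow_mul_rpow (h0 : P 0 = 1)
    (hsa : ∀ s : ℝ, 0 < s → IsSelfAdjoint (P s))
    (hadd : ∀ s t : ℝ, 0 < s → 0 < t → P (s + t) = P s ∘L P t)
    (hcont : ContinuousOn P (Ioi 0)) (x : X) {a b : ℝ} (ha : 0 < a) (hab : a < b) :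
    ‖P a x‖ ≤ ‖P b x‖ ^ (a / b) * ‖x‖ ^ (1 - a / b) := by
  have hb : 0 < b := ha.trans hab
  have key := le_rpow_mul_rpow_of_sq_midpoint_le (g := fun θ => ‖P (θ * b) x‖)
    (fun _ _ => norm_nonneg _)
    (fun s hs t ht => by
      simpa only [add_mul, add_div, mul_div_right_comm] using
        sq_norm_apply_midpoint_le h0 hsa hadd x (mul_nonneg hs.1 hb.le) (mul_nonneg ht.1 hb.le))
    ⟨div_pos ha hb, (div_lt_one hb).2 hab⟩
    (((ContinuousLinearMap.apply ℝ X x).continuous.continuousAt.comp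
      (hcont.continuousAt (Ioi_mem_nhds (by rwa [div_mul_cancel₀ a hb.ne'])))).norm.comp
      (continuousAt_id.mul continuousAt_const))
  simpa only [div_mul_cancel₀ a hb.ne', one_mul, zero_mul, h0, one_apply_eq_self] using key

theorem norm_apply_le_rpow_mul_norm_smul_add (h0 : P 0 = 1)
    (hsa : ∀ s : ℝ, 0 < s → IsSelfAdjoint (P s))
    (hpos : ∀ s : ℝ, 0 < s → ∀ x : X, 0 ≤ ⟪P s x, x⟫)
    (hadd : ∀ s t : ℝ, 0 < s → 0 < t → P (s + t) = P s ∘L P t)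
    (hcont : ContinuousOn P (Ioi 0)) (v : X) {a b c : ℝ} (ha : 0 < a) (hab : a < b)
    (hc : 0 < c) : ‖P a v‖ ≤ c ^ (-a / b) * ‖c • P b v + v‖ := by
  have hb : 0 < b := ha.trans hab
  have hθ : a / b ≤ 1 := (div_le_one hb).2 hab.le
  have hinner : 0 ≤ ⟪c • P b v, v⟫ := by
    rw [real_inner_smul_left]; exact mul_nonneg hc.le (hpos b hb v)
  have hu : ‖c • P b v‖ ≤ ‖c • P b v + v‖ := norm_le_norm_add_of_inner_nonneg hinner
  have hv : ‖v‖ ≤ ‖c • P b v + v‖ := by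
    rw [add_comm]; exact norm_le_norm_add_of_inner_nonneg (by rwa [real_inner_comm])
  calc ‖P a v‖ ≤ ‖P b v‖ ^ (a / b) * ‖v‖ ^ (1 - a / b) :=
        norm_apply_le_rpow_mul_rpow h0 hsa hadd hcont v ha hab
    _ = c ^ (-a / b) * (‖c • P b v‖ ^ (a / b) * ‖v‖ ^ (1 - a / b)) := by
        rw [norm_smul, Real.norm_of_nonneg hc.le, Real.mul_rpow hc.le (norm_nonneg _), neg_div,
          Real.rpow_neg hc.le, ← mul_assoc, ← mul_assoc, inv_mul_cancel₀ (by positivity),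
          one_mul]
    _ ≤ c ^ (-a / b) * ‖c • P b v + v‖ := by
        gcongr
        exact rpow_mul_rpow_le_of_le (norm_nonneg _) (norm_nonneg _) hu hv (by positivity) hθ

end OperatorPowers

section PosteriorMean

open ContinuousLinearMap

variable {X Y : Type*} [NormedAddCommGroup X] [InnerProductSpace ℝ X] [CompleteSpace X]
  [NormedAddCommGroup Y] [InnerProductSpace ℝ Y] [CompleteSpace Y]
  {T : X →L[ℝ] Y} {P : ℝ → X →L[ℝ] X} {S B : X →L[ℝ] X} {μ γ σ : ℝ}

theorem comp_adjoint_comp_self_comp_eq (hP1 : P 1 = adjoint T ∘L T)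
    (hadd : ∀ s t : ℝ, 0 < s → 0 < t → P (s + t) = P s ∘L P t) (hμ : 0 < μ)
    (hS : S = γ • P (μ / 2)) : S ∘L adjoint T ∘L T ∘L S = γ ^ 2 • P (μ + 1) := by
  rw [hS, ← comp_assoc (adjoint T) T, ← hP1, smul_comp, comp_smul, comp_smul, smul_smul, ← sq,
    ← hadd _ _ one_pos (half_pos hμ), ← hadd _ _ (half_pos hμ) (by positivity)]
  ring_nf

theorem adjoint_apply_apply_sub_eq (hP1 : P 1 = adjoint T ∘L T)
    (hadd : ∀ s t : ℝ, 0 < s → 0 < t → P (s + t) = P s ∘L P t) (hμ : 0 < μ)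
    (hS : S = γ • P (μ / 2)) (hB : B ∘L (γ ^ 2 • P (μ + 1) + σ ^ 2 • 1) = 1)
    (hB' : (γ ^ 2 • P (μ + 1) + σ ^ 2 • 1) ∘L B = 1) (φ : X) :
    adjoint T (T (S (B (S φ)))) - φ = -(σ ^ 2 • B φ) := by
  let U : (X →L[ℝ] X)ˣ := ⟨γ ^ 2 • P (μ + 1) + σ ^ 2 • 1, B, hB', hB⟩
  have hSU : Commute S U := hS ▸
    (((commute_of_map_add hadd (half_pos hμ) (by positivity)).smul_right _).add_right
      ((Commute.one_right _).smul_right _)).smul_left _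
  have hSB : Commute S B := hSU.units_inv_right
  have hSP1 : Commute S (P 1) := hS ▸ (commute_of_map_add hadd (half_pos hμ) one_pos).smul_left _
  have hTT : ∀ x, adjoint T (T x) = P 1 x := fun x => congr($hP1.symm x)
  have hSB' : ∀ x, S (B x) = B (S x) := fun x => DFunLike.congr_fun hSB.eq x
  have hSP1' : ∀ x, S (P 1 x) = P 1 (S x) := fun x => DFunLike.congr_fun hSP1.eq x
  have hφ : φ = γ ^ 2 • P (μ + 1) (B φ) + σ ^ 2 • B φ := by
    simpa using congr($hB' φ).symm
  calc adjoint T (T (S (B (S φ)))) - φ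
      = γ ^ 2 • P (μ + 1) (B φ) - (γ ^ 2 • P (μ + 1) (B φ) + σ ^ 2 • B φ) := by
        rw [← hφ, hTT, ← hSB', ← hSP1', ← hTT]
        exact congr($(comp_adjoint_comp_self_comp_eq hP1 hadd hμ hS) (B φ) - φ)
    _ = -(σ ^ 2 • B φ) := by abel

end PosteriorMean

theorem residual_estimate_a_priori_general
    {X Y : Type*}
    [NormedAddCommGroup X] [InnerProductSpace ℝ X] [CompleteSpace X]
    [NormedAddCommGroup Y] [InnerProductSpace ℝ Y] [CompleteSpace Y]
    (T : X →L[ℝ] Y) (φ : X)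
    (ν μ σ γ₀ γ : ℝ) (hν : 0 < ν) (hμ : 1 ≤ μ) (hμν : ν / 2 - 1 < μ)
    (hγ₀ : 0 < γ₀) (hγ : γ = γ₀ * σ)
    -- `pow s` is the operator power `(T*T)^s`, characterized by:
    (pow : ℝ → (X →L[ℝ] X))
    (hpow0 : pow 0 = 1)
    (hpow1 : pow 1 = (ContinuousLinearMap.adjoint T) ∘L T)
    (hpowsa : ∀ s : ℝ, 0 < s → IsSelfAdjoint (pow s))
    (hpowpos : ∀ s : ℝ, 0 < s → ∀ x : X, 0 ≤ ⟪(pow s) x, x⟫)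
    (hpowadd : ∀ s t : ℝ, 0 < s → 0 < t → pow (s + t) = pow s ∘L pow t)
    (hpowcont : ContinuousOn pow (Set.Ioi (0 : ℝ)))
    -- `S = γ • (T*T)^{μ/2}` is the positive square root of `C₀ = γ² (T*T)^μ`
    (S : X →L[ℝ] X) (hSdef : S = γ • pow (μ / 2))
    -- `B` is the inverse of `C₀^{1/2} T* T C₀^{1/2} + σ² Id`
    (B : X →L[ℝ] X)
    (hB : B ∘L (S ∘L (ContinuousLinearMap.adjoint T) ∘L T ∘L S + σ ^ 2 • 1) = 1)
    (hB' : (S ∘L (ContinuousLinearMap.adjoint T) ∘L T ∘L S + σ ^ 2 • 1) ∘L B = 1) :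
    ‖(pow (ν / 2)) ((ContinuousLinearMap.adjoint T) (T (S (B (S φ)))) - φ)‖
      ≤ γ₀ ^ (-ν / (μ + 1)) * ‖φ‖ := by
  have hμ0 : 0 < μ := by linarith
  rw [comp_adjoint_comp_self_comp_eq hpow1 hpowadd hμ0 hSdef] at hB hB'
  have hφ : φ = γ₀ ^ 2 • pow (μ + 1) (σ ^ 2 • B φ) + σ ^ 2 • B φ := by
    rw [map_smul, smul_smul, ← mul_pow, ← hγ]
    simpa using congr($hB' φ).symm
  rw [adjoint_apply_apply_sub_eq hpow1 hpowadd hμ0 hSdef hB hB', map_neg, norm_neg]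
  calc ‖pow (ν / 2) (σ ^ 2 • B φ)‖
      ≤ (γ₀ ^ 2) ^ (-(ν / 2) / (μ + 1)) *
          ‖γ₀ ^ 2 • pow (μ + 1) (σ ^ 2 • B φ) + σ ^ 2 • B φ‖ :=
        norm_apply_le_rpow_mul_norm_smul_add hpow0 hpowsa hpowpos hpowadd hpowcont _
          (half_pos hν) (by linarith) (by positivity)
    _ = γ₀ ^ (-ν / (μ + 1)) * ‖φ‖ := by
        rw [← hφ, ← Real.rpow_natCast, ← Real.rpow_mul hγ₀.le]
        ring_nf

/-- Let `ν > 0`, `μ ≥ 1` with `μ > ν/2 − 1`, `σ > 0`, `γ₀ > 0`, `γ = γ₀σ`, and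
`C₀ = γ²(T*T)^μ`.  Then `‖(T*T)^{ν/2}(T*Φ_MAP − φ)‖ ≤ γ₀^{−ν/(μ+1)}‖φ‖`, where
`Φ_MAP = T C₀^{1/2}(C₀^{1/2}T*TC₀^{1/2} + σ²Id)⁻¹ C₀^{1/2}φ`.  The operator power
`(T*T)^s` is encoded by the family `pow`, uniquely determined by the hypotheses below;
the positive square root of `C₀ = γ² (T*T)^μ` is `S := γ • (T*T)^{μ/2}`, and `B` denotes
the inverse `(C₀^{1/2}T*TC₀^{1/2} + σ²Id)⁻¹`. -/
theorem residual_estimate_a_priori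
    {X Y : Type*}
    [NormedAddCommGroup X] [InnerProductSpace ℝ X] [CompleteSpace X]
    [TopologicalSpace.SeparableSpace X]
    [NormedAddCommGroup Y] [InnerProductSpace ℝ Y] [CompleteSpace Y]
    [TopologicalSpace.SeparableSpace Y]
    (T : X →L[ℝ] Y) (φ : X)
    (ν μ σ γ₀ γ : ℝ) (hν : 0 < ν) (hμ : 1 ≤ μ) (hμν : ν / 2 - 1 < μ)
    (hσ : 0 < σ) (hγ₀ : 0 < γ₀) (hγ : γ = γ₀ * σ)
    -- `pow s` is the operator power `(T*T)^s`, characterized by: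
    (pow : ℝ → (X →L[ℝ] X))
    (hpow0 : pow 0 = 1)
    (hpow1 : pow 1 = (ContinuousLinearMap.adjoint T) ∘L T)
    (hpowsa : ∀ s : ℝ, 0 < s → IsSelfAdjoint (pow s))
    (hpowpos : ∀ s : ℝ, 0 < s → ∀ x : X, 0 ≤ ⟪(pow s) x, x⟫)
    (hpowadd : ∀ s t : ℝ, 0 < s → 0 < t → pow (s + t) = pow s ∘L pow t)
    (hpowcont : ContinuousOn pow (Set.Ioi (0 : ℝ)))
    -- `S = γ • (T*T)^{μ/2}` is the positive square root of `C₀ = γ² (T*T)^μ`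
    (S : X →L[ℝ] X) (hSdef : S = γ • pow (μ / 2))
    -- `B` is the inverse of `C₀^{1/2} T* T C₀^{1/2} + σ² Id`
    (B : X →L[ℝ] X)
    (hB : B ∘L (S ∘L (ContinuousLinearMap.adjoint T) ∘L T ∘L S + σ ^ 2 • 1) = 1)
    (hB' : (S ∘L (ContinuousLinearMap.adjoint T) ∘L T ∘L S + σ ^ 2 • 1) ∘L B = 1) :
    ‖(pow (ν / 2)) ((ContinuousLinearMap.adjoint T) (T (S (B (S φ)))) - φ)‖
      ≤ γ₀ ^ (-ν / (μ + 1)) * ‖φ‖ :=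
  residual_estimate_a_priori_general T φ ν μ σ γ₀ γ hν hμ hμν hγ₀ hγ pow hpow0 hpow1 hpowsa hpowpos
    hpowadd hpowcont S hSdef B hB hB'
end

section
/- Let ν > 0, μ ≥ 1 with μ > ν/2 − 1, σ > 0, γ₀ > 0, and set γ := γ₀σ and C₀ := γ²(T*T)^μ. Then ‖Φ_MAP‖_Y ≤ γ₀^{1/(μ+1)}‖φ‖_X. -/
/-!
Write `P s = (T*T)^s`. With `ψ = Bφ` one has `φ = γ² P(μ+1) ψ + σ² ψ` and
`Φ_MAP = γ² T P(μ) ψ`, so for `q s = ⟪P s ψ, ψ⟫` we get `‖Φ_MAP‖² = γ⁴ q(2μ+1)` and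
`‖φ‖² ≥ γ⁴ q(2μ+2) + γ²σ² q(μ+1)`. Cauchy–Schwarz makes `q` midpoint log-convex, hence
log-convex by continuity, so `q(2μ+1) ≤ q(2μ+2)^(μ/(μ+1)) q(μ+1)^(1/(μ+1))`; weighted AM–GM
together with `γ⁴ = γ₀² γ²σ²` turns this into the bound.
-/

open scoped RealInnerProductSpace

open Set Filter Topology

theorem dyadic_mem_of_midpoint_mem {D : Set ℝ} (h0 : (0 : ℝ) ∈ D) (h1 : (1 : ℝ) ∈ D)
    (hmid : ∀ x ∈ D, ∀ y ∈ D, midpoint ℝ x y ∈ D) (n : ℕ) :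
    ∀ k : ℕ, k ≤ 2 ^ n → (k / 2 ^ n : ℝ) ∈ D := by
  induction n with
  | zero =>
    intro k hk
    interval_cases k <;> simpa
  | succ n ih =>
    intro k hk
    obtain ⟨j, rfl | rfl⟩ := Nat.even_or_odd' k
    · convert ih j (by omega) using 1
      push_cast; rw [pow_succ]; field_simp
    · convert hmid _ (ih j (by omega)) _ (ih (j + 1) (by omega)) using 1
      rw [midpoint_eq_smul_add, invOf_eq_inv, smul_eq_mul]
      push_cast; rw [pow_succ]; field_simp; ring

theorem Icc_subset_of_midpoint_mem {D : Set ℝ} (hD : IsClosed D) (h0 : (0 : ℝ) ∈ D)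
    (h1 : (1 : ℝ) ∈ D) (hmid : ∀ x ∈ D, ∀ y ∈ D, midpoint ℝ x y ∈ D) : Icc 0 1 ⊆ D := by
  rintro t ⟨ht0, ht1⟩
  have hfloor (n : ℕ) : ⌊t * 2 ^ n⌋₊ ≤ 2 ^ n :=
    Nat.floor_le_of_le (by push_cast; nlinarith [pow_pos (two_pos (α := ℝ)) n])
  have hlim : Tendsto (fun n : ℕ ↦ (⌊t * 2 ^ n⌋₊ / 2 ^ n : ℝ)) atTop (𝓝 t) :=
    (tendsto_nat_floor_mul_div_atTop ht0).comp (tendsto_pow_atTop_atTop_of_one_lt one_lt_two)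
  exact hD.mem_of_tendsto hlim
    (Eventually.of_forall fun n ↦ dyadic_mem_of_midpoint_mem h0 h1 hmid n _ (hfloor n))

theorem le_convex_combination_of_midpoint_le {g : ℝ → ℝ} (hg : ContinuousOn g (Icc 0 1))
    (hmid : ∀ x ∈ Icc (0 : ℝ) 1, ∀ y ∈ Icc (0 : ℝ) 1, g (midpoint ℝ x y) ≤ (g x + g y) / 2)
    {t : ℝ} (ht : t ∈ Icc (0 : ℝ) 1) : g t ≤ (1 - t) * g 0 + t * g 1 := by
  let D := Icc (0 : ℝ) 1 ∩ (fun t ↦ g t - ((1 - t) * g 0 + t * g 1)) ⁻¹' Iic 0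
  have hD : IsClosed D :=
    (hg.sub (by fun_prop)).preimage_isClosed_of_isClosed isClosed_Icc isClosed_Iic
  have hmidD : ∀ x ∈ D, ∀ y ∈ D, midpoint ℝ x y ∈ D := by
    rintro x ⟨hx, hgx⟩ y ⟨hy, hgy⟩
    refine ⟨(convex_Icc 0 1).midpoint_mem hx hy, ?_⟩
    have := hmid x hx y hy
    simp only [mem_preimage, mem_Iic, midpoint_eq_smul_add, invOf_eq_inv, smul_eq_mul]
      at hgx hgy this ⊢
    nlinarith
  have hsub := Icc_subset_of_midpoint_mem hD ⟨by simp, by simp⟩ ⟨by simp, by simp⟩ hmidD ht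
  simpa [D, sub_nonpos] using hsub.2

section MidpointConvex

variable {E : Type*} [AddCommGroup E] [Module ℝ E] [TopologicalSpace E] [IsTopologicalAddGroup E]
  [ContinuousSMul ℝ E]

theorem convexOn_of_midpoint_le {s : Set E} {f : E → ℝ} (hs : Convex ℝ s)
    (hf : ContinuousOn f s) (hmid : ∀ x ∈ s, ∀ y ∈ s, f (midpoint ℝ x y) ≤ (f x + f y) / 2) :
    ConvexOn ℝ s f := by
  refine ⟨hs, fun x hx y hy a b ha hb hab ↦ ?_⟩
  have hmaps : MapsTo (AffineMap.lineMap x y) (Icc (0 : ℝ) 1) s :=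
    fun t ht ↦ hs.lineMap_mem hx hy ht
  have key := le_convex_combination_of_midpoint_le (g := fun t ↦ f (AffineMap.lineMap x y t))
    (hf.comp AffineMap.lineMap_continuous.continuousOn hmaps)
    (fun u hu v hv ↦ by simpa only [AffineMap.map_midpoint] using hmid _ (hmaps hu) _ (hmaps hv))
    ⟨hb, by linarith⟩
  obtain rfl : a = 1 - b := by linarith
  simpa [AffineMap.lineMap_apply_module] using key

theorem convexOn_log_comp_of_sq_midpoint_le {s : Set E} {f : E → ℝ} (hs : Convex ℝ s)
    (hf : ContinuousOn f s) (hpos : ∀ x ∈ s, 0 < f x)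
    (hmid : ∀ x ∈ s, ∀ y ∈ s, f (midpoint ℝ x y) ^ 2 ≤ f x * f y) :
    ConvexOn ℝ s (Real.log ∘ f) := by
  refine convexOn_of_midpoint_le hs (hf.log fun x hx ↦ (hpos x hx).ne') fun x hx y hy ↦ ?_
  have hlog := Real.log_le_log (pow_pos (hpos _ (hs.midpoint_mem hx hy)) 2) (hmid x hx y hy)
  rw [Real.log_pow, Real.log_mul (hpos x hx).ne' (hpos y hy).ne'] at hlog
  simp only [Function.comp_apply]
  push_cast at hlog
  linarith

end MidpointConvex

theorem mul_mul_rpow_mul_rpow_le {a b c d t u : ℝ} (ha : 0 ≤ a) (hb : 0 ≤ b) (hc : 0 ≤ c)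
    (hd : 0 ≤ d) (ht : 0 ≤ t) (hu : 0 ≤ u) (htu : t + u = 1) :
    c * d * (b ^ t * a ^ u) ≤ c ^ u * (c * d * b + d * a) := by
  calc c * d * (b ^ t * a ^ u) = (c * d) ^ t * (c * d) ^ u * (b ^ t * a ^ u) := by
        rw [← Real.rpow_add' (by positivity) (by simp [htu]), htu, Real.rpow_one]
    _ = c ^ u * ((c * d * b) ^ t * (d * a) ^ u) := by
        rw [Real.mul_rpow (by positivity) hb, Real.mul_rpow hd ha, Real.mul_rpow hc hd,
          Real.mul_rpow hc hd]
        ring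
    _ ≤ c ^ u * (t * (c * d * b) + u * (d * a)) := by
        gcongr
        exact Real.geom_mean_le_arith_mean2_weighted ht hu (by positivity) (by positivity) htu
    _ ≤ c ^ u * (c * d * b + d * a) := by
        refine mul_le_mul_of_nonneg_left (add_le_add ?_ ?_) (by positivity) <;>
          exact mul_le_of_le_one_left (by positivity) (by linarith)

structure IsSelfAdjointSemigroup {X : Type*} [NormedAddCommGroup X] [InnerProductSpace ℝ X]
    [CompleteSpace X] (P : ℝ → X →L[ℝ] X) : Prop where
  isSelfAdjoint : ∀ s, 0 < s → IsSelfAdjoint (P s)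
  map_add : ∀ s t, 0 < s → 0 < t → P (s + t) = P s ∘L P t

namespace IsSelfAdjointSemigroup

variable {X : Type*} [NormedAddCommGroup X] [InnerProductSpace ℝ X] [CompleteSpace X]
  {P : ℝ → X →L[ℝ] X} {s t : ℝ}

theorem commute (hP : IsSelfAdjointSemigroup P) (hs : 0 < s) (ht : 0 < t) :
    Commute (P s) (P t) := by
  rw [Commute, SemiconjBy, ContinuousLinearMap.mul_def, ContinuousLinearMap.mul_def,
    ← hP.map_add s t hs ht, ← hP.map_add t s ht hs, add_comm]

theorem inner_map_add (hP : IsSelfAdjointSemigroup P) (hs : 0 < s) (ht : 0 < t) (x y : X) :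
    ⟪P (s + t) x, y⟫ = ⟪P t x, P s y⟫ := by
  rw [hP.map_add s t hs ht, ContinuousLinearMap.comp_apply]
  exact (hP.isSelfAdjoint s hs).isSymmetric _ _

theorem inner_apply_eq_norm_sq (hP : IsSelfAdjointSemigroup P) (hs : 0 < s) (x : X) :
    ⟪P s x, x⟫ = ‖P (s / 2) x‖ ^ 2 := by
  rw [← add_halves s, hP.inner_map_add (half_pos hs) (half_pos hs), add_halves,
    real_inner_self_eq_norm_sq]

theorem inner_apply_nonneg (hP : IsSelfAdjointSemigroup P) (hs : 0 < s) (x : X) :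
    0 ≤ ⟪P s x, x⟫ :=
  hP.inner_apply_eq_norm_sq hs x ▸ sq_nonneg _

theorem inner_apply_midpoint_sq_le (hP : IsSelfAdjointSemigroup P) (hs : 0 < s) (ht : 0 < t)
    (x : X) : ⟪P (midpoint ℝ s t) x, x⟫ ^ 2 ≤ ⟪P s x, x⟫ * ⟪P t x, x⟫ := by
  have hmid : midpoint ℝ s t = s / 2 + t / 2 := by
    rw [midpoint_eq_smul_add, invOf_eq_inv, smul_eq_mul]; ring
  rw [hmid, hP.inner_map_add (half_pos hs) (half_pos ht), hP.inner_apply_eq_norm_sq hs,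
    hP.inner_apply_eq_norm_sq ht, ← real_inner_self_eq_norm_sq, ← real_inner_self_eq_norm_sq,
    sq]
  exact (real_inner_mul_inner_self_le _ _).trans_eq (mul_comm _ _)

theorem apply_eq_zero_of_lt (hP : IsSelfAdjointSemigroup P) (hs : 0 < s) (hst : s < t) {x : X}
    (hx : P s x = 0) : P t x = 0 := by
  rw [← sub_add_cancel t s, hP.map_add _ _ (sub_pos.2 hst) hs, ContinuousLinearMap.comp_apply,
    hx, map_zero]

theorem apply_half_eq_zero (hP : IsSelfAdjointSemigroup P) (hs : 0 < s) {x : X}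
    (hx : P s x = 0) : P (s / 2) x = 0 := by
  rw [← norm_eq_zero, ← sq_eq_zero_iff, ← hP.inner_apply_eq_norm_sq hs, hx, inner_zero_left]

theorem apply_eq_zero_of_apply_eq_zero (hP : IsSelfAdjointSemigroup P) (hs : 0 < s) (ht : 0 < t)
    {x : X} (hx : P s x = 0) : P t x = 0 := by
  have hhalves (n : ℕ) : P (s / 2 ^ n) x = 0 := by
    induction n with
    | zero => simpa using hx
    | succ n ih => simpa [pow_succ, div_div] using hP.apply_half_eq_zero (by positivity) ih
  obtain ⟨n, hn⟩ := exists_pow_lt_of_lt_one (div_pos ht hs) (by norm_num : (1 / 2 : ℝ) < 1)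
  refine hP.apply_eq_zero_of_lt (by positivity) ?_ (hhalves n)
  calc s / 2 ^ n = (1 / 2) ^ n * s := by rw [one_div_pow]; ring
    _ < t := (lt_div_iff₀ hs).1 hn

theorem inner_apply_eq_zero_of_eq_zero (hP : IsSelfAdjointSemigroup P) (hs : 0 < s) (ht : 0 < t)
    {x : X} (hx : ⟪P s x, x⟫ = 0) : ⟪P t x, x⟫ = 0 := by
  rw [hP.inner_apply_eq_norm_sq hs, sq_eq_zero_iff, norm_eq_zero] at hx
  rw [hP.inner_apply_eq_norm_sq ht,
    hP.apply_eq_zero_of_apply_eq_zero (half_pos hs) (half_pos ht) hx, norm_zero, sq, zero_mul]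

theorem inner_apply_le_rpow_mul_rpow (hP : IsSelfAdjointSemigroup P)
    (hcont : ContinuousOn P (Ioi 0)) (x : X) {a b : ℝ} (hs : 0 < s) (ht : 0 < t) (ha : 0 ≤ a)
    (hb : 0 ≤ b) (hab : a + b = 1) :
    ⟪P (a * s + b * t) x, x⟫ ≤ ⟪P s x, x⟫ ^ a * ⟪P t x, x⟫ ^ b := by
  have hst : 0 < a * s + b * t := convex_Ioi (0 : ℝ) hs ht ha hb hab
  by_cases hpos : ∀ r ∈ Ioi (0 : ℝ), 0 < ⟪P r x, x⟫
  · have hconv := convexOn_log_comp_of_sq_midpoint_le (convex_Ioi 0)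
      ((hcont.clm_apply continuousOn_const).inner continuousOn_const) hpos
      fun u hu v hv ↦ hP.inner_apply_midpoint_sq_le hu hv x
    have hlog := hconv.2 hs ht ha hb hab
    simp only [Function.comp_apply, smul_eq_mul] at hlog
    have hsa := Real.rpow_pos_of_pos (hpos s hs) a
    have htb := Real.rpow_pos_of_pos (hpos t ht) b
    rwa [← Real.log_le_log_iff (hpos _ hst) (mul_pos hsa htb), Real.log_mul hsa.ne' htb.ne',
      Real.log_rpow (hpos s hs), Real.log_rpow (hpos t ht)]
  · push Not at hpos
    obtain ⟨r, hr, hqr⟩ := hpos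
    rw [hP.inner_apply_eq_zero_of_eq_zero hr hst (le_antisymm hqr (hP.inner_apply_nonneg hr x))]
    exact mul_nonneg (Real.rpow_nonneg (hP.inner_apply_nonneg hs x) a)
      (Real.rpow_nonneg (hP.inner_apply_nonneg ht x) b)

theorem le_norm_smul_apply_add_smul_sq (hP : IsSelfAdjointSemigroup P) (hs : 0 < s) (x : X)
    {a b : ℝ} (ha : 0 ≤ a) (hb : 0 ≤ b) :
    a ^ 2 * ⟪P (2 * s) x, x⟫ + a * b * ⟪P s x, x⟫ ≤ ‖a • P s x + b • x‖ ^ 2 := by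
  have hq := hP.inner_apply_nonneg hs x
  rw [hP.inner_apply_eq_norm_sq (by positivity), mul_div_cancel_left₀ s two_ne_zero,
    norm_add_sq_real, norm_smul, norm_smul, real_inner_smul_left, real_inner_smul_right,
    Real.norm_of_nonneg ha, Real.norm_of_nonneg hb]
  nlinarith [mul_nonneg (mul_nonneg ha hb) hq, sq_nonneg (b * ‖x‖)]

theorem commute_of_inverse (hP : IsSelfAdjointSemigroup P) {r : ℝ} (hr : 0 < r) (hs : 0 < s)
    {a b : ℝ} {B : X →L[ℝ] X} (hB : B ∘L (a • P s + b • 1) = 1)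
    (hB' : (a • P s + b • 1) ∘L B = 1) : Commute (P r) B :=
  Commute.units_inv_right (u := ⟨_, B, hB', hB⟩) <|
    ((hP.commute hr hs).smul_right a).add_right ((Commute.one_right _).smul_right b)

theorem sq_mul_inner_apply_le (hP : IsSelfAdjointSemigroup P) (hcont : ContinuousOn P (Ioi 0))
    {r : ℝ} (hr : 1 ≤ r) (x : X) {a b : ℝ} (ha : 0 ≤ a) (hb : 0 < b) :
    a ^ 2 * ⟪P (2 * r - 1) x, x⟫ ≤ (a / b) ^ (1 / r) * ‖a • P r x + b • x‖ ^ 2 := by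
  have hr0 : 0 < r := by linarith
  have hinterp := hP.inner_apply_le_rpow_mul_rpow hcont x (s := 2 * r) (t := r)
    (a := (r - 1) / r) (b := 1 / r) (by positivity) hr0 (div_nonneg (by linarith) hr0.le)
    (by positivity) (by field_simp; ring)
  rw [show (r - 1) / r * (2 * r) + 1 / r * r = 2 * r - 1 by field_simp; ring] at hinterp
  have hab : a / b * (a * b) = a ^ 2 := by field_simp
  calc a ^ 2 * ⟪P (2 * r - 1) x, x⟫
      ≤ a / b * (a * b) * (⟪P (2 * r) x, x⟫ ^ ((r - 1) / r) * ⟪P r x, x⟫ ^ (1 / r)) := by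
        rw [hab]; gcongr
    _ ≤ (a / b) ^ (1 / r) * (a / b * (a * b) * ⟪P (2 * r) x, x⟫ + a * b * ⟪P r x, x⟫) :=
        mul_mul_rpow_mul_rpow_le (hP.inner_apply_nonneg hr0 x)
          (hP.inner_apply_nonneg (by positivity) x) (by positivity) (by positivity)
          (div_nonneg (by linarith) hr0.le) (by positivity) (by field_simp; ring)
    _ ≤ (a / b) ^ (1 / r) * ‖a • P r x + b • x‖ ^ 2 := by
        rw [hab]
        gcongr
        exact hP.le_norm_smul_apply_add_smul_sq hr0 x ha hb.le

variable {Y : Type*} [NormedAddCommGroup Y] [InnerProductSpace ℝ Y] [CompleteSpace Y]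

theorem smul_comp_adjoint_comp_smul (hP : IsSelfAdjointSemigroup P) {T : X →L[ℝ] Y}
    (hP1 : P 1 = ContinuousLinearMap.adjoint T ∘L T) (hs : 0 < s) (c : ℝ) :
    (c • P s) ∘L ContinuousLinearMap.adjoint T ∘L T ∘L (c • P s) = c ^ 2 • P (2 * s + 1) := by
  rw [← ContinuousLinearMap.comp_assoc _ T, ← hP1, ContinuousLinearMap.comp_smul,
    ContinuousLinearMap.smul_comp, ContinuousLinearMap.comp_smul, smul_smul, ← sq,
    ← hP.map_add 1 s one_pos hs, ← hP.map_add s _ hs (by positivity)]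
  congr 2; ring

theorem norm_apply_sq_of_eq_adjoint_comp (hP : IsSelfAdjointSemigroup P) {T : X →L[ℝ] Y}
    (hP1 : P 1 = ContinuousLinearMap.adjoint T ∘L T) (hs : 0 < s) (x : X) :
    ‖T (P s x)‖ ^ 2 = ⟪P (2 * s + 1) x, x⟫ := by
  rw [← real_inner_self_eq_norm_sq, ← ContinuousLinearMap.adjoint_inner_left,
    ← ContinuousLinearMap.comp_apply _ T, ← hP1, ← ContinuousLinearMap.comp_apply,
    ← hP.map_add 1 s one_pos hs, show 2 * s + 1 = s + (1 + s) by ring,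
    hP.inner_map_add hs (by positivity)]

end IsSelfAdjointSemigroup

theorem probe_norm_estimate_a_priori_general
    {X Y : Type*}
    [NormedAddCommGroup X] [InnerProductSpace ℝ X] [CompleteSpace X]
    [NormedAddCommGroup Y] [InnerProductSpace ℝ Y] [CompleteSpace Y]
    (T : X →L[ℝ] Y) (φ : X)
    (μ σ γ₀ γ : ℝ) (hμ : 1 ≤ μ)
    (hσ : 0 < σ) (hγ₀ : 0 < γ₀) (hγ : γ = γ₀ * σ)
    -- `pow s` is the operator power `(T*T)^s`, characterized by:
    (pow : ℝ → (X →L[ℝ] X))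
    (hpow1 : pow 1 = (ContinuousLinearMap.adjoint T) ∘L T)
    (hpowsa : ∀ s : ℝ, 0 < s → IsSelfAdjoint (pow s))
    (hpowadd : ∀ s t : ℝ, 0 < s → 0 < t → pow (s + t) = pow s ∘L pow t)
    (hpowcont : ContinuousOn pow (Set.Ioi (0 : ℝ)))
    -- `S = γ • (T*T)^{μ/2}` is the positive square root of `C₀ = γ² (T*T)^μ`
    (S : X →L[ℝ] X) (hSdef : S = γ • pow (μ / 2))
    -- `B` is the inverse of `C₀^{1/2} T* T C₀^{1/2} + σ² Id`
    (B : X →L[ℝ] X)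
    (hB : B ∘L (S ∘L (ContinuousLinearMap.adjoint T) ∘L T ∘L S + σ ^ 2 • 1) = 1)
    (hB' : (S ∘L (ContinuousLinearMap.adjoint T) ∘L T ∘L S + σ ^ 2 • 1) ∘L B = 1) :
    ‖T (S (B (S φ)))‖ ≤ γ₀ ^ (1 / (μ + 1)) * ‖φ‖ := by
  have hμ0 : 0 < μ := by linarith
  have hP : IsSelfAdjointSemigroup pow := ⟨hpowsa, hpowadd⟩
  have hM : S ∘L ContinuousLinearMap.adjoint T ∘L T ∘L S = γ ^ 2 • pow (μ + 1) := by
    rw [hSdef, hP.smul_comp_adjoint_comp_smul hpow1 (by positivity)]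
    congr 2; ring
  rw [hM] at hB hB'
  have hBcomm := hP.commute_of_inverse (r := μ / 2) (by positivity) (by positivity) hB hB'
  set ψ := B φ
  have hφ : φ = γ ^ 2 • pow (μ + 1) ψ + σ ^ 2 • ψ := by
    simpa only [ContinuousLinearMap.comp_apply, add_apply, smul_apply, one_apply_eq_self]
      using (DFunLike.congr_fun hB' φ).symm
  have hprobe : S (B (S φ)) = γ ^ 2 • pow μ ψ := by
    have hBψ : B (pow (μ / 2) φ) = pow (μ / 2) ψ := DFunLike.congr_fun hBcomm.eq.symm φ
    simp only [hSdef, smul_apply, map_smul]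
    rw [hBψ, ← ContinuousLinearMap.comp_apply, ← hpowadd _ _ (by positivity) (by positivity),
      add_halves, smul_smul, sq]
  refine (pow_le_pow_iff_left₀ (norm_nonneg _) (by positivity) two_ne_zero).1 ?_
  calc ‖T (S (B (S φ)))‖ ^ 2 = (γ ^ 2) ^ 2 * ⟪pow (2 * (μ + 1) - 1) ψ, ψ⟫ := by
        rw [hprobe, map_smul, norm_smul, mul_pow, hP.norm_apply_sq_of_eq_adjoint_comp hpow1 hμ0,
          Real.norm_of_nonneg (by positivity)]
        ring_nf
    _ ≤ (γ ^ 2 / σ ^ 2) ^ (1 / (μ + 1)) * ‖γ ^ 2 • pow (μ + 1) ψ + σ ^ 2 • ψ‖ ^ 2 :=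
        hP.sq_mul_inner_apply_le hpowcont (by linarith) ψ (by positivity) (by positivity)
    _ = (γ₀ ^ (1 / (μ + 1)) * ‖φ‖) ^ 2 := by
        rw [← hφ, hγ, mul_pow γ₀ σ, mul_div_cancel_right₀ _ (by positivity), mul_pow,
          Real.rpow_pow_comm hγ₀.le]

/-- Let `ν > 0`, `μ ≥ 1` with `μ > ν/2 − 1`, `σ > 0`, `γ₀ > 0`, `γ = γ₀σ`, and
`C₀ = γ²(T*T)^μ`.  Then `‖Φ_MAP‖ ≤ γ₀^{1/(μ+1)}‖φ‖`, where
`Φ_MAP = T C₀^{1/2}(C₀^{1/2}T*TC₀^{1/2} + σ²Id)⁻¹ C₀^{1/2}φ`.  The operator power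
`(T*T)^s` is encoded by the family `pow`, uniquely determined by the hypotheses below;
the positive square root of `C₀ = γ² (T*T)^μ` is `S := γ • (T*T)^{μ/2}`, and `B` denotes
the inverse `(C₀^{1/2}T*TC₀^{1/2} + σ²Id)⁻¹`. -/
theorem probe_norm_estimate_a_priori
    {X Y : Type*}
    [NormedAddCommGroup X] [InnerProductSpace ℝ X] [CompleteSpace X]
    [TopologicalSpace.SeparableSpace X]
    [NormedAddCommGroup Y] [InnerProductSpace ℝ Y] [CompleteSpace Y]
    [TopologicalSpace.SeparableSpace Y]
    (T : X →L[ℝ] Y) (φ : X)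
    (ν μ σ γ₀ γ : ℝ) (hν : 0 < ν) (hμ : 1 ≤ μ) (hμν : ν / 2 - 1 < μ)
    (hσ : 0 < σ) (hγ₀ : 0 < γ₀) (hγ : γ = γ₀ * σ)
    -- `pow s` is the operator power `(T*T)^s`, characterized by:
    (pow : ℝ → (X →L[ℝ] X))
    (hpow0 : pow 0 = 1)
    (hpow1 : pow 1 = (ContinuousLinearMap.adjoint T) ∘L T)
    (hpowsa : ∀ s : ℝ, 0 < s → IsSelfAdjoint (pow s))
    (hpowpos : ∀ s : ℝ, 0 < s → ∀ x : X, 0 ≤ ⟪(pow s) x, x⟫)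
    (hpowadd : ∀ s t : ℝ, 0 < s → 0 < t → pow (s + t) = pow s ∘L pow t)
    (hpowcont : ContinuousOn pow (Set.Ioi (0 : ℝ)))
    -- `S = γ • (T*T)^{μ/2}` is the positive square root of `C₀ = γ² (T*T)^μ`
    (S : X →L[ℝ] X) (hSdef : S = γ • pow (μ / 2))
    -- `B` is the inverse of `C₀^{1/2} T* T C₀^{1/2} + σ² Id`
    (B : X →L[ℝ] X)
    (hB : B ∘L (S ∘L (ContinuousLinearMap.adjoint T) ∘L T ∘L S + σ ^ 2 • 1) = 1)
    (hB' : (S ∘L (ContinuousLinearMap.adjoint T) ∘L T ∘L S + σ ^ 2 • 1) ∘L B = 1) :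
    ‖T (S (B (S φ)))‖ ≤ γ₀ ^ (1 / (μ + 1)) * ‖φ‖ :=
  probe_norm_estimate_a_priori_general T φ μ σ γ₀ γ hμ hσ hγ₀ hγ pow hpow1 hpowsa hpowadd hpowcont S
    hSdef B hB hB'
end

section
/- Let ν > 0, μ ≥ 1 with μ > ν/2 − 1, σ > 0, γ₀ > 0, ρ > 0, set γ := γ₀σ and C₀ := γ²(T*T)^μ, and assume φ ≠ 0 and Φ_MAP ≠ 0. Suppose u† = (T*T)^{ν/2}w for some w ∈ X with ‖w‖_X ≤ ρ, and suppose ⟨u†, φ⟩_X ≥ 2ργ₀^{−ν/(μ+1)}‖φ‖_X. Then (ρ‖(T*T)^{ν/2}(T*Φ_MAP − φ)‖_X − ⟨Φ_MAP, Tu†⟩_Y)/‖Φ_MAP‖_Y ≤ −(⟨u†, φ⟩_X/‖φ‖_X − 2ργ₀^{−ν/(μ+1)})/γ₀^{1/(μ+1)}. -/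
/-!
Write `A = T*T` and `y = Bφ`. Then `φ = γ²A^{μ+1}y + σ²y`, `Φ_MAP = γ²T A^μ y` and
`T*Φ_MAP = φ - σ²y`, so `‖Φ_MAP‖ = γ²‖A^{μ+1/2}y‖` and, by Cauchy–Schwarz and the source
condition, the numerator is at most `2ρσ²‖A^{ν/2}y‖ - ⟨u†, φ⟩`. The two summands of `φ` have
nonnegative inner product, so `‖γ²A^{μ+1}y‖ ≤ ‖φ‖` and `‖σ²y‖ ≤ ‖φ‖`. As
`‖A^{(s+t)/2}y‖² = ⟨A^s y, A^t y⟩`, the map `s ↦ ‖A^s y‖` is midpoint log-convex, which with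
continuity gives the moment inequality `‖A^s y‖ ≤ ‖A^p y‖^{s/p}‖y‖^{1-s/p}` for `p = μ + 1`.
At `s = ν/2` and `s = μ + 1/2` it yields `σ²‖A^{ν/2}y‖ ≤ γ₀^{-ν/(μ+1)}‖φ‖` and
`‖Φ_MAP‖ ≤ γ₀^{1/(μ+1)}‖φ‖`.
-/

open scoped RealInnerProductSpace
open Set Filter Topology

theorem exists_abs_sub_le_of_midpoint_mem {E : Set ℝ} (hE : ∀ x ∈ E, ∀ y ∈ E, (x + y) / 2 ∈ E)
    (n : ℕ) : ∀ a ∈ E, ∀ b ∈ E, ∀ x ∈ Icc a b, ∃ y ∈ E, |x - y| ≤ (b - a) / 2 ^ n := by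
  induction n with
  | zero =>
    intro a ha b _ x hx
    refine ⟨a, ha, ?_⟩
    rw [abs_of_nonneg (by linarith [hx.1])]
    simpa using hx.2
  | succ n ih =>
    intro a ha b hb x hx
    have hhalf : ((a + b) / 2 - a) / 2 ^ n = (b - a) / 2 ^ (n + 1) := by
      rw [pow_succ]; field_simp; ring
    have hhalf' : (b - (a + b) / 2) / 2 ^ n = (b - a) / 2 ^ (n + 1) := by
      rw [pow_succ]; field_simp; ring
    rcases le_total x ((a + b) / 2) with hleft | hright
    · rw [← hhalf]; exact ih a ha _ (hE a ha b hb) x ⟨hx.1, hleft⟩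
    · rw [← hhalf']; exact ih _ (hE a ha b hb) b hb x ⟨hright, hx.2⟩

theorem Icc_subset_closure_of_midpoint_mem {E : Set ℝ} (hE : ∀ x ∈ E, ∀ y ∈ E, (x + y) / 2 ∈ E)
    {a b : ℝ} (ha : a ∈ E) (hb : b ∈ E) : Icc a b ⊆ closure E := by
  intro x hx
  rw [Metric.mem_closure_iff]
  intro ε hε
  have hlim : Tendsto (fun n : ℕ => (b - a) / 2 ^ n) atTop (𝓝 0) :=
    tendsto_const_nhds.div_atTop (tendsto_pow_atTop_atTop_of_one_lt one_lt_two)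
  obtain ⟨n, hn⟩ := (hlim.eventually (gt_mem_nhds hε)).exists
  obtain ⟨y, hy, hxy⟩ := exists_abs_sub_le_of_midpoint_mem hE n a ha b hb x hx
  exact ⟨y, hy, by rw [Real.dist_eq]; linarith⟩

theorem le_rpow_mul_rpow_of_sq_midpoint_le_s16 {f : ℝ → ℝ} (hf : ∀ t, 0 ≤ f t)
    (hmid : ∀ s t, 0 ≤ s → 0 ≤ t → f ((s + t) / 2) ^ 2 ≤ f s * f t)
    {a b p s : ℝ} (ha : 0 < a) (hb : 0 < b) (hfp : f p ≤ a) (hf0 : f 0 ≤ b)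
    (hs : s ∈ Icc 0 p) (hcont : ContinuousAt f s) :
    f s ≤ a ^ (s / p) * b ^ (1 - s / p) := by
  set w : ℝ → ℝ := fun t => a ^ (t / p) * b ^ (1 - t / p) with hw
  have hw_pos : ∀ t, 0 < w t := fun t => by positivity
  have hw_mid : ∀ t u, w ((t + u) / 2) ^ 2 = w t * w u := fun t u => by
    simp only [hw, mul_pow, ← Real.rpow_mul_natCast ha.le, ← Real.rpow_mul_natCast hb.le]
    rw [mul_mul_mul_comm, ← Real.rpow_add ha, ← Real.rpow_add hb]
    congr 2 <;> push_cast <;> ring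
  -- `w` is log-affine, so the midpoint inequality for `f` makes `{f ≤ w}` midpoint-closed.
  set E := {t | 0 ≤ t ∧ f t ≤ w t}
  have hE : ∀ t ∈ E, ∀ u ∈ E, (t + u) / 2 ∈ E := by
    rintro t ⟨ht, hft⟩ u ⟨hu, hfu⟩
    refine ⟨by positivity, (pow_le_pow_iff_left₀ (hf _) (hw_pos _).le two_ne_zero).mp ?_⟩
    calc f ((t + u) / 2) ^ 2 ≤ f t * f u := hmid t u ht hu
      _ ≤ w t * w u := mul_le_mul hft hfu (hf u) (hw_pos t).le
      _ = w ((t + u) / 2) ^ 2 := (hw_mid t u).symm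
  have h0 : (0 : ℝ) ∈ E := ⟨le_rfl, by simpa [hw] using hf0⟩
  have hp : p ∈ E := by
    refine ⟨hs.1.trans hs.2, ?_⟩
    rcases eq_or_ne p 0 with rfl | hp0
    · simpa [hw] using hf0
    · simpa [hw, div_self hp0] using hfp
  have hw_cont : Continuous w := by
    simp only [hw]
    fun_prop (disch := positivity)
  exact ContinuousWithinAt.closure_le (Icc_subset_closure_of_midpoint_mem hE h0 hp hs)
    hcont.continuousWithinAt hw_cont.continuousWithinAt fun t ht => ht.2

theorem rpow_sq_mul_rpow_sq_one_sub {γ₀ σ : ℝ} (hγ₀ : 0 < γ₀) (hσ : 0 < σ) (θ : ℝ) :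
    ((γ₀ * σ) ^ 2) ^ θ * (σ ^ 2) ^ (1 - θ) = γ₀ ^ (2 * θ) * σ ^ 2 := by
  rw [mul_pow, Real.mul_rpow (by positivity) (by positivity), mul_assoc,
    ← Real.rpow_add (by positivity), add_sub_cancel, Real.rpow_one,
    ← Real.rpow_natCast_mul hγ₀.le]
  norm_num

structure IsSymmetricSemigroup {X : Type*} [NormedAddCommGroup X] [InnerProductSpace ℝ X]
    (P : ℝ → X →L[ℝ] X) : Prop where
  zero : P 0 = 1
  isSymmetric : ∀ s, 0 < s → (P s : X →ₗ[ℝ] X).IsSymmetric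
  add : ∀ s t, 0 < s → 0 < t → P (s + t) = P s ∘L P t

namespace IsSymmetricSemigroup

variable {X : Type*} [NormedAddCommGroup X] [InnerProductSpace ℝ X] {P : ℝ → X →L[ℝ] X}

theorem apply_apply (hP : IsSymmetricSemigroup P) {s t : ℝ} (hs : 0 < s) (ht : 0 < t) (x : X) :
    P s (P t x) = P (s + t) x := by
  rw [hP.add s t hs ht, ContinuousLinearMap.comp_apply]

theorem inner_apply_apply (hP : IsSymmetricSemigroup P) {s t : ℝ} (hs : 0 ≤ s) (ht : 0 ≤ t)
    (x y : X) : ⟪P s x, P t y⟫ = ⟪P (s + t) x, y⟫ := by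
  rcases ht.eq_or_lt with rfl | ht
  · rw [add_zero, hP.zero, one_apply_eq_self]
  have hsymm : ⟪P t (P s x), y⟫ = ⟪P s x, P t y⟫ := hP.isSymmetric t ht (P s x) y
  rw [← hsymm]
  rcases hs.eq_or_lt with rfl | hs
  · rw [zero_add, hP.zero, one_apply_eq_self]
  rw [hP.apply_apply ht hs, add_comm]

theorem sq_norm_apply (hP : IsSymmetricSemigroup P) {s : ℝ} (hs : 0 ≤ s) (x : X) :
    ‖P s x‖ ^ 2 = ⟪P (s + s) x, x⟫ := by
  rw [← real_inner_self_eq_norm_sq, hP.inner_apply_apply hs hs]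

theorem sq_norm_apply_midpoint_le (hP : IsSymmetricSemigroup P) {s t : ℝ} (hs : 0 ≤ s)
    (ht : 0 ≤ t) (x : X) : ‖P ((s + t) / 2) x‖ ^ 2 ≤ ‖P s x‖ * ‖P t x‖ := by
  rw [hP.sq_norm_apply (by positivity), add_halves, ← hP.inner_apply_apply hs ht]
  exact real_inner_le_norm _ _

theorem norm_apply_le_rpow_mul_rpow (hP : IsSymmetricSemigroup P)
    (hcont : ContinuousOn P (Ioi 0)) {a b p s : ℝ} {x : X} (ha : 0 < a) (hb : 0 < b)
    (hpx : ‖P p x‖ ≤ a) (hx : ‖x‖ ≤ b) (hs : 0 < s) (hsp : s ≤ p) :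
    ‖P s x‖ ≤ a ^ (s / p) * b ^ (1 - s / p) := by
  have hcont_s : ContinuousAt (fun t => ‖P t x‖) s :=
    ((ContinuousLinearMap.apply ℝ X x).continuous.continuousAt.comp
      (hcont.continuousAt (Ioi_mem_nhds hs))).norm
  refine le_rpow_mul_rpow_of_sq_midpoint_le_s16 (f := fun t => ‖P t x‖) (fun _ => norm_nonneg _)
    (fun s t hs ht => hP.sq_norm_apply_midpoint_le hs ht x) ha hb hpx ?_ ⟨hs.le, hsp⟩ hcont_s
  rwa [hP.zero, one_apply_eq_self]

theorem norm_apply_le_of_eq_smul_add_smul (hP : IsSymmetricSemigroup P)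
    (hcont : ContinuousOn P (Ioi 0)) {c d p s : ℝ} {x φ : X} (hc : 0 < c) (hd : 0 < d)
    (hp : 0 < p) (hφ : φ ≠ 0) (hφx : φ = c • P p x + d • x) (hs : 0 < s) (hsp : s ≤ p) :
    ‖P s x‖ ≤ ‖φ‖ / (c ^ (s / p) * d ^ (1 - s / p)) := by
  have hφpos : 0 < ‖φ‖ := norm_pos_iff.mpr hφ
  have hcross : 0 ≤ ⟪c • P p x, d • x⟫ := by
    rw [real_inner_smul_left, real_inner_smul_right, ← add_halves p,
      ← hP.inner_apply_apply (by positivity) (by positivity)]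
    exact mul_nonneg hc.le (mul_nonneg hd.le real_inner_self_nonneg)
  have hPx : c * ‖P p x‖ ≤ ‖φ‖ := by
    simpa [hφx, norm_smul, abs_of_pos hc] using norm_le_norm_add_of_inner_nonneg hcross
  have hx : d * ‖x‖ ≤ ‖φ‖ := by
    rw [real_inner_comm] at hcross
    simpa [hφx, add_comm, norm_smul, abs_of_pos hd] using norm_le_norm_add_of_inner_nonneg hcross
  calc ‖P s x‖ ≤ (‖φ‖ / c) ^ (s / p) * (‖φ‖ / d) ^ (1 - s / p) :=
        hP.norm_apply_le_rpow_mul_rpow hcont (by positivity) (by positivity)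
          ((le_div_iff₀' hc).mpr hPx) ((le_div_iff₀' hd).mpr hx) hs hsp
    _ = ‖φ‖ / (c ^ (s / p) * d ^ (1 - s / p)) := by
        rw [Real.div_rpow hφpos.le hc.le, Real.div_rpow hφpos.le hd.le, div_mul_div_comm,
          ← Real.rpow_add hφpos, add_sub_cancel, Real.rpow_one]

theorem sq_mul_norm_apply_le (hP : IsSymmetricSemigroup P) (hcont : ContinuousOn P (Ioi 0))
    {γ₀ σ p s : ℝ} {x φ : X} (hγ₀ : 0 < γ₀) (hσ : 0 < σ) (hp : 0 < p) (hφ : φ ≠ 0)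
    (hφx : φ = (γ₀ * σ) ^ 2 • P p x + σ ^ 2 • x) (hs : 0 < s) (hsp : s ≤ p) :
    σ ^ 2 * ‖P s x‖ ≤ γ₀ ^ (-(2 * s / p)) * ‖φ‖ := by
  have h := hP.norm_apply_le_of_eq_smul_add_smul hcont (by positivity) (by positivity) hp hφ hφx
    hs hsp
  rw [rpow_sq_mul_rpow_sq_one_sub hγ₀ hσ, le_div_iff₀ (by positivity)] at h
  rw [Real.rpow_neg hγ₀.le, ← div_eq_inv_mul, le_div_iff₀ (by positivity)]
  convert h using 1
  ring_nf

theorem commute_smul_add_smul_one (hP : IsSymmetricSemigroup P) {s p : ℝ} (hs : 0 < s)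
    (hp : 0 < p) (c d : ℝ) : Commute (P s) (c • P p + d • 1) := by
  have hsp : Commute (P s) (P p) := by
    change P s ∘L P p = P p ∘L P s
    rw [← hP.add s p hs hp, ← hP.add p s hp hs, add_comm]
  exact (hsp.smul_right c).add_right ((Commute.one_right _).smul_right d)

variable {Y : Type*} [NormedAddCommGroup Y] [InnerProductSpace ℝ Y] [CompleteSpace X]
  [CompleteSpace Y] {T : X →L[ℝ] Y}

theorem adjoint_apply_apply (hP : IsSymmetricSemigroup P)
    (hP1 : P 1 = ContinuousLinearMap.adjoint T ∘L T) {s : ℝ} (hs : 0 < s) (x : X) :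
    ContinuousLinearMap.adjoint T (T (P s x)) = P (s + 1) x := by
  rw [← ContinuousLinearMap.comp_apply, ← hP1, hP.apply_apply one_pos hs, add_comm]

theorem norm_map_apply (hP : IsSymmetricSemigroup P)
    (hP1 : P 1 = ContinuousLinearMap.adjoint T ∘L T) {s : ℝ} (hs : 0 < s) (x : X) :
    ‖T (P s x)‖ = ‖P (s + 1 / 2) x‖ := by
  have hs' : 0 ≤ s + 1 / 2 := by positivity
  rw [← sq_eq_sq₀ (norm_nonneg _) (norm_nonneg _), ← real_inner_self_eq_norm_sq,
    ← real_inner_self_eq_norm_sq, ← ContinuousLinearMap.adjoint_inner_left,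
    hP.adjoint_apply_apply hP1 hs, hP.inner_apply_apply (by positivity) hs.le,
    hP.inner_apply_apply hs' hs']
  ring_nf

theorem map_decomposition (hP : IsSymmetricSemigroup P)
    (hP1 : P 1 = ContinuousLinearMap.adjoint T ∘L T) {μ γ σ : ℝ} (hμ : 0 < μ) {S B : X →L[ℝ] X}
    (hS : S = γ • P (μ / 2))
    (hB : B ∘L (S ∘L (ContinuousLinearMap.adjoint T) ∘L T ∘L S + σ ^ 2 • 1) = 1)
    (hB' : (S ∘L (ContinuousLinearMap.adjoint T) ∘L T ∘L S + σ ^ 2 • 1) ∘L B = 1) (φ : X) :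
    S (B (S φ)) = γ ^ 2 • P μ (B φ) ∧ φ = γ ^ 2 • P (μ + 1) (B φ) + σ ^ 2 • B φ := by
  have hμ2 : 0 < μ / 2 := by positivity
  have hSTTS : S ∘L (ContinuousLinearMap.adjoint T) ∘L T ∘L S = γ ^ 2 • P (μ + 1) := by
    ext x
    simp only [hS, ContinuousLinearMap.comp_apply, smul_apply, map_smul]
    rw [← ContinuousLinearMap.comp_apply _ T, ← hP1, hP.apply_apply one_pos hμ2,
      hP.apply_apply hμ2 (by positivity), smul_smul, sq]
    ring_nf
  rw [hSTTS] at hB hB'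
  let M : (X →L[ℝ] X)ˣ := ⟨γ ^ 2 • P (μ + 1) + σ ^ 2 • 1, B, hB', hB⟩
  have hcomm : Commute (P (μ / 2)) B :=
    (hP.commute_smul_add_smul_one hμ2 (by positivity) _ _).units_inv_right (u := M)
  have hSBS : P (μ / 2) (B (P (μ / 2) φ)) = P μ (B φ) := by
    rw [← mul_apply_eq_comp B, ← hcomm.eq, mul_apply_eq_comp,
      hP.apply_apply hμ2 hμ2, add_halves]
  constructor
  · simp only [hS, smul_apply, map_smul, hSBS, smul_smul, sq]
  · simpa using (ContinuousLinearMap.ext_iff.mp hB' φ).symm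

end IsSymmetricSemigroup

theorem objective_numerator_le {X Y : Type*} [NormedAddCommGroup X] [InnerProductSpace ℝ X]
    [CompleteSpace X] [NormedAddCommGroup Y] [InnerProductSpace ℝ Y] [CompleteSpace Y]
    {P : ℝ → X →L[ℝ] X} (hP : IsSymmetricSemigroup P) {T : X →L[ℝ] Y} {s c ρ : ℝ}
    (hs : 0 < s) (hc : 0 ≤ c) {φ y w : X} (hw : ‖w‖ ≤ ρ) {z : Y}
    (hz : ContinuousLinearMap.adjoint T z = φ - c • y) :
    ρ * ‖P s (ContinuousLinearMap.adjoint T z - φ)‖ - ⟪z, T (P s w)⟫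
      ≤ 2 * ρ * (c * ‖P s y‖) - ⟪P s w, φ⟫ := by
  have hρ : 0 ≤ ρ := (norm_nonneg w).trans hw
  have hnorm : ‖P s (ContinuousLinearMap.adjoint T z - φ)‖ = c * ‖P s y‖ := by
    rw [hz, sub_sub_cancel_left, map_neg, norm_neg, map_smul, norm_smul, Real.norm_of_nonneg hc]
  have hinner : ⟪z, T (P s w)⟫ = ⟪P s w, φ⟫ - c * ⟪P s y, w⟫ := by
    have hsymm : ⟪P s y, w⟫ = ⟪y, P s w⟫ := hP.isSymmetric s hs y w
    rw [← ContinuousLinearMap.adjoint_inner_left, hz, inner_sub_left, real_inner_smul_left,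
      real_inner_comm, hsymm]
  have hcs : ⟪P s y, w⟫ ≤ ‖P s y‖ * ρ :=
    (real_inner_le_norm _ _).trans (mul_le_mul_of_nonneg_left hw (norm_nonneg _))
  rw [hnorm, hinner]
  nlinarith [mul_le_mul_of_nonneg_left hcs hc]

theorem div_le_neg_div_of_le {N D F G k v : ℝ} (hN : N ≤ k * F - v) (hkv : k * F ≤ v)
    (hD : 0 < D) (hF : 0 < F) (hDF : D ≤ G * F) : N / D ≤ -((v / F - k) / G) := by
  have hG : 0 < G := pos_of_mul_pos_left (hD.trans_le hDF) hF.le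
  calc N / D ≤ (k * F - v) / D := div_le_div_of_nonneg_right hN hD.le
    _ ≤ (k * F - v) / (G * F) := by
        rw [div_le_div_iff₀ hD (by positivity)]
        exact mul_le_mul_of_nonpos_left hDF (by linarith)
    _ = -((v / F - k) / G) := by field_simp; ring

theorem objective_bound_a_priori_under_source_condition_general
    {X Y : Type*}
    [NormedAddCommGroup X] [InnerProductSpace ℝ X] [CompleteSpace X]
    [NormedAddCommGroup Y] [InnerProductSpace ℝ Y] [CompleteSpace Y]
    (T : X →L[ℝ] Y) (φ udag : X)
    (ν μ σ γ₀ γ ρ : ℝ) (hν : 0 < ν) (hμ : 1 ≤ μ) (hμν : ν / 2 - 1 < μ)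
    (hσ : 0 < σ) (hγ₀ : 0 < γ₀) (hρ : 0 < ρ) (hγ : γ = γ₀ * σ)
    -- `pow s` is the operator power `(T*T)^s`, characterized by:
    (pow : ℝ → (X →L[ℝ] X))
    (hpow0 : pow 0 = 1)
    (hpow1 : pow 1 = (ContinuousLinearMap.adjoint T) ∘L T)
    (hpowsa : ∀ s : ℝ, 0 < s → IsSelfAdjoint (pow s))
    (hpowadd : ∀ s t : ℝ, 0 < s → 0 < t → pow (s + t) = pow s ∘L pow t)
    (hpowcont : ContinuousOn pow (Set.Ioi (0 : ℝ)))
    -- `S = γ • (T*T)^{μ/2}` is the positive square root of `C₀ = γ² (T*T)^μ`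
    (S : X →L[ℝ] X) (hSdef : S = γ • pow (μ / 2))
    -- `B` is the inverse of `C₀^{1/2} T* T C₀^{1/2} + σ² Id`
    (B : X →L[ℝ] X)
    (hB : B ∘L (S ∘L (ContinuousLinearMap.adjoint T) ∘L T ∘L S + σ ^ 2 • 1) = 1)
    (hB' : (S ∘L (ContinuousLinearMap.adjoint T) ∘L T ∘L S + σ ^ 2 • 1) ∘L B = 1)
    (hφ : φ ≠ 0) (hΦmap : T (S (B (S φ))) ≠ 0)
    -- the source condition `u† = (T*T)^{ν/2} w`, `‖w‖ ≤ ρ`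
    (w : X) (hw : ‖w‖ ≤ ρ) (hudag : udag = (pow (ν / 2)) w)
    -- the feature is large enough
    (hfeat : 2 * ρ * γ₀ ^ (-ν / (μ + 1)) * ‖φ‖ ≤ ⟪udag, φ⟫) :
    (ρ * ‖(pow (ν / 2)) ((ContinuousLinearMap.adjoint T) (T (S (B (S φ)))) - φ)‖
        - ⟪T (S (B (S φ))), T udag⟫) / ‖T (S (B (S φ)))‖
      ≤ -((⟪udag, φ⟫ / ‖φ‖ - 2 * ρ * γ₀ ^ (-ν / (μ + 1))) / γ₀ ^ (1 / (μ + 1))) := by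
  subst hγ
  have hP : IsSymmetricSemigroup pow := ⟨hpow0, fun s hs => (hpowsa s hs).isSymmetric, hpowadd⟩
  have hμ0 : 0 < μ := by linarith
  have hμ1 : 0 < μ + 1 := by linarith
  obtain ⟨hSBS, hφy⟩ := hP.map_decomposition hpow1 hμ0 hSdef hB hB' φ
  have hadj : ContinuousLinearMap.adjoint T (T (S (B (S φ)))) = φ - σ ^ 2 • B φ := by
    rw [hSBS, map_smul, map_smul, hP.adjoint_apply_apply hpow1 hμ0, eq_sub_iff_add_eq, ← hφy]
  have hnum : σ ^ 2 * ‖pow (ν / 2) (B φ)‖ ≤ γ₀ ^ (-ν / (μ + 1)) * ‖φ‖ := by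
    convert hP.sq_mul_norm_apply_le hpowcont hγ₀ hσ hμ1 hφ hφy (half_pos hν) (by linarith)
      using 3
    ring
  have hden : ‖T (S (B (S φ)))‖ ≤ γ₀ ^ (1 / (μ + 1)) * ‖φ‖ := by
    calc ‖T (S (B (S φ)))‖ = γ₀ ^ 2 * (σ ^ 2 * ‖pow (μ + 1 / 2) (B φ)‖) := by
          rw [hSBS, map_smul, norm_smul, Real.norm_of_nonneg (sq_nonneg _),
            hP.norm_map_apply hpow1 hμ0]
          ring
      _ ≤ γ₀ ^ 2 * (γ₀ ^ (-(2 * (μ + 1 / 2) / (μ + 1))) * ‖φ‖) := by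
          refine mul_le_mul_of_nonneg_left ?_ (by positivity)
          exact hP.sq_mul_norm_apply_le hpowcont hγ₀ hσ hμ1 hφ hφy (by positivity) (by linarith)
      _ = γ₀ ^ (1 / (μ + 1)) * ‖φ‖ := by
          rw [← mul_assoc, ← Real.rpow_natCast, ← Real.rpow_add hγ₀]
          congr 2
          field_simp
          ring
  refine div_le_neg_div_of_le ?_ hfeat (norm_pos_iff.mpr hΦmap) (norm_pos_iff.mpr hφ) hden
  rw [hudag] at hfeat ⊢
  calc _ ≤ 2 * ρ * (σ ^ 2 * ‖pow (ν / 2) (B φ)‖) - ⟪pow (ν / 2) w, φ⟫ :=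
        objective_numerator_le hP (half_pos hν) (sq_nonneg σ) hw hadj
    _ ≤ 2 * ρ * γ₀ ^ (-ν / (μ + 1)) * ‖φ‖ - ⟪pow (ν / 2) w, φ⟫ := by
        rw [mul_assoc _ _ ‖φ‖]
        gcongr

/-- Let `ν > 0`, `μ ≥ 1` with `μ > ν/2 − 1`, `σ > 0`, `γ₀ > 0`, `ρ > 0`, `γ = γ₀σ`, and
`C₀ = γ²(T*T)^μ`, and assume `φ ≠ 0` and `Φ_MAP ≠ 0`.  If `u† = (T*T)^{ν/2}w` with
`‖w‖ ≤ ρ` and `⟨u†, φ⟩ ≥ 2ργ₀^{−ν/(μ+1)}‖φ‖`, then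
`(ρ‖(T*T)^{ν/2}(T*Φ_MAP − φ)‖ − ⟨Φ_MAP, Tu†⟩)/‖Φ_MAP‖
   ≤ −(⟨u†, φ⟩/‖φ‖ − 2ργ₀^{−ν/(μ+1)})/γ₀^{1/(μ+1)}`,
where `Φ_MAP = T C₀^{1/2}(C₀^{1/2}T*TC₀^{1/2} + σ²Id)⁻¹ C₀^{1/2}φ`.  The operator power
`(T*T)^s` is encoded by the family `pow`, uniquely determined by the hypotheses below;
the positive square root of `C₀ = γ² (T*T)^μ` is `S := γ • (T*T)^{μ/2}`, and `B` denotes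
the inverse `(C₀^{1/2}T*TC₀^{1/2} + σ²Id)⁻¹`. -/
theorem objective_bound_a_priori_under_source_condition
    {X Y : Type*}
    [NormedAddCommGroup X] [InnerProductSpace ℝ X] [CompleteSpace X]
    [TopologicalSpace.SeparableSpace X]
    [NormedAddCommGroup Y] [InnerProductSpace ℝ Y] [CompleteSpace Y]
    [TopologicalSpace.SeparableSpace Y]
    (T : X →L[ℝ] Y) (φ udag : X)
    (ν μ σ γ₀ γ ρ : ℝ) (hν : 0 < ν) (hμ : 1 ≤ μ) (hμν : ν / 2 - 1 < μ)
    (hσ : 0 < σ) (hγ₀ : 0 < γ₀) (hρ : 0 < ρ) (hγ : γ = γ₀ * σ)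
    -- `pow s` is the operator power `(T*T)^s`, characterized by:
    (pow : ℝ → (X →L[ℝ] X))
    (hpow0 : pow 0 = 1)
    (hpow1 : pow 1 = (ContinuousLinearMap.adjoint T) ∘L T)
    (hpowsa : ∀ s : ℝ, 0 < s → IsSelfAdjoint (pow s))
    (hpowpos : ∀ s : ℝ, 0 < s → ∀ x : X, 0 ≤ ⟪(pow s) x, x⟫)
    (hpowadd : ∀ s t : ℝ, 0 < s → 0 < t → pow (s + t) = pow s ∘L pow t)
    (hpowcont : ContinuousOn pow (Set.Ioi (0 : ℝ)))
    -- `S = γ • (T*T)^{μ/2}` is the positive square root of `C₀ = γ² (T*T)^μ`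
    (S : X →L[ℝ] X) (hSdef : S = γ • pow (μ / 2))
    -- `B` is the inverse of `C₀^{1/2} T* T C₀^{1/2} + σ² Id`
    (B : X →L[ℝ] X)
    (hB : B ∘L (S ∘L (ContinuousLinearMap.adjoint T) ∘L T ∘L S + σ ^ 2 • 1) = 1)
    (hB' : (S ∘L (ContinuousLinearMap.adjoint T) ∘L T ∘L S + σ ^ 2 • 1) ∘L B = 1)
    (hφ : φ ≠ 0) (hΦmap : T (S (B (S φ))) ≠ 0)
    -- the source condition `u† = (T*T)^{ν/2} w`, `‖w‖ ≤ ρ`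
    (w : X) (hw : ‖w‖ ≤ ρ) (hudag : udag = (pow (ν / 2)) w)
    -- the feature is large enough
    (hfeat : 2 * ρ * γ₀ ^ (-ν / (μ + 1)) * ‖φ‖ ≤ ⟪udag, φ⟫) :
    (ρ * ‖(pow (ν / 2)) ((ContinuousLinearMap.adjoint T) (T (S (B (S φ)))) - φ)‖
        - ⟪T (S (B (S φ))), T udag⟫) / ‖T (S (B (S φ)))‖
      ≤ -((⟪udag, φ⟫ / ‖φ‖ - 2 * ρ * γ₀ ^ (-ν / (μ + 1))) / γ₀ ^ (1 / (μ + 1))) :=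
  objective_bound_a_priori_under_source_condition_general T φ udag ν μ σ γ₀ γ ρ hν hμ hμν hσ hγ₀ hρ
    hγ pow hpow0 hpow1 hpowsa hpowadd hpowcont S hSdef B hB hB' hφ hΦmap w hw hudag hfeat
end

section
/- Let ξ > 0, ρ > 0, ν > 0, and μ > −1, and define f : (0,∞) → ℝ by f(γ₀) := (ξ − 2ργ₀^{−ν/(μ+1)})·γ₀^{−1/(μ+1)}, and set γ̄₀ := (ξ/(2ρ(ν+1)))^{−(μ+1)/ν}. Then for every γ₀ > 0, f(γ₀) ≤ f(γ̄₀) = (νξ/(ν+1))·(ξ/(2ρ(ν+1)))^{1/ν}. -/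
/-! Substituting `t = γ₀ ^ (-1 / (μ + 1))` turns `f` into `g t = (ξ - 2ρ t ^ ν) t` on `(0, ∞)`.
Since `t ↦ t ^ (ν + 1)` lies above its tangent lines (Bernoulli's inequality), `g` lies below its
tangent line at the critical point `T`, where `ξ = 2ρ(ν + 1) T ^ ν`; that tangent is horizontal.
The point `T = (ξ / (2ρ(ν + 1))) ^ (1 / ν)` corresponds to `γ₀ = γ̄₀`. -/

open Real

theorem rpow_add_one_tangent_le {ν t T : ℝ} (hν : 0 ≤ ν) (ht : 0 < t) (hT : 0 < T) :
    T ^ ν * T + (ν + 1) * T ^ ν * (t - T) ≤ t ^ ν * t := by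
  have hbernoulli : 1 + (ν + 1) * (t / T - 1) ≤ (t / T) ^ (ν + 1) := by
    simpa using one_add_mul_self_le_rpow_one_add (s := t / T - 1)
      (by linarith [div_pos ht hT]) (p := ν + 1) (by linarith)
  calc T ^ ν * T + (ν + 1) * T ^ ν * (t - T) = (1 + (ν + 1) * (t / T - 1)) * (T ^ ν * T) := by
        field_simp
    _ ≤ (t / T) ^ (ν + 1) * (T ^ ν * T) := by gcongr
    _ = t ^ ν * t := by
        rw [div_rpow ht.le hT.le, rpow_add_one ht.ne', rpow_add_one hT.ne']
        field_simp

theorem sub_mul_rpow_mul_le_of_eq {ξ k ν t T : ℝ} (hk : 0 ≤ k) (hν : 0 ≤ ν) (ht : 0 < t)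
    (hT : 0 < T) (hξ : ξ = k * (ν + 1) * T ^ ν) :
    (ξ - k * t ^ ν) * t ≤ (ξ - k * T ^ ν) * T := by
  have htangent := mul_le_mul_of_nonneg_left (rpow_add_one_tangent_le hν ht hT) hk
  subst hξ
  nlinarith

/-- Let `ξ, ρ, ν > 0` and `μ > −1`.  The function
`f(γ₀) = (ξ − 2ργ₀^{−ν/(μ+1)})·γ₀^{−1/(μ+1)}` on `(0,∞)` attains its maximum at
`γ̄₀ = (ξ/(2ρ(ν+1)))^{−(μ+1)/ν}`, with maximal value `(νξ/(ν+1))·(ξ/(2ρ(ν+1)))^{1/ν}`. -/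
theorem a_priori_gamma_maximizer (ξ ρ ν μ : ℝ) (hξ : 0 < ξ) (hρ : 0 < ρ) (hν : 0 < ν)
    (hμ : -1 < μ)
    (f : ℝ → ℝ)
    (hf : ∀ γ₀ : ℝ, 0 < γ₀ →
      f γ₀ = (ξ - 2 * ρ * γ₀ ^ (-ν / (μ + 1))) * γ₀ ^ (-1 / (μ + 1)))
    (γbar : ℝ) (hγbar : γbar = (ξ / (2 * ρ * (ν + 1))) ^ (-(μ + 1) / ν)) :
    (∀ γ₀ : ℝ, 0 < γ₀ → f γ₀ ≤ f γbar)
    ∧ f γbar = (ν * ξ / (ν + 1)) * (ξ / (2 * ρ * (ν + 1))) ^ (1 / ν) := by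
  have hμ1 : μ + 1 ≠ 0 := by linarith
  set c := ξ / (2 * ρ * (ν + 1)) with hc_def
  have hc : 0 < c := by positivity
  have hcν : (c ^ (1 / ν)) ^ ν = c := by
    rw [← rpow_mul hc.le, one_div_mul_cancel hν.ne', rpow_one]
  have hfbar : f γbar = (ξ - 2 * ρ * c) * c ^ (1 / ν) := by
    rw [hf γbar (by rw [hγbar]; positivity), hγbar, ← rpow_mul hc.le, ← rpow_mul hc.le,
      show -(μ + 1) / ν * (-ν / (μ + 1)) = 1 by field_simp, rpow_one]
    congr 2
    field_simp
  refine ⟨fun γ₀ hγ₀ => ?_, ?_⟩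
  · have hpow : γ₀ ^ (-ν / (μ + 1)) = (γ₀ ^ (-1 / (μ + 1))) ^ ν := by
      rw [← rpow_mul hγ₀.le]
      ring_nf
    have hmax := sub_mul_rpow_mul_le_of_eq (ξ := ξ) (k := 2 * ρ) (by positivity) hν.le
      (rpow_pos_of_pos hγ₀ (-1 / (μ + 1))) (rpow_pos_of_pos hc (1 / ν))
      (by rw [hcν, hc_def]; field_simp)
    rw [hcν] at hmax
    rwa [hf γ₀ hγ₀, hfbar, hpow]
  · rw [hfbar, hc_def]
    congr 1
    field_simp
    ring
end
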